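/- arXiv:2204.05069 — 9 statements merged into one kernel-verified Lean document; each statement's English description precedes it below -/
import Mathlib

section
/- Let K be a field of characteristic zero, a1(x) ∈ K[x] with deg a1(x) ≥ 1, and a0 ∈ K* a nonzero constant. For the K-derivation D = y∂x + (a1(x)y + a0)∂y of K[x,y] (so D(x) = y, D(y) = a1(x)y + a0), the polynomial x does not belong to the image D(K[x,y]); that is, there is no G ∈ K[x,y] with y·G_x + (a1(x)y + a0)·G_y = x. -/
/-!
Write `G = ∑ gₖ(x) yᵏ`. Comparing coefficients of `yᵏ` in `y G_x + (a₁ y + a₀) G_y = x` gives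
`a₀ g₁ = x` and `gₖ' + (k+1) a₁ gₖ₊₁ + (k+2) a₀ gₖ₊₂ = 0`. Descending from the top coefficient,
which is constant, the term `a₁ gₖ₊₁` always dominates, so `deg gₖ = (n - k)(deg a₁ + 1)`.
Hence `deg a₁ + 1 ≥ 2` divides `deg g₁ = 1`, which is absurd.
-/

open Polynomial

namespace MvPolynomial

variable {R σ : Type*} [CommRing R] [Fintype σ]

theorem derivation_eq_sum_smul_pderiv (D : Derivation R (MvPolynomial σ R) (MvPolynomial σ R)) :
    D = ∑ i, D (X i) • pderiv i := by
  classical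
  refine derivation_ext fun i => ?_
  rw [← Derivation.coeFnAddMonoidHom_apply (∑ j, _), map_sum, Finset.sum_apply]
  simp [Derivation.coeFnAddMonoidHom_apply, pderiv_X, Pi.single_apply]

end MvPolynomial

section PolyPoly

variable {K : Type*} [Field K]

/-- `K[x, y] → K[x][y]`: `x` becomes the coefficient variable, so `coeff k` picks out the
coefficient of `yᵏ`. -/
noncomputable def toPolyPoly : MvPolynomial (Fin 2) K →ₐ[K] K[X][X] :=
  MvPolynomial.aeval ![C X, X]

@[simp] lemma toPolyPoly_X_zero :
    toPolyPoly (MvPolynomial.X 0 : MvPolynomial (Fin 2) K) = C X := by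
  simp [toPolyPoly]

@[simp] lemma toPolyPoly_X_one : toPolyPoly (MvPolynomial.X 1 : MvPolynomial (Fin 2) K) = X := by
  simp [toPolyPoly]

@[simp] lemma toPolyPoly_C (a : K) : toPolyPoly (MvPolynomial.C a) = C (C a) := by
  simp [toPolyPoly]

@[simp] lemma toPolyPoly_aeval_X_zero (p : K[X]) :
    toPolyPoly (aeval (MvPolynomial.X 0 : MvPolynomial (Fin 2) K) p) = C p := by
  rw [← aeval_algHom_apply, toPolyPoly_X_zero, ← algebraMap_eq, aeval_algebraMap_apply,
    aeval_X_left_apply]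

lemma toPolyPoly_pderiv_one (p : MvPolynomial (Fin 2) K) :
    toPolyPoly (MvPolynomial.pderiv 1 p) = derivative (toPolyPoly p) := by
  induction p using MvPolynomial.induction_on with
  | C a => simp
  | add p q hp hq => simp [hp, hq]
  | mul_X p i hp =>
    fin_cases i
    · simp [hp, MvPolynomial.pderiv_X_of_ne (by decide : (0 : Fin 2) ≠ 1)]; ring
    · simp [hp]; ring

lemma coeff_toPolyPoly_pderiv_zero (p : MvPolynomial (Fin 2) K) (k : ℕ) :
    (toPolyPoly (MvPolynomial.pderiv 0 p)).coeff k = derivative ((toPolyPoly p).coeff k) := by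
  induction p using MvPolynomial.induction_on generalizing k with
  | C a => simp [coeff_C, apply_ite derivative]
  | add p q hp hq => simp [hp, hq]
  | mul_X p i hp =>
    fin_cases i
    · simp [hp, derivative_mul, mul_comm]
    · rcases k with _ | k
      · simp [MvPolynomial.pderiv_X_of_ne (by decide : (1 : Fin 2) ≠ 0)]
      · simp [MvPolynomial.pderiv_X_of_ne (by decide : (1 : Fin 2) ≠ 0), coeff_mul_X, hp]

end PolyPoly

section Recurrence

variable {K : Type*} [Field K] [CharZero K]

lemma degree_eq_add_one_of_degree_derivative {p : K[X]} {n : ℕ}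
    (h : (derivative p).degree = n) : p.degree = ↑(n + 1) := by
  have hp' : derivative p ≠ 0 := by rintro hp; simp [hp] at h
  have hp : p.natDegree ≠ 0 := derivative_ne_zero.mp hp'
  rw [degree_derivative hp, Nat.cast_inj] at h
  rw [degree_eq_natDegree (ne_zero_of_natDegree_gt (Nat.pos_of_ne_zero hp))]
  norm_cast
  omega

lemma degree_mul_natCast (p : K[X]) {n : ℕ} (hn : n ≠ 0) :
    (p * (n : K[X])).degree = p.degree := by
  rw [← C_eq_natCast, degree_mul_C (Nat.cast_ne_zero.mpr hn)]

lemma degree_eq_of_derivative_add_mul_add_mul_eq_zero {a b f g h : K[X]} {e : ℕ}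
    (ha : 0 < a.natDegree) (hb : b.degree ≤ 0) (hg : g.degree = e) (hh : h.degree ≤ e)
    (hfgh : derivative f + a * g + b * h = 0) : f.degree = ↑(e + a.natDegree + 1) := by
  have hag : (a * g).degree = ↑(e + a.natDegree) := by
    rw [degree_mul, hg, degree_eq_natDegree (ne_zero_of_natDegree_gt ha)]
    norm_cast
    ring
  have hbh : (b * h).degree < (a * g).degree := by
    rw [hag]
    calc (b * h).degree ≤ b.degree + h.degree := degree_mul_le b h
      _ ≤ 0 + (e : WithBot ℕ) := add_le_add hb hh
      _ < ↑(e + a.natDegree) := by rw [zero_add]; exact_mod_cast (by omega : e < e + a.natDegree)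
  have hf : derivative f = -(a * g + b * h) :=
    eq_neg_of_add_eq_zero_left (by rw [← add_assoc]; exact hfgh)
  apply degree_eq_add_one_of_degree_derivative
  rw [hf, degree_neg, degree_add_eq_left_of_degree_lt hbh, hag]

/-- For `P = ∑ Pₖ(x) yᵏ`, the left-hand side is the coefficient of `yᵏ⁺¹` in
`y ∂ₓP + (a₁ y + a₀) ∂_y P`. -/
def CoeffRecurrence (a1 : K[X]) (a0 : K) (P : K[X][X]) : Prop :=
  ∀ k : ℕ, derivative (P.coeff k) + a1 * (P.coeff (k + 1) * ↑(k + 1))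
    + C a0 * (P.coeff (k + 2) * ↑(k + 2)) = 0

variable {a1 : K[X]} {a0 : K} {P : K[X][X]}

lemma CoeffRecurrence.degree_coeff_natDegree_sub (hrec : CoeffRecurrence a1 a0 P)
    (ha1 : 0 < a1.natDegree) (hP : P ≠ 0) {j : ℕ} (hj : j ≤ P.natDegree) :
    (P.coeff (P.natDegree - j)).degree = ↑(j * (a1.natDegree + 1)) := by
  set n := P.natDegree
  suffices ∀ j ≤ n, (P.coeff (n - j)).degree = ↑(j * (a1.natDegree + 1)) ∧
      (P.coeff (n - j + 1)).degree ≤ ↑(j * (a1.natDegree + 1)) from (this j hj).1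
  intro j hj
  induction j with
  | zero =>
    have htop : ∀ m, n < m → P.coeff m = 0 := fun m hm => coeff_eq_zero_of_natDegree_lt hm
    have hconst : derivative (P.coeff n) = 0 := by
      simpa [htop (n + 1) (by omega), htop (n + 2) (by omega)] using hrec n
    refine ⟨?_, by simp [htop (n + 1) (by omega)]⟩
    rw [Nat.sub_zero, degree_eq_natDegree (by simpa [n] using hP),
      derivative_eq_zero.mp hconst, zero_mul]
  | succ j ih =>
    obtain ⟨hdeg, hdeg_next⟩ := ih (by omega)
    have hk1 : n - (j + 1) + 1 = n - j := by omega
    have hk2 : n - (j + 1) + 2 = n - j + 1 := by omega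
    have hstep := hrec (n - (j + 1))
    rw [hk1, hk2] at hstep
    refine ⟨?_, by rw [hk1, hdeg]; gcongr; omega⟩
    rw [degree_eq_of_derivative_add_mul_add_mul_eq_zero ha1 degree_C_le
      (by rwa [degree_mul_natCast _ (by omega)])
      (by rwa [degree_mul_natCast _ (by omega)]) hstep]
    congr 1
    ring

lemma CoeffRecurrence.natDegree_add_one_dvd_natDegree_coeff (hrec : CoeffRecurrence a1 a0 P)
    (ha1 : 0 < a1.natDegree) (i : ℕ) : a1.natDegree + 1 ∣ (P.coeff i).natDegree := by
  by_cases hi : i ≤ P.natDegree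
  · rcases eq_or_ne P 0 with rfl | hP
    · simp
    have h := hrec.degree_coeff_natDegree_sub ha1 hP (Nat.sub_le P.natDegree i)
    rw [Nat.sub_sub_self hi] at h
    rw [natDegree_eq_of_degree_eq_some h]
    exact dvd_mul_left _ _
  · simp [coeff_eq_zero_of_natDegree_lt (not_le.mp hi)]

end Recurrence

theorem stmt_3 (K : Type*) [Field K] [CharZero K] (a1 : Polynomial K)
    (ha1 : 1 ≤ a1.degree) (a0 : K) (ha0 : a0 ≠ 0)
    (D : Derivation K (MvPolynomial (Fin 2) K) (MvPolynomial (Fin 2) K))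
    (hDx : D (MvPolynomial.X 0) = MvPolynomial.X 1)
    (hDy : D (MvPolynomial.X 1) =
      Polynomial.aeval (MvPolynomial.X 0) a1 * MvPolynomial.X 1 + MvPolynomial.C a0) :
    ¬ ∃ G : MvPolynomial (Fin 2) K, D G = MvPolynomial.X 0 := by
  rintro ⟨G, hG⟩
  rw [MvPolynomial.derivation_eq_sum_smul_pderiv D, Fin.sum_univ_two, hDx, hDy] at hG
  have hP := congrArg toPolyPoly hG
  simp only [Derivation.add_apply, Derivation.smul_apply, smul_eq_mul, map_add, map_mul,
    toPolyPoly_X_zero, toPolyPoly_X_one, toPolyPoly_C, toPolyPoly_aeval_X_zero,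
    toPolyPoly_pderiv_one] at hP
  set P := toPolyPoly G with hPdef
  have hcoeff_one : C a0 * P.coeff 1 = X := by
    simpa [coeff_derivative] using congrArg (coeff · 0) hP
  have hrec : CoeffRecurrence a1 a0 P := by
    intro k
    have h := congrArg (coeff · (k + 1)) hP
    simp only [add_mul, mul_assoc, coeff_add, coeff_X_mul, coeff_toPolyPoly_pderiv_zero, ← hPdef,
      coeff_C_mul, coeff_derivative, coeff_C_succ, Nat.cast_add, Nat.cast_one] at h
    push_cast
    linear_combination (norm := ring_nf) h
  have hd : 0 < a1.natDegree := natDegree_pos_iff_degree_pos.mpr (zero_lt_one.trans_le ha1)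
  have hdvd := hrec.natDegree_add_one_dvd_natDegree_coeff hd 1
  have hdeg_one : (P.coeff 1).natDegree = 1 := by
    simpa [natDegree_C_mul ha0] using congrArg natDegree hcoeff_one
  rw [hdeg_one, Nat.dvd_one] at hdvd
  omega
end

section
/- Let K be a field of characteristic zero and a1(x) ∈ K[x]. For the K-derivation D = y∂x + a1(x)y·∂y of K[x,y] (so D(x) = y, D(y) = a1(x)y), the image D(K[x,y]) equals the principal ideal (y) of K[x,y]; in particular, the image of D is a Mathieu-Zhao space of K[x,y]. -/
/-!
Since `D x` and `D y` are multiples of `y`, Leibniz' rule puts the whole image of `D` in `(y)`.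
Conversely `D (q(x) yʲ⁺¹) = q'(x) yʲ⁺² + (j + 1) (a1 q)(x) yʲ⁺¹`, so taking `q` an antiderivative
of `p` (characteristic zero) and inducting on `j` shows that every `p(x) yʲ⁺¹` is in the image.
An ideal is trivially a Mathieu-Zhao space.
-/

/-- A `K`-subspace `M` of `R` is a *Mathieu-Zhao space* if whenever `a ∈ R`
satisfies `a ^ m ∈ M` for all sufficiently large `m`, then for every `b ∈ R`
one has `b * a ^ m ∈ M` for all sufficiently large `m`. -/
def Submodule.IsMathieuZhao {K R : Type*} [CommRing K] [CommRing R] [Algebra K R]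
    (M : Submodule K R) : Prop :=
  ∀ a : R, (∃ N : ℕ, ∀ m : ℕ, N ≤ m → a ^ m ∈ M) →
    ∀ b : R, ∃ N : ℕ, ∀ m : ℕ, N ≤ m → b * a ^ m ∈ M

theorem Ideal.isMathieuZhao_restrictScalars {K R : Type*} [CommRing K] [CommRing R]
    [Algebra K R] (I : Ideal R) : (I.restrictScalars K).IsMathieuZhao := by
  rintro a ⟨N, hN⟩ b
  exact ⟨N, fun m hm => I.mul_mem_left b (hN m hm)⟩

theorem Polynomial.exists_derivative_eq {K : Type*} [Field K] [CharZero K] (p : Polynomial K) :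
    ∃ q : Polynomial K, derivative q = p := by
  refine ⟨p.sum fun n a => C (a / (n + 1)) * X ^ (n + 1), ?_⟩
  conv_rhs => rw [← p.sum_C_mul_X_pow_eq]
  rw [Polynomial.sum, Polynomial.sum, map_sum]
  refine Finset.sum_congr rfl fun n _ => ?_
  rw [derivative_C_mul, derivative_X_pow, Nat.cast_add_one, add_tsub_cancel_right,
    ← mul_assoc, ← C_mul, div_mul_cancel₀ _ (Nat.cast_add_one_ne_zero n)]

namespace MvPolynomial

theorem derivation_mem_of_forall_X_mem {R σ : Type*} [CommSemiring R]
    (D : Derivation R (MvPolynomial σ R) (MvPolynomial σ R)) (I : Ideal (MvPolynomial σ R))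
    (hX : ∀ i, D (X i) ∈ I) (f : MvPolynomial σ R) : D f ∈ I := by
  induction f using MvPolynomial.induction_on with
  | C a => simp
  | add p q hp hq => simpa using I.add_mem hp hq
  | mul_X p i hp =>
    rw [Derivation.leibniz, smul_eq_mul, smul_eq_mul]
    exact I.add_mem (I.mul_mem_left _ (hX i)) (I.mul_mem_left _ hp)

section TwoVariables

variable {K : Type*} [Field K] (a1 : Polynomial K)
  (D : Derivation K (MvPolynomial (Fin 2) K) (MvPolynomial (Fin 2) K))
  (hDx : D (X 0) = X 1) (hDy : D (X 1) = Polynomial.aeval (X 0) a1 * X 1)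
include hDx hDy

theorem range_le_span_X_one :
    LinearMap.range D.toLinearMap ≤ (Ideal.span {X 1}).restrictScalars K := by
  rintro _ ⟨f, rfl⟩
  refine derivation_mem_of_forall_X_mem D _ (fun i => ?_) f
  rw [Ideal.mem_span_singleton]
  fin_cases i
  · exact ⟨1, by simp [hDx]⟩
  · exact ⟨Polynomial.aeval (X 0) a1, by simp [hDy, mul_comm]⟩

theorem aeval_mul_X_one_pow_mem_range [CharZero K] (j : ℕ) (p : Polynomial K) :
    Polynomial.aeval (X 0) p * X 1 ^ (j + 1) ∈ LinearMap.range D.toLinearMap := by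
  induction j generalizing p with
  | zero =>
    obtain ⟨q, rfl⟩ := p.exists_derivative_eq
    exact ⟨Polynomial.aeval (X 0) q, by simp [Derivation.map_aeval, hDx, smul_eq_mul]⟩
  | succ j ih =>
    obtain ⟨q, rfl⟩ := p.exists_derivative_eq
    have hD : D (Polynomial.aeval (X 0) q * X 1 ^ (j + 1)) -
        Polynomial.aeval (X 0) ((j + 1 : ℕ) • (a1 * q)) * X 1 ^ (j + 1) =
          Polynomial.aeval (X 0) (Polynomial.derivative q) * X 1 ^ (j + 1 + 1) := by
      rw [Derivation.leibniz, Derivation.leibniz_pow, Derivation.map_aeval, hDx, hDy]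
      simp only [smul_eq_mul, map_mul, map_natCast, Nat.add_sub_cancel, nsmul_eq_mul]
      ring
    rw [← hD]
    exact sub_mem ⟨_, rfl⟩ (ih _)

theorem range_eq_span_X_one [CharZero K] :
    LinearMap.range D.toLinearMap = (Ideal.span {X 1}).restrictScalars K := by
  refine le_antisymm (range_le_span_X_one a1 D hDx hDy) ?_
  intro _ hz
  obtain ⟨r, rfl⟩ := Ideal.mem_span_singleton'.1 hz
  clear hz
  induction r using MvPolynomial.induction_on' with
  | monomial v c =>
    have hmon : monomial v c * X 1 =
        Polynomial.aeval (X 0) (Polynomial.monomial (v 0) c) * X 1 ^ (v 1 + 1) := by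
      rw [monomial_eq, Finsupp.prod_pow, Fin.prod_univ_two, Polynomial.aeval_monomial,
        algebraMap_eq]
      ring
    rw [hmon]
    exact aeval_mul_X_one_pow_mem_range a1 D hDx hDy _ _
  | add p q hp hq =>
    rw [add_mul]
    exact add_mem hp hq

end TwoVariables

end MvPolynomial

theorem stmt_4 (K : Type*) [Field K] [CharZero K] (a1 : Polynomial K)
    (D : Derivation K (MvPolynomial (Fin 2) K) (MvPolynomial (Fin 2) K))
    (hDx : D (MvPolynomial.X 0) = MvPolynomial.X 1)
    (hDy : D (MvPolynomial.X 1) =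
      Polynomial.aeval (MvPolynomial.X 0) a1 * MvPolynomial.X 1) :
    (LinearMap.range D.toLinearMap : Set (MvPolynomial (Fin 2) K)) =
      (Ideal.span {MvPolynomial.X 1} : Ideal (MvPolynomial (Fin 2) K)) ∧
    (LinearMap.range D.toLinearMap).IsMathieuZhao := by
  rw [MvPolynomial.range_eq_span_X_one a1 D hDx hDy]
  exact ⟨rfl, Ideal.isMathieuZhao_restrictScalars _⟩
end

section
/- Let K be a field of characteristic zero, a2(x) ∈ K[x] with deg a2(x) ≥ 1, a0 ∈ K* a nonzero constant, and a1(x) ∈ K[x] \ {0}. Let D = y∂x + (a2(x)y² + a1(x)y + a0)∂y be the K-derivation of K[x,y]. Suppose F(x,y) = Σ_{i=0}^n c_i(x)y^i ∉ K, with c_n(x) ≠ 0 and c_i(x) ∈ K[x], is a Darboux polynomial of D satisfying D(F) = Λ(x,y)·F for some Λ(x,y) ∈ K[x,y]. Then: (1) n ≥ 1, c_n(x) is a nonzero constant, and Λ(x,y) = n·a2(x)·y + d0(x) for some d0(x) ∈ K[x]; (2) if n ≥ 2 the coefficients satisfy c'_{n-1}(x) = a2(x)c_{n-1}(x) + (d0(x)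 − n·a1(x))c_n(x), (i+1)a0·c_{i+1}(x) = (n−i+1)a2(x)c_{i−1}(x) + (d0(x) − i·a1(x))c_i(x) − c'_{i−1}(x) for 1 ≤ i ≤ n−1, and a0·c_1(x) = d0(x)c_0(x), while if n = 1 the first and last of these equations hold; (3) if n ≥ 2 then c_{n-1}(x) ≠ 0 and d0(x) − n·a1(x) ∉ K; moreover, if additionally deg a1(x) = 0 and n ≥ 2, then deg d0(x) ≥ 1 and c_1(x)c_0(x) ≠ 0. -/
/-!
Identify `K[x, y]` with `K[x][y]`. Then `D F = Λ F` is an identity of polynomials in `y`, and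
comparing `y`-degrees shows `Λ = l₁ y + l₀`. The coefficient of `y ^ (m + 1)` gives
`c_m' + m a₂ c_m + (m + 1) a₁ c_{m+1} + (m + 2) a₀ c_{m+2} = l₁ c_m + l₀ c_{m+1}`.
For `m = n` this is `c_n' = (l₁ - n a₂) c_n`, which by degrees forces `c_n' = 0`, so `c_n` is
constant and `l₁ = n a₂`. The remaining claims come from two facts: when `deg a ≥ 1`, the
polynomial `a v - v'` is constant only for `v = 0`; and since `a₀ ≠ 0` the recurrence carries
`c₀ = 0` upwards to every coefficient.
-/

open Polynomial

namespace DarbouxSecondOrder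

section Transport

variable (K : Type*) [CommSemiring K]

-- `x = X 0` is the inner variable and `y = X 1` the outer one.
noncomputable def bivariateEquiv : K[X][X] ≃ₐ[K] MvPolynomial (Fin 2) K :=
  AlgEquiv.ofAlgHom (aevalTower (aeval (MvPolynomial.X 0)) (MvPolynomial.X 1))
    (MvPolynomial.aeval ![C X, X])
    (MvPolynomial.algHom_ext fun i => by fin_cases i <;> simp)
    (algHom_ext' (algHom_ext (by simp)) (by simp))

variable {K}

@[simp]
theorem bivariateEquiv_C (p : K[X]) :
    bivariateEquiv K (C p) = aeval (MvPolynomial.X 0) p :=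
  aevalTower_C _ _ _

@[simp]
theorem bivariateEquiv_X : bivariateEquiv K X = MvPolynomial.X 1 :=
  aevalTower_X _ _

end Transport

section CoeffDeriv

variable {R : Type*} [CommSemiring R]

noncomputable def coeffDeriv (P : R[X][X]) : R[X][X] :=
  ∑ i ∈ P.support, monomial i (derivative (P.coeff i))

@[simp]
theorem coeff_coeffDeriv (P : R[X][X]) (k : ℕ) :
    (coeffDeriv P).coeff k = derivative (P.coeff k) := by
  simp only [coeffDeriv, finsetSum_coeff, coeff_monomial, Finset.sum_ite_eq', mem_support_iff]
  split_ifs with h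
  · rfl
  · rw [notMem_support_iff.mp h, derivative_zero]

theorem coeffDeriv_add (P Q : R[X][X]) :
    coeffDeriv (P + Q) = coeffDeriv P + coeffDeriv Q := by
  ext1 k; simp

theorem coeffDeriv_monomial (k : ℕ) (a : R[X]) :
    coeffDeriv (monomial k a) = monomial k (derivative a) := by
  ext1 j; simp only [coeff_coeffDeriv, coeff_monomial]; split_ifs <;> simp

theorem derivation_bivariateEquiv
    (D : Derivation R (MvPolynomial (Fin 2) R) (MvPolynomial (Fin 2) R)) {u v : R[X][X]}
    (hx : D (MvPolynomial.X 0) = bivariateEquiv R u)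
    (hy : D (MvPolynomial.X 1) = bivariateEquiv R v) (P : R[X][X]) :
    D (bivariateEquiv R P) = bivariateEquiv R (coeffDeriv P * u + derivative P * v) := by
  induction P using Polynomial.induction_on' with
  | add P Q hP hQ =>
    rw [map_add, map_add, hP, hQ, ← map_add, coeffDeriv_add, derivative_add]
    congr 1
    ring
  | monomial k a =>
    rw [coeffDeriv_monomial, ← C_mul_X_pow_eq_monomial, ← C_mul_X_pow_eq_monomial]
    simp only [map_mul, map_pow, map_add, bivariateEquiv_C, bivariateEquiv_X, Derivation.leibniz,
      Derivation.leibniz_pow, Derivation.map_aeval, hx, hy, derivative_C_mul_X_pow,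
      map_natCast, smul_eq_mul, nsmul_eq_mul]
    ring

end CoeffDeriv

section OdeDeriv

variable {R : Type*} [CommRing R] (a2 a1 : R[X]) (a0 : R)

/-- The derivation `y ∂ₓ + (a₂ y² + a₁ y + a₀) ∂_y`, read on `R[X][X]` via `bivariateEquiv`. -/
noncomputable def odeDeriv (P : R[X][X]) : R[X][X] :=
  coeffDeriv P * X + derivative P * (C a2 * X ^ 2 + C a1 * X + C (C a0))

theorem coeff_odeDeriv_zero (P : R[X][X]) :
    (odeDeriv a2 a1 a0 P).coeff 0 = C a0 * P.coeff 1 := by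
  simp [odeDeriv, mul_add, ← mul_assoc, pow_two, coeff_derivative]
  ring

theorem coeff_odeDeriv_succ (P : R[X][X]) (m : ℕ) :
    (odeDeriv a2 a1 a0 P).coeff (m + 1) =
      derivative (P.coeff m) + m * a2 * P.coeff m + (m + 1) * a1 * P.coeff (m + 1) +
        (m + 2) * C a0 * P.coeff (m + 2) := by
  rcases m with _ | m <;>
  simp [odeDeriv, mul_add, ← mul_assoc, pow_two, coeff_derivative] <;> ring

theorem natDegree_odeDeriv_le (P : R[X][X]) :
    (odeDeriv a2 a1 a0 P).natDegree ≤ P.natDegree + 1 := by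
  refine natDegree_le_iff_coeff_eq_zero.mpr fun N hN => ?_
  obtain ⟨m, rfl⟩ : ∃ m, N = m + 1 := ⟨N - 1, by omega⟩
  simp [coeff_odeDeriv_succ, coeff_eq_zero_of_natDegree_lt (show P.natDegree < m by omega),
    coeff_eq_zero_of_natDegree_lt (show P.natDegree < m + 1 by omega),
    coeff_eq_zero_of_natDegree_lt (show P.natDegree < m + 2 by omega)]

variable {a2 a1 a0} {P : R[X][X]} {l1 l0 : R[X]}

theorem odeDeriv_eq_mul_of_derivation_eq_mul
    (D : Derivation R (MvPolynomial (Fin 2) R) (MvPolynomial (Fin 2) R))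
    (hDx : D (MvPolynomial.X 0) = MvPolynomial.X 1)
    (hDy : D (MvPolynomial.X 1) =
      aeval (MvPolynomial.X 0) a2 * MvPolynomial.X 1 ^ 2 +
        aeval (MvPolynomial.X 0) a1 * MvPolynomial.X 1 + MvPolynomial.C a0)
    {L : R[X][X]} (h : D (bivariateEquiv R P) = bivariateEquiv R L * bivariateEquiv R P) :
    odeDeriv a2 a1 a0 P = L * P := by
  apply (bivariateEquiv R).injective
  rw [map_mul, ← h, odeDeriv, derivation_bivariateEquiv D (u := X)
    (v := C a2 * X ^ 2 + C a1 * X + C (C a0)) (by simp [hDx])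
    (by simp [hDy, MvPolynomial.algebraMap_eq])]

theorem exists_eq_C_mul_X_add_C_of_odeDeriv_eq_mul [IsDomain R] {L : R[X][X]} (hP : P ≠ 0)
    (h : odeDeriv a2 a1 a0 P = L * P) : ∃ l1 l0, L = C l1 * X + C l0 := by
  refine exists_eq_X_add_C_of_natDegree_le_one ?_
  rcases eq_or_ne L 0 with rfl | hL
  · simp
  · have := natDegree_odeDeriv_le a2 a1 a0 P
    rw [h, natDegree_mul hL hP] at this
    omega

theorem coeff_zero_eq_of_odeDeriv_eq (h : odeDeriv a2 a1 a0 P = (C l1 * X + C l0) * P) :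
    C a0 * P.coeff 1 = l0 * P.coeff 0 := by
  simpa [coeff_odeDeriv_zero, add_mul, mul_assoc] using congrArg (coeff · 0) h

theorem coeff_succ_eq_of_odeDeriv_eq (h : odeDeriv a2 a1 a0 P = (C l1 * X + C l0) * P) (m : ℕ) :
    derivative (P.coeff m) + m * a2 * P.coeff m + (m + 1) * a1 * P.coeff (m + 1) +
        (m + 2) * C a0 * P.coeff (m + 2) = l1 * P.coeff m + l0 * P.coeff (m + 1) := by
  simpa [coeff_odeDeriv_succ, add_mul, mul_assoc, coeff_X_mul] using congrArg (coeff · (m + 1)) h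

theorem derivative_leadingCoeff_of_odeDeriv_eq
    (h : odeDeriv a2 a1 a0 P = (C l1 * X + C l0) * P) :
    derivative P.leadingCoeff = (l1 - P.natDegree * a2) * P.leadingCoeff := by
  have htop := coeff_succ_eq_of_odeDeriv_eq h P.natDegree
  rw [coeff_eq_zero_of_natDegree_lt (Nat.lt_succ_self _),
    coeff_eq_zero_of_natDegree_lt (by omega : P.natDegree < P.natDegree + 2)] at htop
  rw [leadingCoeff]
  linear_combination htop

theorem recurrence_of_odeDeriv_eq {n : ℕ}
    (h : odeDeriv a2 a1 a0 P = (C (n * a2) * X + C l0) * P) {i : ℕ} (hi : 1 ≤ i) :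
    ((i : R[X]) + 1) * C a0 * P.coeff (i + 1) =
      ((n : R[X]) - i + 1) * a2 * P.coeff (i - 1) + (l0 - i * a1) * P.coeff i -
        derivative (P.coeff (i - 1)) := by
  obtain ⟨j, rfl⟩ : ∃ j, i = j + 1 := ⟨i - 1, by omega⟩
  have := coeff_succ_eq_of_odeDeriv_eq h j
  simp only [add_tsub_cancel_right, add_assoc, Nat.reduceAdd] at this ⊢
  push_cast
  linear_combination this

theorem derivative_coeff_pred_of_odeDeriv_eq {n : ℕ}
    (h : odeDeriv a2 a1 a0 P = (C (n * a2) * X + C l0) * P) (hn : P.natDegree = n) (h1 : 1 ≤ n) :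
    derivative (P.coeff (n - 1)) = a2 * P.coeff (n - 1) + (l0 - n * a1) * P.coeff n := by
  have := recurrence_of_odeDeriv_eq h h1
  rw [coeff_eq_zero_of_natDegree_lt (by omega : P.natDegree < n + 1)] at this
  linear_combination this

end OdeDeriv

section Domain

variable {R : Type*} [CommRing R] [IsDomain R]

theorem derivative_eq_zero_of_derivative_eq_mul {p q : R[X]} (h : derivative p = q * p) :
    derivative p = 0 := by
  by_contra hd
  have hp : p.natDegree ≠ 0 := fun h0 => hd (by rw [eq_C_of_natDegree_eq_zero h0, derivative_C])
  have hq : q ≠ 0 := by rintro rfl; rw [zero_mul] at h; exact hd h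
  have hlt := natDegree_derivative_lt hp
  rw [h, natDegree_mul hq (by rintro rfl; simp at hp)] at hlt
  omega

theorem eq_zero_of_mul_sub_derivative_eq_C {a v : R[X]} {t : R} (ha : 1 ≤ a.degree)
    (h : a * v - derivative v = C t) : v = 0 := by
  by_contra hv
  have ha0 : a ≠ 0 := by rintro rfl; simp at ha
  have ha1 : 1 ≤ a.natDegree := le_natDegree_of_coe_le_degree (by exact_mod_cast ha)
  have hlt : (derivative v).natDegree < (a * v).natDegree := by
    rw [natDegree_mul ha0 hv]
    have := natDegree_derivative_le v
    omega
  have := natDegree_sub_eq_left_of_natDegree_lt hlt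
  rw [h, natDegree_C, natDegree_mul ha0 hv] at this
  omega

variable {a2 a1 : R[X]} {a0 : R} {P : R[X][X]} {l1 l0 : R[X]}

theorem derivative_leadingCoeff_eq_zero_of_odeDeriv_eq
    (h : odeDeriv a2 a1 a0 P = (C l1 * X + C l0) * P) : derivative P.leadingCoeff = 0 :=
  derivative_eq_zero_of_derivative_eq_mul (derivative_leadingCoeff_of_odeDeriv_eq h)

theorem eq_natDegree_mul_of_odeDeriv_eq (h : odeDeriv a2 a1 a0 P = (C l1 * X + C l0) * P)
    (hP : P ≠ 0) : l1 = P.natDegree * a2 := by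
  have hlead := derivative_leadingCoeff_of_odeDeriv_eq h
  rw [derivative_leadingCoeff_eq_zero_of_odeDeriv_eq h, eq_comm, mul_eq_zero] at hlead
  exact sub_eq_zero.mp (hlead.resolve_right (leadingCoeff_ne_zero.mpr hP))

variable [CharZero R]

theorem exists_leadingCoeff_eq_C_of_odeDeriv_eq
    (h : odeDeriv a2 a1 a0 P = (C l1 * X + C l0) * P) (hP : P ≠ 0) :
    ∃ k, k ≠ 0 ∧ P.leadingCoeff = C k := by
  have hC := eq_C_of_derivative_eq_zero (derivative_leadingCoeff_eq_zero_of_odeDeriv_eq h)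
  refine ⟨_, fun hk => ?_, hC⟩
  rw [hk, map_zero, leadingCoeff_eq_zero] at hC
  exact hP hC

theorem eq_zero_of_coeff_zero_eq_zero_of_odeDeriv_eq
    (h : odeDeriv a2 a1 a0 P = (C l1 * X + C l0) * P) (ha0 : a0 ≠ 0) (h0 : P.coeff 0 = 0) :
    P = 0 := by
  have hCa0 : (C a0 : R[X]) ≠ 0 := C_ne_zero.mpr ha0
  have hvanish : ∀ m, P.coeff m = 0 ∧ P.coeff (m + 1) = 0 := by
    intro m
    induction m with
    | zero =>
      have := coeff_zero_eq_of_odeDeriv_eq h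
      rw [h0, mul_zero, mul_eq_zero] at this
      exact ⟨h0, this.resolve_left hCa0⟩
    | succ m ih =>
      have := coeff_succ_eq_of_odeDeriv_eq h m
      rw [ih.1, ih.2] at this
      simp only [derivative_zero, mul_zero, add_zero, zero_add, mul_eq_zero] at this
      refine ⟨ih.2, ?_⟩
      rcases this with (h2 | h2) | h2
      · exact absurd h2 (by exact_mod_cast Nat.succ_ne_zero (m + 1))
      · exact absurd h2 hCa0
      · exact h2
  exact Polynomial.ext fun m => (hvanish m).1.trans (coeff_zero m).symm

theorem coeff_pred_ne_zero_of_odeDeriv_eq {n : ℕ} (ha2 : 1 ≤ a2.degree) (ha0 : a0 ≠ 0)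
    (h : odeDeriv a2 a1 a0 P = (C (n * a2) * X + C l0) * P) (hn : P.natDegree = n) (h2 : 2 ≤ n) :
    P.coeff (n - 1) ≠ 0 := by
  intro hz
  have hP : P ≠ 0 := by rintro rfl; simp at hn; omega
  obtain ⟨k, hk0, hk⟩ := exists_leadingCoeff_eq_C_of_odeDeriv_eq h hP
  rw [leadingCoeff, hn] at hk
  have hl0 : l0 = n * a1 := by
    have := derivative_coeff_pred_of_odeDeriv_eq h hn (by omega)
    rw [hz, derivative_zero, mul_zero, zero_add, eq_comm, mul_eq_zero, sub_eq_zero] at this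
    exact this.resolve_right (hk ▸ C_ne_zero.mpr hk0)
  -- the recurrence at `i = n - 1` now reads `2 a2 v - v' = n a0 k` with `v = P.coeff (n - 2)`
  have hmid := recurrence_of_odeDeriv_eq h (i := n - 1) (by omega)
  rw [Nat.sub_add_cancel (by omega), hz, hk, hl0, Nat.cast_sub (by omega)] at hmid
  set v := P.coeff (n - 1 - 1)
  have hv : C 2 * a2 * v - derivative v = C (n * a0 * k) := by
    rw [C_mul, C_mul, map_natCast, map_ofNat]
    linear_combination -hmid
  rw [eq_zero_of_mul_sub_derivative_eq_C (by rwa [degree_C_mul two_ne_zero]) hv, mul_zero,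
    derivative_zero, sub_zero, eq_comm, C_eq_zero] at hv
  exact mul_ne_zero (mul_ne_zero (Nat.cast_ne_zero.mpr (by omega)) ha0) hk0 hv

theorem sub_natCast_mul_ne_C_of_odeDeriv_eq {n : ℕ} (ha2 : 1 ≤ a2.degree) (ha0 : a0 ≠ 0)
    (h : odeDeriv a2 a1 a0 P = (C (n * a2) * X + C l0) * P) (hn : P.natDegree = n) (h2 : 2 ≤ n)
    (t : R) : l0 - n * a1 ≠ C t := by
  intro ht
  have hP : P ≠ 0 := by rintro rfl; simp at hn; omega
  obtain ⟨k, -, hk⟩ := exists_leadingCoeff_eq_C_of_odeDeriv_eq h hP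
  rw [leadingCoeff, hn] at hk
  have htop := derivative_coeff_pred_of_odeDeriv_eq h hn (by omega)
  rw [ht, hk] at htop
  refine coeff_pred_ne_zero_of_odeDeriv_eq ha2 ha0 h hn h2
    (eq_zero_of_mul_sub_derivative_eq_C ha2 (t := -(t * k)) ?_)
  rw [C_neg, C_mul]
  linear_combination -htop

theorem one_le_degree_of_odeDeriv_eq {n : ℕ} (ha2 : 1 ≤ a2.degree) (ha0 : a0 ≠ 0)
    (ha1 : a1.degree ≤ 0) (h : odeDeriv a2 a1 a0 P = (C (n * a2) * X + C l0) * P)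
    (hn : P.natDegree = n) (h2 : 2 ≤ n) : 1 ≤ l0.degree := by
  by_contra hl0
  refine sub_natCast_mul_ne_C_of_odeDeriv_eq ha2 ha0 h hn h2 (l0.coeff 0 - n * a1.coeff 0) ?_
  rw [eq_C_of_degree_le_zero ha1, eq_C_of_degree_le_zero (Order.le_of_lt_succ (not_le.mp hl0))]
  simp

theorem coeff_one_mul_coeff_zero_ne_zero_of_odeDeriv_eq (ha0 : a0 ≠ 0)
    (h : odeDeriv a2 a1 a0 P = (C l1 * X + C l0) * P) (hP : P ≠ 0) (hl0 : l0 ≠ 0) :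
    P.coeff 1 * P.coeff 0 ≠ 0 := by
  have h0 : P.coeff 0 ≠ 0 := fun h0 => hP (eq_zero_of_coeff_zero_eq_zero_of_odeDeriv_eq h ha0 h0)
  refine mul_ne_zero (fun h1 => ?_) h0
  have := coeff_zero_eq_of_odeDeriv_eq h
  rw [h1, mul_zero, eq_comm] at this
  exact mul_ne_zero hl0 h0 this

end Domain

end DarbouxSecondOrder

open DarbouxSecondOrder

theorem stmt_5_general (K : Type*) [Field K] [CharZero K]
    (a2 : Polynomial K) (ha2 : 1 ≤ a2.degree)
    (a0 : K) (ha0 : a0 ≠ 0)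
    (a1 : Polynomial K)
    (D : Derivation K (MvPolynomial (Fin 2) K) (MvPolynomial (Fin 2) K))
    (hDx : D (MvPolynomial.X 0) = MvPolynomial.X 1)
    (hDy : D (MvPolynomial.X 1) =
      Polynomial.aeval (MvPolynomial.X 0) a2 * MvPolynomial.X 1 ^ 2 +
        Polynomial.aeval (MvPolynomial.X 0) a1 * MvPolynomial.X 1 +
        MvPolynomial.C a0)
    (n : ℕ) (c : ℕ → Polynomial K) (hcn : c n ≠ 0)
    (F : MvPolynomial (Fin 2) K)
    (hF : F = ∑ i ∈ Finset.range (n + 1),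
      Polynomial.aeval (MvPolynomial.X 0) (c i) * MvPolynomial.X 1 ^ i)
    (hFK : ∀ k : K, F ≠ MvPolynomial.C k)
    (Λ : MvPolynomial (Fin 2) K) (hDarboux : D F = Λ * F) :
    1 ≤ n ∧ (∃ k : K, k ≠ 0 ∧ c n = Polynomial.C k) ∧
    ∃ d0 : Polynomial K,
      Λ = (n : MvPolynomial (Fin 2) K) * Polynomial.aeval (MvPolynomial.X 0) a2 *
            MvPolynomial.X 1 + Polynomial.aeval (MvPolynomial.X 0) d0 ∧
      Polynomial.derivative (c (n - 1)) =
        a2 * c (n - 1) + (d0 - (n : Polynomial K) * a1) * c n ∧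
      (∀ i : ℕ, 1 ≤ i → i ≤ n - 1 →
        ((i : Polynomial K) + 1) * Polynomial.C a0 * c (i + 1) =
          ((n : Polynomial K) - (i : Polynomial K) + 1) * a2 * c (i - 1) +
            (d0 - (i : Polynomial K) * a1) * c i - Polynomial.derivative (c (i - 1))) ∧
      Polynomial.C a0 * c 1 = d0 * c 0 ∧
      (2 ≤ n → c (n - 1) ≠ 0 ∧ ∀ k : K, d0 - (n : Polynomial K) * a1 ≠ Polynomial.C k) ∧
      (a1.degree = 0 → 2 ≤ n → 1 ≤ d0.degree ∧ c 1 * c 0 ≠ 0) := by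
  set P : K[X][X] := ∑ i ∈ Finset.range (n + 1), C (c i) * X ^ i
  have hc : ∀ k ≤ n, c k = P.coeff k := fun k hk => by
    simp [P, Nat.lt_succ_of_le hk]
  have hn : P.natDegree = n := natDegree_eq_of_le_of_coeff_ne_zero
    (natDegree_le_iff_coeff_eq_zero.mpr fun k hk => by simp [P]; omega)
    (hc n le_rfl ▸ hcn)
  have hP : P ≠ 0 := fun h => hcn (by rw [hc n le_rfl, h, coeff_zero])
  have hFP : F = bivariateEquiv K P := by simp [hF, P]
  obtain ⟨L, rfl⟩ := (bivariateEquiv K).surjective Λ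
  have hL := odeDeriv_eq_mul_of_derivation_eq_mul D hDx hDy (hFP ▸ hDarboux)
  obtain ⟨l1, l0, rfl⟩ := exists_eq_C_mul_X_add_C_of_odeDeriv_eq_mul hP hL
  obtain rfl := eq_natDegree_mul_of_odeDeriv_eq hL hP
  rw [hn] at hL
  obtain ⟨k, hk0, hk⟩ := exists_leadingCoeff_eq_C_of_odeDeriv_eq hL hP
  rw [leadingCoeff, hn, ← hc n le_rfl] at hk
  have h1 : 1 ≤ n := by
    refine Nat.one_le_iff_ne_zero.mpr fun h0 => hFK k ?_
    rw [hFP, eq_C_of_natDegree_eq_zero (hn.trans h0), ← hc 0 (by omega), ← h0, hk]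
    simp [MvPolynomial.algebraMap_eq]
  refine ⟨h1, ⟨k, hk0, hk⟩, l0, by simp [hn], ?_, fun i hi1 hi2 => ?_, ?_,
    fun h2 => ⟨?_, ?_⟩, fun ha1 h2 => ?_⟩
  · rw [hc n le_rfl, hc (n - 1) (by omega)]
    exact derivative_coeff_pred_of_odeDeriv_eq hL hn h1
  · rw [hc (i + 1) (by omega), hc i (by omega), hc (i - 1) (by omega)]
    exact recurrence_of_odeDeriv_eq hL hi1
  · rw [hc 1 h1, hc 0 (by omega)]
    exact coeff_zero_eq_of_odeDeriv_eq hL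
  · rw [hc (n - 1) (by omega)]
    exact coeff_pred_ne_zero_of_odeDeriv_eq ha2 ha0 hL hn h2
  · exact sub_natCast_mul_ne_C_of_odeDeriv_eq ha2 ha0 hL hn h2
  · have hl0 := one_le_degree_of_odeDeriv_eq ha2 ha0 ha1.le hL hn h2
    refine ⟨hl0, ?_⟩
    rw [hc 1 h1, hc 0 (by omega)]
    exact coeff_one_mul_coeff_zero_ne_zero_of_odeDeriv_eq ha0 hL hP (by rintro rfl; simp at hl0)

theorem stmt_5 (K : Type*) [Field K] [CharZero K]
    (a2 : Polynomial K) (ha2 : 1 ≤ a2.degree)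
    (a0 : K) (ha0 : a0 ≠ 0)
    (a1 : Polynomial K) (ha1 : a1 ≠ 0)
    (D : Derivation K (MvPolynomial (Fin 2) K) (MvPolynomial (Fin 2) K))
    (hDx : D (MvPolynomial.X 0) = MvPolynomial.X 1)
    (hDy : D (MvPolynomial.X 1) =
      Polynomial.aeval (MvPolynomial.X 0) a2 * MvPolynomial.X 1 ^ 2 +
        Polynomial.aeval (MvPolynomial.X 0) a1 * MvPolynomial.X 1 +
        MvPolynomial.C a0)
    (n : ℕ) (c : ℕ → Polynomial K) (hcn : c n ≠ 0)
    (F : MvPolynomial (Fin 2) K)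
    (hF : F = ∑ i ∈ Finset.range (n + 1),
      Polynomial.aeval (MvPolynomial.X 0) (c i) * MvPolynomial.X 1 ^ i)
    (hFK : ∀ k : K, F ≠ MvPolynomial.C k)
    (Λ : MvPolynomial (Fin 2) K) (hDarboux : D F = Λ * F) :
    1 ≤ n ∧ (∃ k : K, k ≠ 0 ∧ c n = Polynomial.C k) ∧
    ∃ d0 : Polynomial K,
      Λ = (n : MvPolynomial (Fin 2) K) * Polynomial.aeval (MvPolynomial.X 0) a2 *
            MvPolynomial.X 1 + Polynomial.aeval (MvPolynomial.X 0) d0 ∧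
      Polynomial.derivative (c (n - 1)) =
        a2 * c (n - 1) + (d0 - (n : Polynomial K) * a1) * c n ∧
      (∀ i : ℕ, 1 ≤ i → i ≤ n - 1 →
        ((i : Polynomial K) + 1) * Polynomial.C a0 * c (i + 1) =
          ((n : Polynomial K) - (i : Polynomial K) + 1) * a2 * c (i - 1) +
            (d0 - (i : Polynomial K) * a1) * c i - Polynomial.derivative (c (i - 1))) ∧
      Polynomial.C a0 * c 1 = d0 * c 0 ∧
      (2 ≤ n → c (n - 1) ≠ 0 ∧ ∀ k : K, d0 - (n : Polynomial K) * a1 ≠ Polynomial.C k) ∧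
      (a1.degree = 0 → 2 ≤ n → 1 ≤ d0.degree ∧ c 1 * c 0 ≠ 0) :=
  stmt_5_general K a2 ha2 a0 ha0 a1 D hDx hDy n c hcn F hF hFK Λ hDarboux
end

section
/- Let K be a field of characteristic zero, n ≥ 2 an integer, a0 ∈ K* a nonzero constant, and a1(x), a2(x), d0(x), c_0(x), …, c_n(x) ∈ K[x] with deg a1(x) > deg a2(x) ≥ 1, deg c_n(x) = 0, and c_0(x)c_1(x)c_{n-1}(x) ≠ 0. Suppose the equations (i+1)a0·c_{i+1}(x) = (n−i+1)a2(x)c_{i−1}(x) + (d0(x) − i·a1(x))c_i(x) − c'_{i−1}(x) hold for all 1 ≤ i ≤ n−1, and a0·c_1(x) = d0(x)c_0(x). Then d0(x) ≠ j·a1(x) for every integer j with 1 ≤ j ≤ n−1. -/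
open Polynomial in
private lemma aux_dom {K : Type*} [Field K] {f g : K[X]} (hf : f ≠ 0)
    (h : g.natDegree < f.natDegree) : f + g ≠ 0 ∧ (f + g).natDegree = f.natDegree := by
  have hdg : g.degree < f.degree := by
    refine lt_of_le_of_lt degree_le_natDegree ?_
    rw [degree_eq_natDegree hf]
    exact_mod_cast h
  have h2 : (f + g).degree = f.degree := degree_add_eq_left_of_degree_lt hdg
  have h3 : f + g ≠ 0 := by
    intro h0
    rw [h0, degree_zero, degree_eq_natDegree hf] at h2
    simp at h2
  refine ⟨h3, ?_⟩
  rw [degree_eq_natDegree hf] at h2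
  exact natDegree_eq_of_degree_eq_some h2

open Polynomial in
private lemma aux_exact {K : Type*} [Semiring K] {f : K[X]} {d : ℕ}
    (h1 : f.natDegree ≤ d) (h2 : f.coeff d ≠ 0) : f.natDegree = d ∧ f ≠ 0 :=
  ⟨le_antisymm h1 (le_natDegree_of_ne_zero h2), fun h0 => h2 (by simp [h0])⟩

set_option maxHeartbeats 2000000 in
open Polynomial in
theorem stmt_6 (K : Type*) [Field K] [CharZero K]
    (n : ℕ) (hn : 2 ≤ n)
    (a0 : K) (ha0 : a0 ≠ 0)
    (a1 a2 d0 : Polynomial K) (c : ℕ → Polynomial K)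
    (hdeg : a2.degree < a1.degree) (hdeg2 : 1 ≤ a2.degree)
    (hcn : (c n).degree = 0)
    (hc : c 0 * c 1 * c (n - 1) ≠ 0)
    (heq : ∀ i : ℕ, 1 ≤ i → i ≤ n - 1 →
      ((i : Polynomial K) + 1) * Polynomial.C a0 * c (i + 1) =
        ((n : Polynomial K) - (i : Polynomial K) + 1) * a2 * c (i - 1) +
          (d0 - (i : Polynomial K) * a1) * c i - Polynomial.derivative (c (i - 1)))
    (heq0 : Polynomial.C a0 * c 1 = d0 * c 0) :
    ∀ j : ℕ, 1 ≤ j → j ≤ n - 1 → d0 ≠ (j : Polynomial K) * a1 := by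
  intro j hj1 hjn hd0
  -- basic nonvanishing and degree facts
  have ha2 : a2 ≠ 0 := by
    intro h; rw [h, degree_zero] at hdeg2; simp at hdeg2
  have ha1 : a1 ≠ 0 := by
    intro h; rw [h, degree_zero] at hdeg; exact not_lt_bot hdeg
  set p : ℕ := a1.natDegree with hpdef
  set q : ℕ := a2.natDegree with hqdef
  set m : ℕ := (c 0).natDegree with hmdef
  have hq1 : 1 ≤ q := by
    have : 0 < a2.degree := lt_of_lt_of_le zero_lt_one hdeg2
    have := natDegree_pos_iff_degree_pos.mpr this
    omega
  have hpq : q < p := natDegree_lt_natDegree ha2 hdeg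
  have hp2 : 2 ≤ p := by omega
  have hc0 : c 0 ≠ 0 := by
    intro h; apply hc; rw [h]; ring
  have hcn1 : c (n-1) ≠ 0 := by
    intro h; apply hc; rw [h]; ring
  have hcnn : c n ≠ 0 := by
    intro h; rw [h, degree_zero] at hcn; simp at hcn
  have hcn0 : (c n).natDegree = 0 := natDegree_eq_of_degree_eq_some hcn
  set L1 : K := a1.leadingCoeff with hL1def
  set L2 : K := a2.leadingCoeff with hL2def
  set u : K := (c 0).leadingCoeff with hudef
  have hL1 : L1 ≠ 0 := leadingCoeff_ne_zero.mpr ha1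
  have hL2 : L2 ≠ 0 := leadingCoeff_ne_zero.mpr ha2
  have hu : u ≠ 0 := leadingCoeff_ne_zero.mpr hc0
  have hjn' : j + 1 ≤ n := by omega
  -- normalized recurrence with C-coefficients
  have heqN : ∀ i : ℕ, 1 ≤ i → i ≤ n - 1 →
      Polynomial.C ((i:K) + 1) * Polynomial.C a0 * c (i+1) =
        Polynomial.C ((n:K) - (i:K) + 1) * a2 * c (i-1) +
          Polynomial.C ((j:K) - (i:K)) * (a1 * c i) - derivative (c (i-1)) := by
    intro i h1 h2
    have h := heq i h1 h2
    rw [hd0] at h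
    simp only [map_add, map_sub, map_one, Polynomial.C_eq_natCast]
    linear_combination h
  -- power top coefficients
  have hpow : ∀ i : ℕ, (a1 ^ i).natDegree = i * p ∧ (a1 ^ i).coeff (i * p) = L1 ^ i := by
    intro i
    have h1 : (a1 ^ i).natDegree = i * p := by
      rw [Polynomial.natDegree_pow]
    refine ⟨h1, ?_⟩
    rw [← h1, coeff_natDegree, leadingCoeff_pow]
  -- model top coefficients
  have hMtop : ∀ (r : K) (i : ℕ),
      (Polynomial.C r * a1 ^ i * c 0).natDegree ≤ i * p + m ∧
      (Polynomial.C r * a1 ^ i * c 0).coeff (i * p + m) = r * L1 ^ i * u := by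
    intro r i
    have h1 : (Polynomial.C r * a1 ^ i).natDegree ≤ i * p :=
      (natDegree_C_mul_le _ _).trans (hpow i).1.le
    constructor
    · exact natDegree_mul_le.trans (by omega)
    · rw [coeff_mul_add_eq_of_natDegree_le h1 (le_refl m), coeff_C_mul, (hpow i).2]
      rw [hudef, ← coeff_natDegree]
  -- Region 1 : for i ≤ j,  a0^i * c i = choose j i * a1^i * c 0 + E with small E
  have reg1 : ∀ i : ℕ, i ≤ j → ∃ E : Polynomial K,
      (Polynomial.C a0) ^ i * c i = Polynomial.C ((j.choose i : K)) * a1 ^ i * c 0 + E ∧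
      (E = 0 ∨ (2 ≤ i ∧ E.natDegree + 2 * p ≤ i * p + q + m)) := by
    intro i
    induction i using Nat.strong_induction_on with
    | _ i IH =>
      match i with
      | 0 =>
        intro _
        refine ⟨0, by simp, Or.inl rfl⟩
      | 1 =>
        intro _
        refine ⟨0, ?_, Or.inl rfl⟩
        have h0 := heq0
        rw [hd0] at h0
        simp only [pow_one, Nat.choose_one_right, Polynomial.C_eq_natCast, add_zero]
        linear_combination h0
      | (k+2) =>
        intro hk2j
        obtain ⟨Ek, hEk, hEkb⟩ := IH k (by omega) (by omega)
        obtain ⟨Ek1, hEk1, hEk1b⟩ := IH (k+1) (by omega) (by omega)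
        have h := heqN (k+1) (by omega) (by omega)
        simp only [Nat.add_sub_cancel] at h
        rw [show k + 1 + 1 = k + 2 by omega] at h
        set κ : K := ((k+1 : ℕ) : K) + 1 with hκdef
        set ν : K := (n:K) - ((k+1 : ℕ) : K) + 1 with hνdef
        set μ : K := (j:K) - ((k+1 : ℕ) : K) with hμdef
        have hK2 : κ ≠ 0 := by
          have h9 : κ = ((k+2 : ℕ) : K) := by rw [hκdef]; push_cast; ring
          rw [h9]
          exact Nat.cast_ne_zero.mpr (by omega)
        have hch : μ * (j.choose (k+1) : K) = κ * (j.choose (k+2) : K) := by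
          have hnat := Nat.choose_succ_right_eq j (k+1)
          rw [show k+1+1 = k+2 by omega] at hnat
          have hcast := congrArg (fun t : ℕ => (t:K)) hnat
          push_cast [Nat.cast_sub (show k+1 ≤ j by omega)] at hcast
          rw [hμdef, hκdef]
          push_cast
          linear_combination -hcast
        set Mk : Polynomial K := Polynomial.C ((j.choose k : K)) * a1 ^ k * c 0 with hMkdef
        set B : Polynomial K :=
          Polynomial.C ν * Polynomial.C a0 * a2 * (Mk + Ek)
          + Polynomial.C μ * a1 * Ek1
          - Polynomial.C a0 * derivative (Mk + Ek) with hBdef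
        refine ⟨Polynomial.C (κ⁻¹) * B, ?_, Or.inr ⟨by omega, ?_⟩⟩
        · -- the equation
          have hinv : Polynomial.C κ * Polynomial.C (κ⁻¹) = 1 := by
            rw [← Polynomial.C_mul, mul_inv_cancel₀ hK2, Polynomial.C_1]
          have hder : (Polynomial.C a0) ^ k * derivative (c k) = derivative (Mk + Ek) := by
            rw [← hEk, ← Polynomial.C_pow, derivative_C_mul, Polynomial.C_pow]
          have hchC : Polynomial.C μ * Polynomial.C ((j.choose (k+1) : K))
              = Polynomial.C κ * Polynomial.C ((j.choose (k+2) : K)) := by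
            rw [← Polynomial.C_mul, ← Polynomial.C_mul, hch]
          apply mul_left_cancel₀ (show (Polynomial.C κ : Polynomial K) ≠ 0 from
            Polynomial.C_ne_zero.mpr hK2)
          rw [hBdef]
          calc Polynomial.C κ * (Polynomial.C a0 ^ (k+2) * c (k+2))
              = Polynomial.C a0 ^ (k+1) * (Polynomial.C κ * Polynomial.C a0 * c (k+2)) := by
                ring
            _ = Polynomial.C a0 ^ (k+1) * (Polynomial.C ν * a2 * c k
                + Polynomial.C μ * (a1 * c (k+1)) - derivative (c k)) := by rw [h]
            _ = Polynomial.C ν * Polynomial.C a0 * a2 * (Polynomial.C a0 ^ k * c k)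
                + Polynomial.C μ * a1 * (Polynomial.C a0 ^ (k+1) * c (k+1))
                - Polynomial.C a0 * (Polynomial.C a0 ^ k * derivative (c k)) := by ring
            _ = Polynomial.C ν * Polynomial.C a0 * a2 * (Mk + Ek)
                + Polynomial.C μ * a1 * (Polynomial.C ((j.choose (k+1) : K)) * a1 ^ (k+1) * c 0 + Ek1)
                - Polynomial.C a0 * derivative (Mk + Ek) := by rw [hEk, hEk1, hder]
            _ = (Polynomial.C μ * Polynomial.C ((j.choose (k+1) : K))) * (a1 ^ (k+2) * c 0)
                + (Polynomial.C ν * Polynomial.C a0 * a2 * (Mk + Ek)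
                  + Polynomial.C μ * a1 * Ek1 - Polynomial.C a0 * derivative (Mk + Ek)) := by
                ring
            _ = (Polynomial.C κ * Polynomial.C ((j.choose (k+2) : K))) * (a1 ^ (k+2) * c 0)
                + (Polynomial.C ν * Polynomial.C a0 * a2 * (Mk + Ek)
                  + Polynomial.C μ * a1 * Ek1 - Polynomial.C a0 * derivative (Mk + Ek)) := by
                rw [hchC]
            _ = Polynomial.C κ * (Polynomial.C ((j.choose (k+2) : K)) * a1 ^ (k+2) * c 0
                + Polynomial.C κ⁻¹ * (Polynomial.C ν * Polynomial.C a0 * a2 * (Mk + Ek)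
                  + Polynomial.C μ * a1 * Ek1 - Polynomial.C a0 * derivative (Mk + Ek))) := by
                conv_rhs => rw [mul_add, ← mul_assoc (Polynomial.C κ) (Polynomial.C κ⁻¹), hinv,
                  one_mul]
                ring
        · -- the degree bound
          have hEkn : Ek.natDegree ≤ k * p + m := by
            rcases hEkb with h0 | ⟨_, hb⟩
            · simp [h0]
            · linarith
          have hMkn : Mk.natDegree ≤ k * p + m := (hMtop _ k).1
          have hb1 : (Mk + Ek).natDegree ≤ k * p + m :=
            (natDegree_add_le _ _).trans (max_le hMkn hEkn)
          have hT1 : (Polynomial.C ν * Polynomial.C a0 * a2 * (Mk + Ek)).natDegree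
              ≤ k * p + q + m := by
            refine natDegree_mul_le.trans ?_
            have : (Polynomial.C ν * Polynomial.C a0 * a2).natDegree ≤ q := by
              refine natDegree_mul_le.trans ?_
              have h2 : (Polynomial.C ν * Polynomial.C a0).natDegree ≤ 0 := by
                rw [← Polynomial.C_mul]; exact (natDegree_C _).le
              omega
            omega
          have hT2 : (Polynomial.C μ * a1 * Ek1).natDegree ≤ k * p + q + m := by
            rcases hEk1b with h0 | ⟨_, hb⟩
            · simp [h0]
            · refine natDegree_mul_le.trans ?_
              have h5 : (Polynomial.C μ * a1).natDegree ≤ p :=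
                natDegree_C_mul_le _ _
              have h6 : (k+1) * p = k * p + p := by ring
              linarith
          have hT3 : (Polynomial.C a0 * derivative (Mk + Ek)).natDegree ≤ k * p + q + m := by
            refine (natDegree_C_mul_le _ _).trans ?_
            have h7 := natDegree_derivative_le (Mk + Ek)
            omega
          have hBn : B.natDegree ≤ k * p + q + m := by
            rw [hBdef]
            exact (natDegree_sub_le _ _).trans (max_le
              ((natDegree_add_le _ _).trans (max_le hT1 hT2)) hT3)
          have h8 := (natDegree_C_mul_le (κ⁻¹) B).trans hBn
          have h9 : (k+2) * p = k * p + 2 * p := by ring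
          linarith
  
  -- helper : natDegree of C r * f for r ≠ 0
  have auxC : ∀ (r : K), r ≠ 0 → ∀ f : Polynomial K,
      (Polynomial.C r * f).natDegree = f.natDegree := by
    intro r hr f
    refine le_antisymm (natDegree_C_mul_le _ _) ?_
    have h2 : f = Polynomial.C r⁻¹ * (Polynomial.C r * f) := by
      rw [← mul_assoc, ← Polynomial.C_mul, inv_mul_cancel₀ hr, Polynomial.C_1, one_mul]
    conv_lhs => rw [h2]
    exact natDegree_C_mul_le _ _
  -- write j = j' + 1
  obtain ⟨j', rfl⟩ : ∃ j'', j = j'' + 1 := ⟨j - 1, by omega⟩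
  obtain ⟨F1, hF1, hF1b⟩ := reg1 j' (by omega)
  obtain ⟨F0, hF0, hF0b⟩ := reg1 (j'+1) le_rfl
  simp only [Nat.choose_succ_self_right] at hF1
  simp only [Nat.choose_self, Nat.cast_one, Polynomial.C_1, one_mul] at hF0
  -- the recurrence at i = j : the a1-term dies
  have h1 := heqN (j'+1) (by omega) (by omega)
  simp only [Nat.add_sub_cancel, sub_self, map_zero, zero_mul, add_zero] at h1
  rw [show j' + 1 + 1 = j' + 2 by omega] at h1
  set κ1 : K := ((j'+1 : ℕ) : K) + 1 with hκ1def
  set ν0 : K := (n : K) - ((j'+1 : ℕ) : K) + 1 with hν0def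
  have hκ1 : κ1 ≠ 0 := by
    rw [hκ1def, show ((j'+1:ℕ):K) + 1 = ((j'+2:ℕ):K) by push_cast; ring]
    exact Nat.cast_ne_zero.mpr (by omega)
  have hν0ne : ν0 ≠ 0 := by
    rw [hν0def, show (n:K) - ((j'+1:ℕ):K) + 1 = ((n - (j'+1) + 1 : ℕ) : K) by
      push_cast [Nat.cast_sub (show j'+1 ≤ n by omega)]; ring]
    exact Nat.cast_ne_zero.mpr (by omega)
  set S1 : Polynomial K := Polynomial.C (((j'+1 : ℕ) : K)) * a1 ^ j' * c 0 + F1 with hS1def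
  have hd1 : (Polynomial.C a0) ^ j' * derivative (c j') = derivative S1 := by
    rw [← hF1, ← Polynomial.C_pow, derivative_C_mul, Polynomial.C_pow]
  have E1 : Polynomial.C κ1 * ((Polynomial.C a0) ^ (j'+2) * c (j'+2))
      = Polynomial.C ν0 * Polynomial.C a0 * a2 * S1 - Polynomial.C a0 * derivative S1 := by
    calc Polynomial.C κ1 * ((Polynomial.C a0) ^ (j'+2) * c (j'+2))
        = (Polynomial.C a0) ^ (j'+1) * (Polynomial.C κ1 * Polynomial.C a0 * c (j'+2)) := by
          ring
      _ = (Polynomial.C a0) ^ (j'+1) * (Polynomial.C ν0 * a2 * c j' - derivative (c j')) := by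
          rw [h1]
      _ = Polynomial.C ν0 * Polynomial.C a0 * a2 * ((Polynomial.C a0) ^ j' * c j')
          - Polynomial.C a0 * ((Polynomial.C a0) ^ j' * derivative (c j')) := by ring
      _ = _ := by rw [hF1, hd1]
  -- degree data for S1
  have hF1n : F1.natDegree ≤ j' * p + m ∧ F1.coeff (j' * p + m) = 0 := by
    rcases hF1b with h0 | ⟨-, hb⟩
    · simp [h0]
    · have hlt : F1.natDegree < j' * p + m := by linarith
      exact ⟨hlt.le, coeff_eq_zero_of_natDegree_lt hlt⟩
  have hS1n : S1.natDegree ≤ j' * p + m := by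
    rw [hS1def]
    exact (natDegree_add_le _ _).trans (max_le (hMtop _ j').1 hF1n.1)
  have hS1c : S1.coeff (j' * p + m) = ((j'+1 : ℕ) : K) * L1 ^ j' * u := by
    rw [hS1def, coeff_add, (hMtop _ j').2, hF1n.2, add_zero]
  -- data for c (j'+2)  (this is c (j+1))
  set DY : ℕ := q + (j' * p + m) with hDYdef
  set wY : K := κ1⁻¹ * (ν0 * a0 * L2 * (((j'+1 : ℕ) : K) * L1 ^ j' * u)) with hwYdef
  have hwY : wY ≠ 0 := by
    rw [hwYdef]
    refine mul_ne_zero (inv_ne_zero hκ1) (mul_ne_zero (mul_ne_zero (mul_ne_zero hν0ne ha0) hL2)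
      (mul_ne_zero (mul_ne_zero (Nat.cast_ne_zero.mpr (by omega)) (pow_ne_zero _ hL1)) hu))
  have hR1n : (Polynomial.C ν0 * Polynomial.C a0 * a2 * S1
      - Polynomial.C a0 * derivative S1).natDegree ≤ DY := by
    refine (natDegree_sub_le _ _).trans (max_le ?_ ?_)
    · refine natDegree_mul_le.trans ?_
      have h5 : (Polynomial.C ν0 * Polynomial.C a0 * a2).natDegree ≤ q := by
        refine natDegree_mul_le.trans ?_
        have h6 : (Polynomial.C ν0 * Polynomial.C a0).natDegree ≤ 0 := by
          rw [← Polynomial.C_mul]; exact (natDegree_C _).le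
        omega
      omega
    · refine (natDegree_C_mul_le _ _).trans ?_
      have h7 := natDegree_derivative_le S1
      omega
  have hR1c : (Polynomial.C ν0 * Polynomial.C a0 * a2 * S1
      - Polynomial.C a0 * derivative S1).coeff DY
      = ν0 * a0 * L2 * (((j'+1 : ℕ) : K) * L1 ^ j' * u) := by
    rw [coeff_sub, hDYdef]
    have h5 : (Polynomial.C ν0 * Polynomial.C a0 * a2).natDegree ≤ q := by
      refine natDegree_mul_le.trans ?_
      have h6 : (Polynomial.C ν0 * Polynomial.C a0).natDegree ≤ 0 := by
        rw [← Polynomial.C_mul]; exact (natDegree_C _).le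
      omega
    rw [coeff_mul_add_eq_of_natDegree_le h5 hS1n, hS1c]
    have h8 : (Polynomial.C a0 * derivative S1).natDegree < q + (j' * p + m) := by
      refine lt_of_le_of_lt (natDegree_C_mul_le _ _) ?_
      have h9 := natDegree_derivative_le S1
      omega
    rw [coeff_eq_zero_of_natDegree_lt h8, sub_zero]
    have h10 : (Polynomial.C ν0 * Polynomial.C a0 * a2).coeff q = ν0 * a0 * L2 := by
      rw [← Polynomial.C_mul, coeff_C_mul]
      rw [hL2def, hqdef, ← coeff_natDegree (p := a2)]
    rw [h10]
  have hYfact : ((Polynomial.C a0) ^ (j'+2) * c (j'+2)).natDegree ≤ DY ∧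
      ((Polynomial.C a0) ^ (j'+2) * c (j'+2)).coeff DY = wY := by
    constructor
    · have h11 : (Polynomial.C a0) ^ (j'+2) * c (j'+2)
          = Polynomial.C κ1⁻¹ * (Polynomial.C ν0 * Polynomial.C a0 * a2 * S1
            - Polynomial.C a0 * derivative S1) := by
        rw [← E1, ← mul_assoc, ← Polynomial.C_mul, inv_mul_cancel₀ hκ1, Polynomial.C_1, one_mul]
      rw [h11]
      exact (natDegree_C_mul_le _ _).trans hR1n
    · have h12 := congrArg (fun f : Polynomial K => f.coeff DY) E1
      simp only [coeff_C_mul] at h12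
      rw [hR1c] at h12
      refine mul_left_cancel₀ hκ1 ?_
      rw [h12, hwYdef, mul_inv_cancel_left₀ hκ1]
  have hc2n : (c (j'+2)).natDegree ≤ DY ∧ (c (j'+2)).coeff DY ≠ 0 := by
    have he : (Polynomial.C a0) ^ (j'+2) * c (j'+2)
        = Polynomial.C (a0 ^ (j'+2)) * c (j'+2) := by rw [Polynomial.C_pow]
    have hpane : a0 ^ (j'+2) ≠ 0 := pow_ne_zero _ ha0
    constructor
    · have := hYfact.1
      rw [he, auxC _ hpane] at this
      exact this
    · have h13 := hYfact.2
      rw [he, coeff_C_mul] at h13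
      intro h0
      rw [h0, mul_zero] at h13
      exact hwY h13.symm
  have hc2exact : (c (j'+2)).natDegree = DY :=
    le_antisymm hc2n.1 (le_natDegree_of_ne_zero hc2n.2)
  -- Case A : j + 1 = n
  by_cases hA : j' + 2 = n
  · rw [hA] at hc2exact
    rw [hcn0] at hc2exact
    have : 1 ≤ DY := le_trans hq1 (Nat.le_add_right _ _)
    omega
  have hBC : j' + 3 ≤ n := by omega
  -- the recurrence at i = j+1
  have h2 := heqN (j'+2) (by omega) (by omega)
  rw [show j' + 2 - 1 = j' + 1 by omega, show j' + 2 + 1 = j' + 3 by omega,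
    show ((j'+1 : ℕ) : K) - ((j'+2 : ℕ) : K) = -1 by push_cast; ring] at h2
  simp only [map_neg, map_one, neg_one_mul] at h2
  set κ2 : K := ((j'+2 : ℕ) : K) + 1 with hκ2def
  set ν1 : K := (n : K) - ((j'+2 : ℕ) : K) + 1 with hν1def
  have hκ2 : κ2 ≠ 0 := by
    rw [hκ2def, show ((j'+2:ℕ):K) + 1 = ((j'+3:ℕ):K) by push_cast; ring]
    exact Nat.cast_ne_zero.mpr (by omega)
  set S0 : Polynomial K := a1 ^ (j'+1) * c 0 + F0 with hS0def
  have hd0 : (Polynomial.C a0) ^ (j'+1) * derivative (c (j'+1)) = derivative S0 := by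
    rw [← hF0, ← Polynomial.C_pow, derivative_C_mul, Polynomial.C_pow]
  have E2 : Polynomial.C κ2 * ((Polynomial.C a0) ^ (j'+3) * c (j'+3))
      = Polynomial.C ν1 * Polynomial.C a0 * a2 * S0
        - a1 * ((Polynomial.C a0) ^ (j'+2) * c (j'+2))
        - Polynomial.C a0 * derivative S0 := by
    calc Polynomial.C κ2 * ((Polynomial.C a0) ^ (j'+3) * c (j'+3))
        = (Polynomial.C a0) ^ (j'+2) * (Polynomial.C κ2 * Polynomial.C a0 * c (j'+3)) := by
          ring
      _ = (Polynomial.C a0) ^ (j'+2) * (Polynomial.C ν1 * a2 * c (j'+1)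
            - a1 * c (j'+2) - derivative (c (j'+1))) := by rw [h2]; ring
      _ = Polynomial.C ν1 * Polynomial.C a0 * a2 * ((Polynomial.C a0) ^ (j'+1) * c (j'+1))
          - a1 * ((Polynomial.C a0) ^ (j'+2) * c (j'+2))
          - Polynomial.C a0 * ((Polynomial.C a0) ^ (j'+1) * derivative (c (j'+1))) := by ring
      _ = _ := by rw [hF0, hd0]
  -- degree data for S0
  have hF0n : F0.natDegree ≤ (j'+1) * p + m ∧ F0.coeff ((j'+1) * p + m) = 0 := by
    rcases hF0b with h0 | ⟨-, hb⟩
    · simp [h0]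
    · have hlt : F0.natDegree < (j'+1) * p + m := by linarith
      exact ⟨hlt.le, coeff_eq_zero_of_natDegree_lt hlt⟩
  have hS0n : S0.natDegree ≤ (j'+1) * p + m := by
    rw [hS0def]
    refine (natDegree_add_le _ _).trans (max_le ?_ hF0n.1)
    exact natDegree_mul_le.trans (by have := (hpow (j'+1)).1; omega)
  have hS0c : S0.coeff ((j'+1) * p + m) = L1 ^ (j'+1) * u := by
    rw [hS0def, coeff_add, hF0n.2, add_zero,
      coeff_mul_add_eq_of_natDegree_le (hpow (j'+1)).1.le (le_refl m), (hpow (j'+1)).2]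
    rw [hudef, ← coeff_natDegree]
  -- junction : compute the degree D of c (j'+3), by cases on n = 2j or not
  have junction : ∃ D : ℕ, 1 ≤ D ∧ (c (j'+3)).natDegree = D ∧ c (j'+3) ≠ 0 ∧
      (c (j'+2)).natDegree + q + 1 ≤ D + p := by
    have hca1 : a1.coeff p = L1 := coeff_natDegree
    by_cases hn2j : n = 2 * (j' + 1)
    · -- n = 2j : hard case
      have hj'1 : 1 ≤ j' := by omega
      have h31 : 2 * p ≤ (j'+1) * p := Nat.mul_le_mul_right p (by omega)
      have e1 : (j'+1) * p = j' * p + p := by ring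
      obtain ⟨T, hT⟩ : ∃ T, (j'+1) * p + m = T + 1 := ⟨(j'+1)*p + m - 1, by omega⟩
      have hderpow : a1 * derivative (a1 ^ j')
          = Polynomial.C ((j' : ℕ) : K) * a1 ^ j' * derivative a1 := by
        obtain ⟨t, rfl⟩ : ∃ t, j' = t + 1 := ⟨j' - 1, by omega⟩
        rw [derivative_pow]
        simp only [Nat.add_sub_cancel]
        ring
      have hdp1 : derivative (a1 ^ (j'+1))
          = Polynomial.C ((j'+1 : ℕ) : K) * a1 ^ j' * derivative a1 := by
        rw [derivative_pow]
        simp only [Nat.add_sub_cancel]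
      have hν1C : ν1 = ((j'+1 : ℕ) : K) := by rw [hν1def]; push_cast [hn2j]; ring
      have hν0C : ν0 = κ1 := by rw [hν0def, hκ1def]; push_cast [hn2j]; ring
      have hdS0 : derivative S0 = Polynomial.C ((j'+1 : ℕ) : K) * a1 ^ j' * derivative a1 * c 0
          + a1 ^ (j'+1) * derivative (c 0) + derivative F0 := by
        rw [hS0def, derivative_add, derivative_mul, hdp1]
      have hdS1 : a1 * derivative S1
          = Polynomial.C ((j'+1 : ℕ) : K)
              * (Polynomial.C ((j' : ℕ) : K) * a1 ^ j' * derivative a1 * c 0)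
            + Polynomial.C ((j'+1 : ℕ) : K) * (a1 ^ (j'+1) * derivative (c 0))
            + a1 * derivative F1 := by
        rw [hS1def, derivative_add, derivative_mul, derivative_C_mul]
        linear_combination (Polynomial.C ((j'+1 : ℕ) : K) * c 0) * hderpow
      have hCκ1 : (Polynomial.C κ1 : Polynomial K) = ((j'+1 : ℕ) : Polynomial K) + 1 := by
        rw [hκ1def, map_add, map_one, Polynomial.C_eq_natCast]
      set G : Polynomial K :=
        Polynomial.C κ1 * a2 * (Polynomial.C ((j'+1 : ℕ) : K) * F0 - a1 * F1)
        + a1 * derivative F1 - Polynomial.C κ1 * derivative F0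
        - Polynomial.C ((2*(j'+1) : ℕ) : K) * (a1 ^ j' * derivative a1 * c 0)
        - a1 ^ (j'+1) * derivative (c 0) with hGdef
      have master : Polynomial.C κ1 * (Polynomial.C κ2 * ((Polynomial.C a0) ^ (j'+3) * c (j'+3)))
          = Polynomial.C a0 * G := by
        calc Polynomial.C κ1 * (Polynomial.C κ2 * ((Polynomial.C a0) ^ (j'+3) * c (j'+3)))
            = Polynomial.C κ1 * (Polynomial.C ν1 * Polynomial.C a0 * a2 * S0
              - a1 * ((Polynomial.C a0) ^ (j'+2) * c (j'+2))
              - Polynomial.C a0 * derivative S0) := by rw [E2]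
          _ = Polynomial.C ν1 * Polynomial.C κ1 * Polynomial.C a0 * a2 * S0
              - a1 * (Polynomial.C κ1 * ((Polynomial.C a0) ^ (j'+2) * c (j'+2)))
              - Polynomial.C κ1 * Polynomial.C a0 * derivative S0 := by ring
          _ = Polynomial.C ν1 * Polynomial.C κ1 * Polynomial.C a0 * a2 * S0
              - a1 * (Polynomial.C ν0 * Polynomial.C a0 * a2 * S1
                - Polynomial.C a0 * derivative S1)
              - Polynomial.C κ1 * Polynomial.C a0 * derivative S0 := by rw [E1]
          _ = Polynomial.C a0 * (Polynomial.C ν1 * Polynomial.C κ1 * (a2 * S0)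
              - Polynomial.C ν0 * (a2 * (a1 * S1)) + a1 * derivative S1
              - Polynomial.C κ1 * derivative S0) := by ring
          _ = Polynomial.C a0 * G := by
              rw [hν1C, hν0C, hdS1, hdS0, hS0def, hS1def, hGdef, hCκ1]
              simp only [Polynomial.C_eq_natCast]
              push_cast
              ring
      -- degree and top coefficient of G
      have hg1 : (Polynomial.C κ1 * a2 * (Polynomial.C ((j'+1 : ℕ) : K) * F0 - a1 * F1)).natDegree
          + 1 ≤ T := by
        have hx : (Polynomial.C ((j'+1 : ℕ) : K) * F0).natDegree + 2*p ≤ (j'+1)*p + q + m := by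
          rcases hF0b with h0 | ⟨-, hb⟩
          · simp only [h0, mul_zero, natDegree_zero, zero_add]; omega
          · have := natDegree_C_mul_le ((j'+1 : ℕ) : K) F0
            omega
        have hy : (a1 * F1).natDegree + 2*p ≤ (j'+1)*p + q + m := by
          rcases hF1b with h0 | ⟨-, hb⟩
          · simp only [h0, mul_zero, natDegree_zero, zero_add]; omega
          · have := natDegree_mul_le (p := a1) (q := F1)
            omega
        have hz : (Polynomial.C κ1 * a2).natDegree ≤ q := natDegree_C_mul_le _ _
        have hw := natDegree_mul_le (p := Polynomial.C κ1 * a2)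
          (q := Polynomial.C ((j'+1 : ℕ) : K) * F0 - a1 * F1)
        have hv := natDegree_sub_le (Polynomial.C ((j'+1 : ℕ) : K) * F0) (a1 * F1)
        omega
      have hg2 : (a1 * derivative F1).natDegree + 1 ≤ T := by
        rcases hF1b with h0 | ⟨-, hb⟩
        · simp only [h0, derivative_zero, mul_zero, natDegree_zero]; omega
        · have h40 := natDegree_derivative_le F1
          have h41 := natDegree_mul_le (p := a1) (q := derivative F1)
          omega
      have hg3 : (Polynomial.C κ1 * derivative F0).natDegree + 1 ≤ T := by
        rcases hF0b with h0 | ⟨-, hb⟩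
        · simp only [h0, derivative_zero, mul_zero, natDegree_zero]; omega
        · have h42 := natDegree_derivative_le F0
          have h43 := natDegree_C_mul_le κ1 (derivative F0)
          omega
      have hda1 : (derivative a1).natDegree ≤ p - 1 := natDegree_derivative_le a1
      have hg4n : (Polynomial.C ((2*(j'+1) : ℕ) : K)
          * (a1 ^ j' * derivative a1 * c 0)).natDegree ≤ T := by
        refine (natDegree_C_mul_le _ _).trans ?_
        have h44 := natDegree_mul_le (p := a1 ^ j' * derivative a1) (q := c 0)
        have h45 := natDegree_mul_le (p := a1 ^ j') (q := derivative a1)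
        have h46 := (hpow j').1
        omega
      have hg4c : (Polynomial.C ((2*(j'+1) : ℕ) : K)
          * (a1 ^ j' * derivative a1 * c 0)).coeff T
          = ((2*(j'+1) : ℕ) : K) * (L1 ^ j' * (L1 * (p : K)) * u) := by
        rw [coeff_C_mul]
        have hsplit : T = (j' * p + (p - 1)) + m := by omega
        rw [hsplit]
        rw [coeff_mul_add_eq_of_natDegree_le (natDegree_mul_le.trans (by
          have := (hpow j').1; omega)) (le_refl m)]
        rw [coeff_mul_add_eq_of_natDegree_le (hpow j').1.le hda1]
        rw [(hpow j').2]
        have hcd : (derivative a1).coeff (p - 1) = L1 * (p : K) := by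
          rw [coeff_derivative, show p - 1 + 1 = p by omega, hca1]
          have : ((p - 1 : ℕ) : K) + 1 = (p : K) := by
            push_cast [Nat.cast_sub (show 1 ≤ p by omega)]; ring
          rw [this]
        rw [hcd, hudef, ← coeff_natDegree]
      have hg5 : (a1 ^ (j'+1) * derivative (c 0)).natDegree ≤ T ∧
          (a1 ^ (j'+1) * derivative (c 0)).coeff T = L1 ^ (j'+1) * ((m : K) * u) := by
        rcases Nat.eq_zero_or_pos m with hm0 | hm1
        · have hdc0 : derivative (c 0) = 0 := by
            have := Polynomial.eq_C_of_natDegree_eq_zero (hmdef ▸ hm0 : (c 0).natDegree = 0)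
            rw [this, derivative_C]
          rw [hdc0, mul_zero]
          simp [hm0]
        · constructor
          · have h47 := natDegree_derivative_le (c 0)
            have h48 := natDegree_mul_le (p := a1 ^ (j'+1)) (q := derivative (c 0))
            have h49 := (hpow (j'+1)).1
            omega
          · have hsplit : T = (j'+1) * p + (m - 1) := by omega
            rw [hsplit, coeff_mul_add_eq_of_natDegree_le (hpow (j'+1)).1.le
              (by have := natDegree_derivative_le (c 0); omega), (hpow (j'+1)).2]
            have hcd : (derivative (c 0)).coeff (m - 1) = (m : K) * u := by
              rw [coeff_derivative, show m - 1 + 1 = m by omega]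
              have h50 : (c 0).coeff m = u := coeff_natDegree
              rw [h50]
              have : ((m - 1 : ℕ) : K) + 1 = (m : K) := by
                push_cast [Nat.cast_sub (show 1 ≤ m by omega)]; ring
              rw [this]
              ring
            rw [hcd]
      have hGn : G.natDegree ≤ T := by
        rw [hGdef]
        refine (natDegree_sub_le _ _).trans (max_le ((natDegree_sub_le _ _).trans
          (max_le ((natDegree_sub_le _ _).trans (max_le ((natDegree_add_le _ _).trans
          (max_le (by omega) (by omega))) (by omega))) hg4n)) hg5.1)
      have hGc : G.coeff T = -(L1 ^ (j'+1) * u * ((2*(j'+1)*p + m : ℕ) : K)) := by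
        rw [hGdef]
        rw [coeff_sub, coeff_sub, coeff_sub, coeff_add]
        rw [coeff_eq_zero_of_natDegree_lt (by omega), coeff_eq_zero_of_natDegree_lt (by omega),
          coeff_eq_zero_of_natDegree_lt (by omega), hg4c, hg5.2]
        push_cast
        ring
      have hvG : L1 ^ (j'+1) * u * ((2*(j'+1)*p + m : ℕ) : K) ≠ 0 := by
        refine mul_ne_zero (mul_ne_zero (pow_ne_zero _ hL1) hu) (Nat.cast_ne_zero.mpr ?_)
        have h33 : 2*1*2 ≤ 2*(j'+1)*p := Nat.mul_le_mul (Nat.mul_le_mul_left 2 (by omega)) hp2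
        omega
      -- transfer to c (j'+3)
      have hZn : ((Polynomial.C a0) ^ (j'+3) * c (j'+3)).natDegree ≤ T := by
        have hZeq : (Polynomial.C a0) ^ (j'+3) * c (j'+3)
            = Polynomial.C κ2⁻¹ * (Polynomial.C κ1⁻¹ * (Polynomial.C a0 * G)) := by
          have h52 : Polynomial.C κ1⁻¹ * (Polynomial.C a0 * G)
              = Polynomial.C κ2 * ((Polynomial.C a0) ^ (j'+3) * c (j'+3)) := by
            rw [← master, ← mul_assoc, ← Polynomial.C_mul, inv_mul_cancel₀ hκ1, Polynomial.C_1,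
              one_mul]
          rw [h52, ← mul_assoc, ← Polynomial.C_mul, inv_mul_cancel₀ hκ2, Polynomial.C_1, one_mul]
        rw [hZeq]
        exact (natDegree_C_mul_le _ _).trans ((natDegree_C_mul_le _ _).trans
          ((natDegree_C_mul_le _ _).trans hGn))
      have hZc : ((Polynomial.C a0) ^ (j'+3) * c (j'+3)).coeff T ≠ 0 := by
        have h51 := congrArg (fun f : Polynomial K => f.coeff T) master
        simp only [coeff_C_mul] at h51
        rw [hGc] at h51
        intro h0
        rw [h0, mul_zero, mul_zero] at h51
        have : a0 * -(L1 ^ (j'+1) * u * ((2*(j'+1)*p + m : ℕ) : K)) ≠ 0 :=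
          mul_ne_zero ha0 (neg_ne_zero.mpr hvG)
        exact this h51.symm
      have he : (Polynomial.C a0) ^ (j'+3) * c (j'+3)
          = Polynomial.C (a0 ^ (j'+3)) * c (j'+3) := by rw [Polynomial.C_pow]
      have hpane : a0 ^ (j'+3) ≠ 0 := pow_ne_zero _ ha0
      refine ⟨T, by omega, ?_, ?_, ?_⟩
      · refine le_antisymm ?_ (le_natDegree_of_ne_zero ?_)
        · have := hZn; rw [he, auxC _ hpane] at this; exact this
        · intro h0
          rw [he, coeff_C_mul, h0, mul_zero] at hZc
          exact hZc rfl
      · intro h0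
        rw [he, h0, mul_zero] at hZc
        exact hZc (coeff_zero T)
      · rw [hc2exact, hDYdef]
        omega
    · -- n ≠ 2j : leading coefficients do not cancel at i = j+1
      have hkey : ν1 * κ1 - ν0 * ((j'+1 : ℕ) : K) ≠ 0 := by
        rw [show ν1 * κ1 - ν0 * ((j'+1 : ℕ) : K) = (n : K) - ((2*(j'+1) : ℕ) : K) by
          rw [hν1def, hκ1def, hν0def]; push_cast; ring]
        exact sub_ne_zero.mpr (fun hcc => hn2j (Nat.cast_injective hcc))
      set w2 : K := ν1 * a0 * L2 * (L1 ^ (j'+1) * u) - L1 * wY with hw2def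
      have hw2 : w2 ≠ 0 := by
        rw [hw2def, show ν1 * a0 * L2 * (L1 ^ (j'+1) * u) - L1 * wY
            = (a0 * L2 * L1 ^ (j'+1) * u * κ1⁻¹) * (ν1 * κ1 - ν0 * ((j'+1 : ℕ) : K)) by
          rw [hwYdef]; field_simp; ring]
        exact mul_ne_zero (mul_ne_zero (mul_ne_zero (mul_ne_zero (mul_ne_zero ha0 hL2)
          (pow_ne_zero _ hL1)) hu) (inv_ne_zero hκ1)) hkey
      have h5 : (Polynomial.C ν1 * Polynomial.C a0 * a2).natDegree ≤ q := by
        refine natDegree_mul_le.trans ?_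
        have h6 : (Polynomial.C ν1 * Polynomial.C a0).natDegree ≤ 0 := by
          rw [← Polynomial.C_mul]; exact (natDegree_C _).le
        omega
      have hTB : q + ((j'+1) * p + m) = p + DY := by rw [hDYdef]; ring
      have hR2n : (Polynomial.C ν1 * Polynomial.C a0 * a2 * S0
          - a1 * ((Polynomial.C a0) ^ (j'+2) * c (j'+2))
          - Polynomial.C a0 * derivative S0).natDegree ≤ q + ((j'+1) * p + m) := by
        refine (natDegree_sub_le _ _).trans (max_le ((natDegree_sub_le _ _).trans
          (max_le ?_ ?_)) ?_)
        · exact natDegree_mul_le.trans (by omega)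
        · rw [hTB]
          exact natDegree_mul_le.trans (add_le_add (le_refl p) hYfact.1)
        · refine (natDegree_C_mul_le _ _).trans ?_
          have h7 := natDegree_derivative_le S0
          omega
      have hR2c : (Polynomial.C ν1 * Polynomial.C a0 * a2 * S0
          - a1 * ((Polynomial.C a0) ^ (j'+2) * c (j'+2))
          - Polynomial.C a0 * derivative S0).coeff (q + ((j'+1) * p + m)) = w2 := by
        rw [coeff_sub, coeff_sub]
        rw [coeff_mul_add_eq_of_natDegree_le h5 hS0n, hS0c]
        have h10 : (Polynomial.C ν1 * Polynomial.C a0 * a2).coeff q = ν1 * a0 * L2 := by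
          rw [← Polynomial.C_mul, coeff_C_mul]
          rw [hL2def, hqdef, ← coeff_natDegree (p := a2)]
        rw [h10]
        have h11 : (a1 * ((Polynomial.C a0) ^ (j'+2) * c (j'+2))).coeff (q + ((j'+1) * p + m))
            = L1 * wY := by
          rw [hTB, coeff_mul_add_eq_of_natDegree_le (le_refl p) hYfact.1, hca1, hYfact.2]
        rw [h11]
        have h12 : (Polynomial.C a0 * derivative S0).natDegree < q + ((j'+1) * p + m) := by
          refine lt_of_le_of_lt (natDegree_C_mul_le _ _) ?_
          have h13 := natDegree_derivative_le S0
          omega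
        rw [coeff_eq_zero_of_natDegree_lt h12, sub_zero, hw2def]
      refine ⟨q + ((j'+1) * p + m), le_trans hq1 (Nat.le_add_right _ _), ?_, ?_, ?_⟩
      · -- natDegree of c (j'+3)
        have hZc := congrArg (fun f : Polynomial K => f.coeff (q + ((j'+1) * p + m))) E2
        simp only [coeff_C_mul] at hZc
        rw [hR2c] at hZc
        have hZn : ((Polynomial.C a0) ^ (j'+3) * c (j'+3)).natDegree ≤ q + ((j'+1) * p + m) := by
          have h14 : (Polynomial.C a0) ^ (j'+3) * c (j'+3)
              = Polynomial.C κ2⁻¹ * (Polynomial.C ν1 * Polynomial.C a0 * a2 * S0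
                - a1 * ((Polynomial.C a0) ^ (j'+2) * c (j'+2))
                - Polynomial.C a0 * derivative S0) := by
            rw [← E2, ← mul_assoc, ← Polynomial.C_mul, inv_mul_cancel₀ hκ2, Polynomial.C_1,
              one_mul]
          rw [h14]
          exact (natDegree_C_mul_le _ _).trans hR2n
        have hZcc : ((Polynomial.C a0) ^ (j'+3) * c (j'+3)).coeff (q + ((j'+1) * p + m)) ≠ 0 := by
          intro h0
          rw [h0, mul_zero] at hZc
          exact hw2 hZc.symm
        have he : (Polynomial.C a0) ^ (j'+3) * c (j'+3)
            = Polynomial.C (a0 ^ (j'+3)) * c (j'+3) := by rw [Polynomial.C_pow]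
        have hpane : a0 ^ (j'+3) ≠ 0 := pow_ne_zero _ ha0
        refine le_antisymm ?_ (le_natDegree_of_ne_zero ?_)
        · have := hZn; rw [he, auxC _ hpane] at this; exact this
        · intro h0
          rw [he, coeff_C_mul, h0, mul_zero] at hZcc
          exact hZcc rfl
      · -- c (j'+3) ≠ 0
        intro h0
        have hZc := congrArg (fun f : Polynomial K => f.coeff (q + ((j'+1) * p + m))) E2
        simp only [coeff_C_mul] at hZc
        rw [hR2c, h0] at hZc
        simp only [mul_zero, coeff_zero] at hZc
        exact hw2 hZc.symm
      · -- the inequality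
        rw [hc2exact, hDYdef]
        have h15 : (j'+1) * p = j' * p + p := by ring
        linarith
  clear E1 E2 hR1n hR1c hYfact hS1n hS1c hS0n hS0c hd0 hd1 h1 h2
  obtain ⟨D, hD1, hDc3, hc3ne, hineq⟩ := junction
  -- Region 3 : degrees now grow by p at each step
  have reg3 : ∀ k : ℕ, j'+3+k ≤ n → (c (j'+3+k)).natDegree = D + k * p ∧ c (j'+3+k) ≠ 0 ∧
      (c (j'+2+k)).natDegree + q + 1 ≤ (D + k * p) + p := by
    intro k
    induction k with
    | zero =>
      intro _
      exact ⟨by simpa using hDc3, by simpa using hc3ne, by simpa using hineq⟩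
    | succ k IH =>
      intro hk
      obtain ⟨ha, hb, hcq⟩ := IH (by omega)
      have h3 := heqN (j'+3+k) (by omega) (by omega)
      rw [show j'+3+k - 1 = j'+2+k by omega, show j'+3+k+1 = j'+3+(k+1) by omega] at h3
      -- the dominant middle term
      have hμ3 : ((j'+1 : ℕ) : K) - ((j'+3+k : ℕ) : K) ≠ 0 := by
        rw [show ((j'+1 : ℕ) : K) - ((j'+3+k : ℕ) : K) = -(((k+2 : ℕ) : K)) by push_cast; ring]
        simp only [ne_eq, neg_eq_zero]
        exact Nat.cast_ne_zero.mpr (by omega)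
      have hmainn : (Polynomial.C (((j'+1 : ℕ) : K) - ((j'+3+k : ℕ) : K))
          * (a1 * c (j'+3+k))).natDegree = p + (D + k * p) := by
        rw [auxC _ hμ3, natDegree_mul ha1 hb, ha]
      have hmainne : Polynomial.C (((j'+1 : ℕ) : K) - ((j'+3+k : ℕ) : K))
          * (a1 * c (j'+3+k)) ≠ 0 := by
        refine mul_ne_zero (Polynomial.C_ne_zero.mpr hμ3) (mul_ne_zero ha1 hb)
      have hb2 : (Polynomial.C ((n:K) - ((j'+3+k : ℕ) : K) + 1) * a2 * c (j'+2+k)).natDegree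
          ≤ q + (c (j'+2+k)).natDegree := by
        refine natDegree_mul_le.trans ?_
        have h20 := natDegree_C_mul_le ((n:K) - ((j'+3+k : ℕ) : K) + 1) a2
        omega
      have hb3 : (derivative (c (j'+2+k))).natDegree ≤ q + (c (j'+2+k)).natDegree := by
        have h21 := natDegree_derivative_le (c (j'+2+k))
        omega
      have hrest : (Polynomial.C ((n:K) - ((j'+3+k : ℕ) : K) + 1) * a2 * c (j'+2+k)
          - derivative (c (j'+2+k))).natDegree
          < (Polynomial.C (((j'+1 : ℕ) : K) - ((j'+3+k : ℕ) : K))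
            * (a1 * c (j'+3+k))).natDegree := by
        rw [hmainn]
        refine lt_of_le_of_lt ((natDegree_sub_le _ _).trans (max_le hb2 hb3)) ?_
        linarith
      have hsum := aux_dom hmainne hrest
      have hre : Polynomial.C ((n:K) - ((j'+3+k : ℕ) : K) + 1) * a2 * c (j'+2+k)
          + Polynomial.C (((j'+1 : ℕ) : K) - ((j'+3+k : ℕ) : K)) * (a1 * c (j'+3+k))
          - derivative (c (j'+2+k))
          = Polynomial.C (((j'+1 : ℕ) : K) - ((j'+3+k : ℕ) : K)) * (a1 * c (j'+3+k))
            + (Polynomial.C ((n:K) - ((j'+3+k : ℕ) : K) + 1) * a2 * c (j'+2+k)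
              - derivative (c (j'+2+k))) := by ring
      rw [hre] at h3
      have hsc : (((j'+3+k : ℕ) : K) + 1) * a0 ≠ 0 := by
        refine mul_ne_zero ?_ ha0
        rw [show ((j'+3+k:ℕ):K) + 1 = ((j'+4+k:ℕ):K) by push_cast; ring]
        exact Nat.cast_ne_zero.mpr (by omega)
      have hl : Polynomial.C (((j'+3+k : ℕ) : K) + 1) * Polynomial.C a0 * c (j'+3+(k+1))
          = Polynomial.C ((((j'+3+k : ℕ) : K) + 1) * a0) * c (j'+3+(k+1)) := by
        rw [Polynomial.C_mul]
      have hne : c (j'+3+(k+1)) ≠ 0 := by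
        intro h0
        rw [h0, mul_zero] at h3
        exact hsum.1 h3.symm
      have hnd : (c (j'+3+(k+1))).natDegree = p + (D + k * p) := by
        have h14 := congrArg Polynomial.natDegree h3
        rw [hl, auxC _ hsc, hsum.2, hmainn] at h14
        exact h14
      refine ⟨?_, hne, ?_⟩
      · rw [hnd]; ring
      · rw [show j'+2+(k+1) = j'+3+k by omega, ha]
        have h22 : (k+1) * p = k * p + p := by ring
        linarith
  obtain ⟨hdn, -, -⟩ := reg3 (n - (j'+3)) (by omega)
  rw [show j'+3+(n-(j'+3)) = n by omega] at hdn
  rw [hcn0] at hdn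
  have : 1 ≤ D + (n - (j'+3)) * p := le_trans hD1 (Nat.le_add_right _ _)
  omega
end

section
/- Let K be a field of characteristic zero, a1(x), a2(x) ∈ K[x] with deg a1(x) ≥ 1 and deg a2(x) ≥ 1, and a0 ∈ K* a nonzero constant. Let D = y∂x + (a2(x)y² + a1(x)y + a0)∂y be the K-derivation of K[x,y]. Suppose F(x,y) = Σ_{i=0}^n c_i(x)y^i ∉ K, with c_n(x) ≠ 0, c_i(x) ∈ K[x] and n ≥ 2, is a Darboux polynomial of D satisfying D(F) = Λ(x,y)·F for some Λ(x,y) ∈ K[x,y], and write Λ(x,y) = n·a2(x)·y + d0(x) with d0(x) ∈ K[x] (as is always possible). Then d0(x) is a nonzero constant (d0(x) ∈ K*) and c_1(x)c_0(x) ≠ 0. -/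
open Polynomial

section DarbouxAux
set_option linter.unusedSectionVars false

variable {K : Type*} [Field K] [CharZero K]




theorem aux_sub_small (u v : K[X]) (hu : u ≠ 0) (h : v.degree < u.degree) :
    u - v ≠ 0 ∧ (u - v).natDegree = u.natDegree ∧ (u - v).leadingCoeff = u.leadingCoeff := by
  have hd : (u - v).degree = u.degree := degree_sub_eq_left_of_degree_lt h
  have hne : u - v ≠ 0 := by
    intro h0
    rw [h0, degree_zero] at hd
    exact hu (degree_eq_bot.mp hd.symm)
  refine ⟨hne, natDegree_eq_of_degree_eq hd, ?_⟩
  have : u - v = -v + u := by ring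
  rw [this, leadingCoeff_add_of_degree_lt (by rwa [degree_neg])]

theorem aux_diff_small (v u : K[X]) (hu : u ≠ 0) (h : v.degree < u.degree) :
    v - u ≠ 0 ∧ (v - u).natDegree = u.natDegree ∧ (v - u).leadingCoeff = -u.leadingCoeff := by
  obtain ⟨h1, h2, h3⟩ := aux_sub_small u v hu h
  have e : v - u = -(u - v) := by ring
  rw [e]
  refine ⟨neg_ne_zero.mpr h1, by rw [natDegree_neg, h2], by rw [leadingCoeff_neg, h3]⟩

theorem aux_add_small (v u : K[X]) (hu : u ≠ 0) (h : v.degree < u.degree) :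
    v + u ≠ 0 ∧ (v + u).natDegree = u.natDegree ∧ (v + u).leadingCoeff = u.leadingCoeff := by
  obtain ⟨h1, h2, h3⟩ := aux_sub_small u (-v) hu (by rwa [degree_neg])
  have e : v + u = u - (-v) := by ring
  rw [e]
  exact ⟨h1, h2, h3⟩

theorem aux_dom_s7 (s : K) (hs : s ≠ 0) (q p : K[X]) (hq : 1 ≤ q.degree) (hp : p ≠ 0) :
    C s * (q * p) - derivative p ≠ 0 ∧
    (C s * (q * p) - derivative p).natDegree = q.natDegree + p.natDegree ∧
    (C s * (q * p) - derivative p).leadingCoeff = s * (q.leadingCoeff * p.leadingCoeff) := by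
  have hq0 : q ≠ 0 := by rintro rfl; simp at hq
  have hu0 : C s * (q * p) ≠ 0 := mul_ne_zero (by simpa using hs) (mul_ne_zero hq0 hp)
  have hlt : (derivative p).degree < (C s * (q * p)).degree := by
    calc (derivative p).degree < p.degree := degree_derivative_lt hp
    _ ≤ q.degree + p.degree := le_add_of_nonneg_left (le_trans (by norm_num) hq)
    _ = (C s * (q * p)).degree := by rw [degree_C_mul hs, degree_mul]
  obtain ⟨h1, h2, h3⟩ := aux_sub_small (C s * (q * p)) (derivative p) hu0 hlt
  refine ⟨h1, ?_, ?_⟩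
  · rw [h2, natDegree_C_mul hs, natDegree_mul hq0 hp]
  · rw [h3, leadingCoeff_mul, leadingCoeff_mul, leadingCoeff_C]

theorem aux_step (s : K) (hs : s ≠ 0) (a2 p w : K[X]) (ha2 : 1 ≤ a2.degree)
    (hE : C s * (a2 * p) - derivative p = w) (hw : w ≠ 0) :
    p ≠ 0 ∧ p.natDegree + a2.natDegree = w.natDegree ∧
      s * (a2.leadingCoeff * p.leadingCoeff) = w.leadingCoeff := by
  have hp : p ≠ 0 := by
    rintro rfl
    rw [mul_zero, mul_zero, derivative_zero, sub_zero] at hE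
    exact hw hE.symm
  obtain ⟨-, h2, h3⟩ := aux_dom_s7 s hs a2 p ha2 hp
  rw [hE] at h2 h3
  exact ⟨hp, by omega, h3.symm⟩

theorem topStepGlue (s : K) (hs : s ≠ 0) (a2 p : K[X]) (ha2 : 1 ≤ a2.degree)
    (v u : K[X]) (hu : u ≠ 0)
    (hE : C s * (a2 * p) - derivative p = v - u)
    (hvu : v.degree < u.degree) :
    p ≠ 0 ∧ p.natDegree + a2.natDegree = u.natDegree ∧
      s * (a2.leadingCoeff * p.leadingCoeff) = -u.leadingCoeff := by
  obtain ⟨hw, hwd, hwl⟩ := aux_diff_small v u hu hvu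
  obtain ⟨h1, h2, h3⟩ := aux_step s hs a2 p _ ha2 hE hw
  exact ⟨h1, by omega, by rw [h3, hwl]⟩

/-- The downward chain on coefficients `b (n-j)`. -/
theorem chainTop (a2 : K[X]) (ha2 : 1 ≤ a2.degree) (a0 : K) (ha0 : a0 ≠ 0)
    (b g : ℕ → K[X]) (n : ℕ)
    (E : ∀ k : ℕ, C ((n:K) - (k:K)) * (a2 * b k) - derivative (b k)
        = C (((k+2:ℕ)):K) * (C a0 * b (k+2)) - g (k+1) * b (k+1))
    (hbn0 : b n ≠ 0) (hbn : (b n).natDegree = 0) (hbtop : b (n+1) = 0)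
    (γ : ℕ) (hγ : 1 ≤ γ)
    (J : ℕ) (hJ1 : 1 ≤ J) (hJn : J ≤ n)
    (hgn : g n ≠ 0) (t : ℕ) (ht : (g n).natDegree = t) (htγ : t ≤ γ)
    (hgood : ∀ m, n - J < m → m < n → g m ≠ 0 ∧ (g m).natDegree = γ) :
    ∀ j, 1 ≤ j → j ≤ J → b (n-j) ≠ 0 ∧
      (b (n-j)).natDegree + j * a2.natDegree = t + (j-1) * γ ∧
      ((n:K) - ((n-j : ℕ):K)) * (a2.leadingCoeff * (b (n-j)).leadingCoeff)
        = -((g (n-j+1)).leadingCoeff * (b (n-j+1)).leadingCoeff) := by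
  intro j
  induction j using Nat.strong_induction_on with
  | _ j IH =>
    intro hj1 hjJ
    have hs : (n:K) - ((n-j : ℕ):K) ≠ 0 :=
      sub_ne_zero_of_ne (fun h => by have := Nat.cast_injective h; omega)
    rcases Nat.eq_or_lt_of_le hj1 with h1 | hj2
    · -- j = 1
      subst h1
      have e1 : n - 1 + 1 = n := by omega
      have e2 : n - 1 + 2 = n + 1 := by omega
      have hE1 := E (n-1)
      rw [e1, e2, hbtop, mul_zero, mul_zero, zero_sub] at hE1
      have hE1' : C ((n:K) - ((n-1 : ℕ):K)) * (a2 * b (n-1)) - derivative (b (n-1))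
          = 0 - g n * b n := by rw [zero_sub]; exact hE1
      have hu : g n * b n ≠ 0 := mul_ne_zero hgn hbn0
      obtain ⟨hp, hd, hl⟩ := topStepGlue _ hs a2 _ ha2 _ _ hu hE1'
        (by rw [degree_zero]; exact bot_lt_iff_ne_bot.mpr (by simpa [degree_eq_bot] using hu))
      refine ⟨hp, ?_, ?_⟩
      · rw [natDegree_mul hgn hbn0, ht, hbn] at hd; omega
      · rw [e1, hl, leadingCoeff_mul]
    · -- j ≥ 2
      have en1 : n - (j-1) = n - j + 1 := by omega
      have en2 : n - (j-1) + 1 = n - j + 2 := by omega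
      have ej1 : j - 1 - 1 = j - 2 := by omega
      obtain ⟨hp1, hd1, -⟩ := IH (j-1) (by omega) (by omega) (by omega)
      rw [en1] at hp1 hd1; rw [ej1] at hd1
      obtain ⟨hg1, hgd1⟩ := hgood (n-j+1) (by omega) (by omega)
      have hu : g (n-j+1) * b (n-j+1) ≠ 0 := mul_ne_zero hg1 hp1
      have hund : (g (n-j+1) * b (n-j+1)).natDegree = γ + (b (n-j+1)).natDegree := by
        rw [natDegree_mul hg1 hp1, hgd1]
      -- dominance of the middle term
      have hvlt : (C (((n-j+2:ℕ)):K) * (C a0 * b (n-j+2))).degree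
          < (g (n-j+1) * b (n-j+1)).degree := by
        have hc1 : (((n-j+2:ℕ)):K) ≠ 0 := Nat.cast_ne_zero.mpr (by omega)
        have hdegv : (C (((n-j+2:ℕ)):K) * (C a0 * b (n-j+2))).degree = (b (n-j+2)).degree := by
          rw [degree_C_mul hc1, degree_C_mul ha0]
        rw [hdegv, degree_eq_natDegree hu, hund]
        have hbound : (b (n-j+2)).natDegree < γ + (b (n-j+1)).natDegree := by
          rcases Nat.lt_or_ge j 3 with h3 | h3
          · -- j = 2
            have e : n - j + 2 = n := by omega
            rw [e, hbn]; omega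
          · -- j ≥ 3
            obtain ⟨hp2, hd2, -⟩ := IH (j-2) (by omega) (by omega) (by omega)
            have en3 : n - (j-2) = n - j + 2 := by omega
            have ej2 : j - 2 - 1 = j - 3 := by omega
            rw [en3] at hp2 hd2; rw [ej2] at hd2
            obtain ⟨-, hdone, -⟩ := IH 1 (by omega) (by omega) (by omega)
            have e1a : 1 * a2.natDegree = a2.natDegree := one_mul _
            have e1b : (1-1) * γ = 0 := by norm_num
            rw [e1a, e1b] at hdone
            have hαt : a2.natDegree ≤ t := by omega
            have d1 : (j-1) * a2.natDegree = (j-2) * a2.natDegree + a2.natDegree := by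
              have : j - 1 = (j-2) + 1 := by omega
              rw [this, Nat.succ_mul]
            have d2 : (j-2) * γ = (j-3) * γ + γ := by
              have : j - 2 = (j-3) + 1 := by omega
              rw [this, Nat.succ_mul]
            omega
        calc (b (n-j+2)).degree ≤ ((b (n-j+2)).natDegree : WithBot ℕ) := degree_le_natDegree
        _ < ((γ + (b (n-j+1)).natDegree : ℕ) : WithBot ℕ) := by exact_mod_cast hbound
      obtain ⟨hp, hd, hl⟩ := topStepGlue _ hs a2 _ ha2 _ _ hu (E (n-j)) hvlt
      refine ⟨hp, ?_, by rw [hl, leadingCoeff_mul]⟩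
      rw [hund] at hd
      have d1 : j * a2.natDegree = (j-1) * a2.natDegree + a2.natDegree := by
        have : j = (j-1) + 1 := by omega
        nth_rewrite 1 [this]; rw [Nat.succ_mul]
      have d2 : (j-1) * γ = (j-2) * γ + γ := by
        have : j - 1 = (j-2) + 1 := by omega
        rw [this, Nat.succ_mul]
      omega

/-- The upward chain on coefficients `b k`. -/
theorem chainBot (a2 : K[X]) (ha2 : 1 ≤ a2.degree) (a0 : K) (ha0 : a0 ≠ 0)
    (b g : ℕ → K[X]) (n : ℕ)
    (E : ∀ k : ℕ, C ((n:K) - (k:K)) * (a2 * b k) - derivative (b k)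
        = C (((k+2:ℕ)):K) * (C a0 * b (k+2)) - g (k+1) * b (k+1))
    (γ : ℕ) (hγ : 1 ≤ γ) (hαγ : a2.natDegree ≤ γ)
    (M : ℕ) (hM : M + 1 ≤ n)
    (hb0 : b 0 ≠ 0) (hb1 : b 1 ≠ 0)
    (hb1d : (b 1).natDegree = γ + (b 0).natDegree)
    (hgood : ∀ m, 1 ≤ m → m < M → g m ≠ 0 ∧ (g m).natDegree = γ) :
    ∀ k, 1 ≤ k → k ≤ M → b k ≠ 0 ∧ (b k).natDegree = k * γ + (b 0).natDegree ∧
      (2 ≤ k → ((k:ℕ):K) * (a0 * (b k).leadingCoeff)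
         = (g (k-1)).leadingCoeff * (b (k-1)).leadingCoeff) := by
  intro k
  induction k using Nat.strong_induction_on with
  | _ k IH =>
    intro hk1 hkM
    rcases Nat.eq_or_lt_of_le hk1 with h1 | hk2
    · subst h1
      exact ⟨hb1, by simpa using hb1d, by omega⟩
    · -- k ≥ 2
      have e1 : k - 2 + 1 = k - 1 := by omega
      have e2 : k - 2 + 2 = k := by omega
      have hE' := E (k-2)
      rw [e1, e2] at hE'
      have hEq : C (((k:ℕ)):K) * (C a0 * b k)
          = (C ((n:K) - ((k-2 : ℕ):K)) * (a2 * b (k-2)) - derivative (b (k-2)))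
            + g (k-1) * b (k-1) := by linear_combination -hE'
      -- facts about b (k-2)
      obtain ⟨hp2, hd2⟩ : b (k-2) ≠ 0 ∧ (b (k-2)).natDegree = (k-2) * γ + (b 0).natDegree := by
        rcases Nat.lt_or_ge k 3 with h3 | h3
        · have e : k - 2 = 0 := by omega
          rw [e]; exact ⟨hb0, by simp⟩
        · obtain ⟨x, y, -⟩ := IH (k-2) (by omega) (by omega) (by omega)
          exact ⟨x, y⟩
      obtain ⟨hp1, hd1, -⟩ := IH (k-1) (by omega) (by omega) (by omega)
      obtain ⟨hg1, hgd1⟩ := hgood (k-1) (by omega) (by omega)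
      have hu : g (k-1) * b (k-1) ≠ 0 := mul_ne_zero hg1 hp1
      have hund : (g (k-1) * b (k-1)).natDegree = γ + ((k-1) * γ + (b 0).natDegree) := by
        rw [natDegree_mul hg1 hp1, hgd1, hd1]
      have hs : (n:K) - ((k-2 : ℕ):K) ≠ 0 :=
        sub_ne_zero_of_ne (fun h => by have := Nat.cast_injective h; omega)
      obtain ⟨hbr0, hbrd, hbrl⟩ := aux_dom_s7 ((n:K) - ((k-2 : ℕ):K)) hs a2 (b (k-2)) ha2 hp2
      have hvlt : (C ((n:K) - ((k-2 : ℕ):K)) * (a2 * b (k-2)) - derivative (b (k-2))).degree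
          < (g (k-1) * b (k-1)).degree := by
        rw [degree_eq_natDegree hbr0, degree_eq_natDegree hu, hbrd, hund, hd2]
        have d1 : (k-1) * γ = (k-2) * γ + γ := by
          have : k - 1 = (k-2) + 1 := by omega
          rw [this, Nat.succ_mul]
        exact_mod_cast by omega
      obtain ⟨hr0, hrd, hrl⟩ := aux_add_small _ _ hu hvlt
      rw [← hEq] at hr0 hrd hrl
      have hck : (((k:ℕ)):K) ≠ 0 := Nat.cast_ne_zero.mpr (by omega)
      have hbk : b k ≠ 0 := by
        intro h0; rw [h0, mul_zero, mul_zero] at hr0; exact hr0 rfl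
      refine ⟨hbk, ?_, fun _ => ?_⟩
      · rw [natDegree_C_mul hck, natDegree_C_mul ha0] at hrd
        rw [hund] at hrd
        have d1 : (k-1) * γ = (k-2) * γ + γ := by
          have : k - 1 = (k-2) + 1 := by omega
          rw [this, Nat.succ_mul]
        have d2 : k * γ = (k-1) * γ + γ := by
          nth_rewrite 1 [(by omega : k = (k-1) + 1)]
          rw [Nat.succ_mul]
        omega
      · rw [leadingCoeff_mul, leadingCoeff_mul, leadingCoeff_C, leadingCoeff_C] at hrl
        rw [hrl, leadingCoeff_mul]

theorem core (a1 a2 d0 : K[X]) (ha1 : 1 ≤ a1.degree) (ha2 : 1 ≤ a2.degree)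
    (a0 : K) (ha0 : a0 ≠ 0) (n : ℕ) (hn : 2 ≤ n)
    (b : ℕ → K[X]) (hbn : b n ≠ 0) (hhigh : ∀ k, n < k → b k = 0)
    (E0 : C a0 * b 1 = d0 * b 0)
    (E : ∀ k : ℕ, C ((n:K) - (k:K)) * (a2 * b k) - derivative (b k)
        = C (((k+2:ℕ)):K) * (C a0 * b (k+2)) - (d0 - C (((k+1:ℕ)):K) * a1) * b (k+1)) :
    (∃ k : K, k ≠ 0 ∧ d0 = C k) ∧ b 1 ≠ 0 ∧ b 0 ≠ 0 := by
  have ha1' : a1 ≠ 0 := by rintro rfl; simp at ha1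
  have ha2' : a2 ≠ 0 := by rintro rfl; simp at ha2
  have hα1 : 1 ≤ a2.natDegree := by
    have h := ha2; rw [degree_eq_natDegree ha2'] at h; exact_mod_cast h
  have hβ1 : 1 ≤ a1.natDegree := by
    have h := ha1; rw [degree_eq_natDegree ha1'] at h; exact_mod_cast h
  set α := a2.natDegree with hαdef
  set β := a1.natDegree with hβdef
  set γ := max d0.natDegree β with hγdef
  have hγ1 : 1 ≤ γ := le_trans hβ1 (le_max_right _ _)
  set g : ℕ → K[X] := fun m => d0 - C ((m:K)) * a1 with hgdef
  have Eg : ∀ k : ℕ, C ((n:K) - (k:K)) * (a2 * b k) - derivative (b k)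
      = C (((k+2:ℕ)):K) * (C a0 * b (k+2)) - g (k+1) * b (k+1) := fun k => by
    rw [hgdef]; exact E k
  have hbtop : b (n+1) = 0 := hhigh _ (by omega)
  have hbtop2 : b (n+2) = 0 := hhigh _ (by omega)
  -- b n is a nonzero constant
  have hbnd : (b n).natDegree = 0 := by
    have h := Eg n
    rw [hbtop, hbtop2] at h
    simp [sub_self] at h
    exact h
  -- b 0 ≠ 0 by upward zero propagation
  have hb0 : b 0 ≠ 0 := by
    intro h0
    have hb1 : b 1 = 0 := by
      have := E0
      rw [h0, mul_zero] at this
      rcases mul_eq_zero.mp this with h | h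
      · exact absurd h (by simp [ha0])
      · exact h
    have hall : ∀ k, b k = 0 ∧ b (k+1) = 0 := by
      intro k
      induction k with
      | zero => exact ⟨h0, hb1⟩
      | succ k ih =>
        refine ⟨ih.2, ?_⟩
        have h := Eg k
        rw [ih.1, ih.2] at h
        simp only [mul_zero, derivative_zero, sub_zero, zero_sub, neg_eq_zero, zero_mul] at h
        rcases mul_eq_zero.mp h.symm with h' | h'
        · rw [Polynomial.C_eq_zero] at h'
          exact absurd h' (Nat.cast_ne_zero.mpr (by omega))
        · rcases mul_eq_zero.mp h' with h'' | h''
          · exact absurd h'' (by simp [ha0])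
          · exact h''
    exact hbn (hall n).1
  -- degree bound for g
  have hgle : ∀ m : ℕ, (g m).natDegree ≤ γ := by
    intro m
    calc (g m).natDegree ≤ max d0.natDegree (C ((m:K)) * a1).natDegree := natDegree_sub_le _ _
    _ ≤ γ := by
        apply max_le (le_max_left _ _)
        refine le_trans natDegree_mul_le ?_
        rw [natDegree_C, zero_add]
        exact le_max_right _ _
  have hNG : ∀ m, 1 ≤ m → ¬(g m ≠ 0 ∧ (g m).natDegree = γ) →
      (d0 ≠ 0 ∧ d0.natDegree = β ∧ γ = β) := by
    intro m hm1 hng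
    have hgm_eq : g m = d0 - C ((m:K)) * a1 := by rw [hgdef]
    have hmK : ((m:K)) ≠ 0 := Nat.cast_ne_zero.mpr (by omega)
    have hCma : (C ((m:K)) * a1) ≠ 0 := mul_ne_zero (by simpa using hmK) ha1'
    have hCmad : (C ((m:K)) * a1).natDegree = β := natDegree_C_mul hmK
    by_cases hgm : g m = 0
    · rw [hgm_eq] at hgm
      have hd0 : d0 = C ((m:K)) * a1 := sub_eq_zero.mp hgm
      have hd0d : d0.natDegree = β := by rw [hd0, hCmad]
      exact ⟨hd0 ▸ hCma, hd0d, by rw [hγdef, hd0d, max_self]⟩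
    · have hlt : (g m).natDegree < γ := lt_of_le_of_ne (hgle m) (fun h => hng ⟨hgm, h⟩)
      by_cases hd00 : d0 = 0
      · exfalso
        have hr : g m = -(C ((m:K)) * a1) := by rw [hgm_eq, hd00]; ring
        rw [hr, natDegree_neg, hCmad] at hlt
        rw [hγdef, hd00] at hlt
        simp at hlt
      · rcases lt_trichotomy d0.natDegree β with h | h | h
        · exfalso
          have hr : (g m).natDegree = β := by
            rw [hgm_eq, natDegree_sub_eq_right_of_natDegree_lt (by rw [hCmad]; exact h), hCmad]
          rw [hγdef] at hlt
          omega
        · exact ⟨hd00, h, by rw [hγdef, h, max_self]⟩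
        · exfalso
          have hr : (g m).natDegree = d0.natDegree := by
            rw [hgm_eq, natDegree_sub_eq_left_of_natDegree_lt (by rw [hCmad]; exact h)]
          rw [hγdef] at hlt
          omega
  have hunique : ∀ m m', 1 ≤ m → 1 ≤ m' → m ≠ m' →
      ¬(g m ≠ 0 ∧ (g m).natDegree = γ) → (g m' ≠ 0 ∧ (g m').natDegree = γ) := by
    intro m m' hm1 hm1' hne hng
    by_contra hng'
    obtain ⟨-, -, hγβ⟩ := hNG m hm1 hng
    have hdiff : g m - g m' = C (((m':K)) - ((m:K))) * a1 := by
      rw [hgdef]; simp only [map_sub]; ring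
    have hdne : ((m':K)) - ((m:K)) ≠ 0 :=
      sub_ne_zero_of_ne (fun h => hne (Nat.cast_injective h).symm)
    have hdiffne : g m - g m' ≠ 0 := by
      rw [hdiff]; exact mul_ne_zero (fun hc => hdne (by rwa [Polynomial.C_eq_zero] at hc)) ha1'
    have hdiffd : (g m - g m').natDegree = β := by rw [hdiff, natDegree_C_mul hdne]
    have hsmall : ∀ x, ¬(g x ≠ 0 ∧ (g x).natDegree = γ) → (g x = 0 ∨ (g x).natDegree < γ) := by
      intro x hx
      by_cases h : g x = 0
      · exact Or.inl h
      · exact Or.inr (lt_of_le_of_ne (hgle x) (fun he => hx ⟨h, he⟩))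
    rcases hsmall m hng with h1 | h1 <;> rcases hsmall m' hng' with h2 | h2
    · rw [h1, h2, sub_zero] at hdiffne; exact hdiffne rfl
    · rw [h1, zero_sub, natDegree_neg] at hdiffd; omega
    · rw [h2, sub_zero] at hdiffd; omega
    · have := natDegree_sub_le (g m) (g m'); omega
  by_cases hA : ∀ m, 1 ≤ m → m ≤ n → (g m ≠ 0 ∧ (g m).natDegree = γ)
  · -- Case A : no exceptional index; conclusion holds
    have hgn := hA n (by omega) le_rfl
    have TC := chainTop a2 ha2 a0 ha0 b g n Eg hbn hbnd hbtop γ hγ1 n (by omega) le_rfl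
      hgn.1 γ hgn.2 le_rfl (fun m h1 h2 => hA m (by omega) (by omega))
    obtain ⟨-, hM1, -⟩ := TC 1 (by omega) (by omega)
    obtain ⟨hb1ne', hd1, -⟩ := TC (n-1) (by omega) (by omega)
    obtain ⟨hb0ne, hdn, -⟩ := TC n (by omega) le_rfl
    rw [(by omega : n - (n-1) = 1)] at hb1ne' hd1
    rw [(by omega : n - n = 0)] at hb0ne hdn
    rw [(by omega : n - 1 - 1 = n - 2)] at hd1
    rw [← hαdef] at hM1 hd1 hdn
    have hd0ne : d0 ≠ 0 := by
      intro h0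
      rw [h0, zero_mul] at E0
      exact (mul_ne_zero (fun hc => ha0 (by rwa [Polynomial.C_eq_zero] at hc)) hb1ne') E0
    have hE0d : (b 1).natDegree = d0.natDegree + (b 0).natDegree := by
      have h := congrArg natDegree E0
      rwa [natDegree_C_mul ha0, natDegree_mul hd0ne hb0ne] at h
    have dec1 : n * α = (n-1) * α + α := by
      nth_rewrite 1 [(by omega : n = (n-1)+1)]; rw [Nat.succ_mul]
    have dec2 : (n-1) * γ = (n-2) * γ + γ := by
      rw [(by omega : n-1 = (n-2)+1), Nat.succ_mul]
    have hδ0 : d0.natDegree = 0 := by omega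
    refine ⟨⟨d0.coeff 0, ?_, eq_C_of_natDegree_eq_zero hδ0⟩, hb1ne', hb0ne⟩
    intro hk0
    exact hd0ne (by rw [eq_C_of_natDegree_eq_zero hδ0, hk0, map_zero])
  · -- exceptional index exists : derive a contradiction
    exfalso
    push_neg at hA
    obtain ⟨m, hm1, hmn, hmbad0⟩ := hA
    have hmbad : ¬(g m ≠ 0 ∧ (g m).natDegree = γ) := fun h => hmbad0 h.1 h.2
    obtain ⟨hd0ne, hδβ, hγβ⟩ := hNG m hm1 hmbad
    have hδγ : d0.natDegree = γ := by omega
    have hα1' : 1 ≤ a2.natDegree := hα1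
    by_cases hmn' : m = n
    · subst hmn'
      by_cases hgn0 : g m = 0
      · -- Case B1 : d0 = m⬝a1
        have h1 := Eg (m-1)
        rw [(by omega : m-1+1 = m), (by omega : m-1+2 = m+1), hbtop, hgn0] at h1
        rw [mul_zero, mul_zero, zero_mul, sub_zero] at h1
        have hbn1 : b (m-1) = 0 := by
          by_contra hne0
          have hs : (m:K) - ((m-1:ℕ):K) ≠ 0 :=
            sub_ne_zero_of_ne (fun h => by have := Nat.cast_injective h; omega)
          exact (aux_dom_s7 _ hs a2 _ ha2 hne0).1 h1
        have h2 := Eg (m-2)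
        rw [(by omega : m-2+1 = m-1), (by omega : m-2+2 = m), hbn1] at h2
        rw [mul_zero, sub_zero] at h2
        have hs : (m:K) - ((m-2:ℕ):K) ≠ 0 :=
          sub_ne_zero_of_ne (fun h => by have := Nat.cast_injective h; omega)
        have hw : C (((m:ℕ)):K) * (C a0 * b m) ≠ 0 :=
          mul_ne_zero (fun hc => Nat.cast_ne_zero.mpr (by omega : m ≠ 0)
              (by rwa [Polynomial.C_eq_zero] at hc))
            (mul_ne_zero (fun hc => ha0 (by rwa [Polynomial.C_eq_zero] at hc)) hbn)
        obtain ⟨-, hdd, -⟩ := aux_step _ hs a2 _ _ ha2 h2 hw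
        rw [natDegree_C_mul (Nat.cast_ne_zero.mpr (by omega : m ≠ 0)),
          natDegree_C_mul ha0, hbnd] at hdd
        omega
      · -- Case B2
        have hgnlt : (g m).natDegree < γ := lt_of_le_of_ne (hgle m) (fun h => hmbad ⟨hgn0, h⟩)
        have TC := chainTop a2 ha2 a0 ha0 b g m Eg hbn hbnd hbtop γ hγ1 m (by omega) le_rfl
          hgn0 _ rfl (le_of_lt hgnlt)
          (fun m' hx1 hx2 => hunique m m' (by omega) (by omega) (by omega) hmbad)
        obtain ⟨-, hM1, -⟩ := TC 1 (by omega) (by omega)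
        obtain ⟨hb1ne', hd1, -⟩ := TC (m-1) (by omega) (by omega)
        obtain ⟨hb0ne, hdn, -⟩ := TC m (by omega) le_rfl
        rw [(by omega : m - (m-1) = 1)] at hb1ne' hd1
        rw [(by omega : m - m = 0)] at hb0ne hdn
        rw [(by omega : m - 1 - 1 = m - 2)] at hd1
        have hE0d : (b 1).natDegree = d0.natDegree + (b 0).natDegree := by
          have h := congrArg natDegree E0
          rwa [natDegree_C_mul ha0, natDegree_mul hd0ne hb0ne] at h
        have dec1 : m * a2.natDegree = (m-1) * a2.natDegree + a2.natDegree := by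
          nth_rewrite 1 [(by omega : m = (m-1)+1)]; rw [Nat.succ_mul]
        have dec2 : (m-1) * γ = (m-2) * γ + γ := by
          rw [(by omega : m-1 = (m-2)+1), Nat.succ_mul]
        omega
    · -- Cases C/D : 1 ≤ m ≤ n-1
      have hmn2 : m + 1 ≤ n := by omega
      have hgn : g n ≠ 0 ∧ (g n).natDegree = γ :=
        hunique m n hm1 (by omega) (by omega) hmbad
      have TC := chainTop a2 ha2 a0 ha0 b g n Eg hbn hbnd hbtop γ hγ1 (n-m) (by omega)
        (by omega) hgn.1 γ hgn.2 le_rfl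
        (fun m' hx1 hx2 => hunique m m' hm1 (by omega) (by omega) hmbad)
      obtain ⟨-, hM1, -⟩ := TC 1 (by omega) (by omega)
      have hαγ : a2.natDegree ≤ γ := by omega
      have hb1ne : b 1 ≠ 0 := by
        intro h0
        rw [h0, mul_zero] at E0
        exact (mul_ne_zero hd0ne hb0) E0.symm
      have hb1d : (b 1).natDegree = γ + (b 0).natDegree := by
        have h := congrArg natDegree E0
        rwa [natDegree_C_mul ha0, natDegree_mul hd0ne hb0, hδγ] at h
      have BC := chainBot a2 ha2 a0 ha0 b g n Eg γ hγ1 hαγ m hmn2 hb0 hb1ne hb1d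
        (fun m' hx1 hx2 => hunique m m' hm1 (by omega) (by omega) hmbad)
      obtain ⟨hbmne, hbmd, hbml⟩ := BC m (by omega) le_rfl
      obtain ⟨hbm1ne, hbm1d⟩ : b (m+1) ≠ 0 ∧
          (b (m+1)).natDegree + (n-m-1) * a2.natDegree = (n-m-1) * γ := by
        rcases Nat.lt_or_ge (n-m) 2 with hJ | hJ
        · rw [(by omega : m+1 = n)]
          refine ⟨hbn, ?_⟩
          rw [hbnd, (by omega : n - m - 1 = 0)]; simp
        · obtain ⟨x, y, -⟩ := TC (n-m-1) (by omega) (by omega)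
          rw [(by omega : n - (n-m-1) = m+1)] at x y
          rw [(by omega : n-m-1-1 = n-m-2)] at y
          refine ⟨x, ?_⟩
          have dec : (n-m-1) * γ = (n-m-2) * γ + γ := by
            rw [(by omega : n-m-1 = (n-m-2)+1), Nat.succ_mul]
          omega
      obtain ⟨hbmne', hmeet, hlead2⟩ := TC (n-m) (by omega) le_rfl
      rw [(by omega : n - (n-m) = m)] at hbmne' hmeet hlead2
      obtain ⟨hbm1ne', hbm1d'⟩ : b (m-1) ≠ 0 ∧
          (b (m-1)).natDegree = (m-1) * γ + (b 0).natDegree := by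
        rcases Nat.lt_or_ge m 2 with h2 | h2
        · rw [(by omega : m - 1 = 0)]; exact ⟨hb0, by simp [(by omega : m - 1 = 0)]⟩
        · obtain ⟨x, y, -⟩ := BC (m-1) (by omega) (by omega); exact ⟨x, y⟩
      have hs1 : (n:K) - ((m-1:ℕ):K) ≠ 0 :=
        sub_ne_zero_of_ne (fun h => by have := Nat.cast_injective h; omega)
      have hJγ2 : (n-m)*γ = (n-m-1)*γ + γ := by
        nth_rewrite 1 [(by omega : n-m = (n-m-1)+1)]; rw [Nat.succ_mul]
      have hmγ2 : m*γ = (m-1)*γ + γ := by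
        nth_rewrite 1 [(by omega : m = (m-1)+1)]; rw [Nat.succ_mul]
      have hJα2 : (n-m)*a2.natDegree = (n-m-1)*a2.natDegree + a2.natDegree := by
        nth_rewrite 1 [(by omega : n-m = (n-m-1)+1)]; rw [Nat.succ_mul]
      have hposmγ : 1 ≤ m * γ := Nat.mul_pos (by omega) (by omega)
      have hposJα : 1 ≤ (n-m) * a2.natDegree := Nat.mul_pos (by omega) (by omega)
      by_cases hgm0 : g m = 0
      · -- Case D : d0 = m⬝a1, use leading coefficients
        have hd0eq : d0 = C ((m:K)) * a1 := by
          have h := hgm0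
          simp only [hgdef] at h
          exact sub_eq_zero.mp h
        have hEm := Eg (m-1)
        rw [(by omega : m-1+1 = m), (by omega : m-1+2 = m+1), hgm0, zero_mul, sub_zero] at hEm
        obtain ⟨-, -, hbrl⟩ := aux_dom_s7 _ hs1 a2 _ ha2 hbm1ne'
        have hE1 : ((n:K) - ((m-1:ℕ):K)) * (a2.leadingCoeff * (b (m-1)).leadingCoeff)
            = (((m+1:ℕ)):K) * (a0 * (b (m+1)).leadingCoeff) := by
          rw [← hbrl, hEm, leadingCoeff_mul, leadingCoeff_C, leadingCoeff_mul, leadingCoeff_C]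
        have hgm1 : g (m+1) = -a1 := by
          simp only [hgdef]
          rw [hd0eq, Nat.cast_add, Nat.cast_one, map_add, map_one]; ring
        rw [hgm1, leadingCoeff_neg] at hlead2
        have hE3 : ((m:ℕ):K) * (a0 * (b m).leadingCoeff)
            = a1.leadingCoeff * (b (m-1)).leadingCoeff := by
          rcases Nat.lt_or_ge m 2 with h2 | h2
          · have hm1e : m = 1 := by omega
            subst hm1e
            have hd0a1 : d0 = a1 := by rw [hd0eq]; simp
            have h := congrArg leadingCoeff E0
            rw [leadingCoeff_mul, leadingCoeff_C, hd0a1, leadingCoeff_mul] at h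
            simpa using h
          · have hga1 : g (m-1) = a1 := by
              simp only [hgdef]
              rw [hd0eq, (show ((m-1:ℕ):K) = (m:K) - 1 from by
                push_cast [Nat.cast_sub (by omega : 1 ≤ m)]; ring), map_sub, map_one]
              ring
            have h := hbml h2
            rwa [hga1] at h
        have hAne : a2.leadingCoeff ≠ 0 := leadingCoeff_ne_zero.mpr ha2'
        have hBne : a1.leadingCoeff ≠ 0 := leadingCoeff_ne_zero.mpr ha1'
        have hLmne : (b m).leadingCoeff ≠ 0 := leadingCoeff_ne_zero.mpr hbmne
        have hcast1 : ((m-1:ℕ):K) = (m:K) - 1 := by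
          push_cast [Nat.cast_sub (by omega : 1 ≤ m)]; ring
        have hcast2 : ((n-m:ℕ):K) = (n:K) - (m:K) := by
          push_cast [Nat.cast_sub (by omega : m ≤ n)]; ring
        rw [hcast1] at hE1
        push_cast at hE1 hlead2 hE3
        have hmainB : ((((n:K)-(m:K))+1) * (m:K) - ((m:K)+1) * ((n:K)-(m:K)))
            * (a2.leadingCoeff * (a0 * (b m).leadingCoeff)) = 0 := by
          linear_combination a1.leadingCoeff * hE1
            + ((n:K)-(m:K)+1) * a2.leadingCoeff * hE3 - ((m:K)+1) * a0 * hlead2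
        have hscalar : (((n:K)-(m:K))+1) * (m:K) = ((m:K)+1) * ((n:K)-(m:K)) := by
          by_contra hne
          exact (mul_ne_zero (sub_ne_zero_of_ne hne)
            (mul_ne_zero hAne (mul_ne_zero ha0 hLmne))) hmainB
        rw [← hcast2] at hscalar
        have hnat : (n-m+1)*m = (m+1)*(n-m) := by exact_mod_cast hscalar
        have ha : (n-m+1)*m = (n-m)*m + m := by rw [Nat.succ_mul]
        have hb' : (m+1)*(n-m) = m*(n-m) + (n-m) := by rw [Nat.succ_mul]
        have hc : (n-m)*m = m*(n-m) := Nat.mul_comm _ _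
        have hmJ : m = n - m := by omega
        have hmult : m*γ = (n-m)*γ := congrArg (fun x => x * γ) hmJ
        omega
      · -- Case C : g m small but nonzero
        have hgmlt : (g m).natDegree < γ := lt_of_le_of_ne (hgle m) (fun h => hmbad ⟨hgm0, h⟩)
        have hEm := Eg (m-1)
        rw [(by omega : m-1+1 = m), (by omega : m-1+2 = m+1)] at hEm
        have hkey : g m * b m
            = C (((m+1:ℕ)):K) * (C a0 * b (m+1))
              - (C ((n:K) - ((m-1:ℕ):K)) * (a2 * b (m-1)) - derivative (b (m-1))) := by
          linear_combination hEm
        obtain ⟨hbr0, hbrd, -⟩ := aux_dom_s7 _ hs1 a2 _ ha2 hbm1ne'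
        have hvd : (C (((m+1:ℕ)):K) * (C a0 * b (m+1))).natDegree = (b (m+1)).natDegree := by
          rw [natDegree_C_mul (Nat.cast_ne_zero.mpr (by omega : m + 1 ≠ 0)),
            natDegree_C_mul ha0]
        have hub : (g m * b m).natDegree
            ≤ max (b (m+1)).natDegree ((b (m-1)).natDegree + a2.natDegree) := by
          rw [hkey]
          refine le_trans (natDegree_sub_le _ _) ?_
          rw [hvd, hbrd]
          exact max_le_max le_rfl (by omega)
        have hlhsd : (g m * b m).natDegree = (g m).natDegree + (b m).natDegree :=
          natDegree_mul hgm0 hbmne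
        rw [hlhsd] at hub
        rcases Nat.eq_or_lt_of_le hαγ with hEQ | hLT
        · have hJae : (n-m)*a2.natDegree = (n-m)*γ := by rw [hEQ]
          omega
        · rcases le_max_iff.mp hub with hcase | hcase <;> omega
      
noncomputable def e3 (K : Type*) [Field K] : MvPolynomial (Fin 1) K ≃ₐ[K] K[X] :=
  (MvPolynomial.renameEquiv K ((Equiv.equivPUnit (Fin 1)) : Fin 1 ≃ PUnit.{1})).trans (MvPolynomial.pUnitAlgEquiv K)

noncomputable def Theta (K : Type*) [Field K] : MvPolynomial (Fin 2) K →ₐ[K] (K[X])[X] :=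
  ((Polynomial.mapAlgEquiv (e3 K)).toAlgHom.comp
    (MvPolynomial.finSuccEquiv K 1).toAlgHom).comp
    (MvPolynomial.renameEquiv K (Equiv.swap (0 : Fin 2) 1)).toAlgHom

lemma Theta_X1 : Theta K (MvPolynomial.X 1) = (X : (K[X])[X]) := by
  simp [Theta, MvPolynomial.renameEquiv_apply, Equiv.swap_apply_right,
    MvPolynomial.finSuccEquiv_X_zero]

lemma Theta_X0 : Theta K (MvPolynomial.X 0) = (C (X : K[X]) : (K[X])[X]) := by
  have h1 : (MvPolynomial.renameEquiv K (Equiv.swap (0 : Fin 2) 1)) (MvPolynomial.X 0)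
      = MvPolynomial.X 1 := by
    simp [MvPolynomial.renameEquiv_apply, Equiv.swap_apply_left]
  have h2 : (MvPolynomial.finSuccEquiv K 1) (MvPolynomial.X 1)
      = Polynomial.C (MvPolynomial.X 0) := by
    have : (1 : Fin 2) = Fin.succ 0 := rfl
    rw [this, MvPolynomial.finSuccEquiv_X_succ]
  have h3 : (e3 K) (MvPolynomial.X 0) = (X : K[X]) := by
    simp [e3]
  simp [Theta, h1, h2, h3]

lemma Theta_aeval (p : K[X]) :
    Theta K (Polynomial.aeval (MvPolynomial.X 0) p) = C p := by
  have : (Theta K).comp (Polynomial.aeval (MvPolynomial.X 0) :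
      K[X] →ₐ[K] MvPolynomial (Fin 2) K) = CAlgHom := by
    apply Polynomial.algHom_ext
    simp [CAlgHom, Theta_X0]
  calc Theta K (Polynomial.aeval (MvPolynomial.X 0) p)
      = ((Theta K).comp (Polynomial.aeval (MvPolynomial.X 0) :
          K[X] →ₐ[K] MvPolynomial (Fin 2) K)) p := rfl
  _ = C p := by rw [this]; rfl

end DarbouxAux

theorem stmt_7 (K : Type*) [Field K] [CharZero K]
    (a1 a2 : Polynomial K) (ha1 : 1 ≤ a1.degree) (ha2 : 1 ≤ a2.degree)
    (a0 : K) (ha0 : a0 ≠ 0)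
    (D : Derivation K (MvPolynomial (Fin 2) K) (MvPolynomial (Fin 2) K))
    (hDx : D (MvPolynomial.X 0) = MvPolynomial.X 1)
    (hDy : D (MvPolynomial.X 1) =
      Polynomial.aeval (MvPolynomial.X 0) a2 * MvPolynomial.X 1 ^ 2 +
        Polynomial.aeval (MvPolynomial.X 0) a1 * MvPolynomial.X 1 +
        MvPolynomial.C a0)
    (n : ℕ) (hn : 2 ≤ n) (c : ℕ → Polynomial K) (hcn : c n ≠ 0)
    (F : MvPolynomial (Fin 2) K)
    (hF : F = ∑ i ∈ Finset.range (n + 1),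
      Polynomial.aeval (MvPolynomial.X 0) (c i) * MvPolynomial.X 1 ^ i)
    (hFK : ∀ k : K, F ≠ MvPolynomial.C k)
    (Λ : MvPolynomial (Fin 2) K) (hDarboux : D F = Λ * F)
    (d0 : Polynomial K)
    (hΛ : Λ = (n : MvPolynomial (Fin 2) K) * Polynomial.aeval (MvPolynomial.X 0) a2 *
      MvPolynomial.X 1 + Polynomial.aeval (MvPolynomial.X 0) d0) :
    (∃ k : K, k ≠ 0 ∧ d0 = Polynomial.C k) ∧ c 1 * c 0 ≠ 0 := by
  classical
  -- Step 1: compute D F explicitly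
  have hDF : D F = ∑ i ∈ Finset.range (n+1),
      (Polynomial.aeval (MvPolynomial.X 0) (derivative (c i)) * MvPolynomial.X 1 ^ (i+1)
        + i • (Polynomial.aeval (MvPolynomial.X 0) (c i) *
            (MvPolynomial.X 1 ^ (i-1) *
              (Polynomial.aeval (MvPolynomial.X 0) a2 * MvPolynomial.X 1 ^ 2 +
               Polynomial.aeval (MvPolynomial.X 0) a1 * MvPolynomial.X 1 +
               MvPolynomial.C a0)))) := by
    rw [hF, map_sum]
    refine Finset.sum_congr rfl (fun i hi => ?_)
    rw [Derivation.leibniz, Derivation.leibniz_pow, Derivation.map_aeval, hDx, hDy]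
    simp only [smul_eq_mul, nsmul_eq_mul]
    ring
  -- Step 2: transport along Theta
  have hmain : (∑ i ∈ Finset.range (n+1),
      (C (derivative (c i)) * X^(i+1)
        + i • (C (c i) * (X^(i-1) * (C a2 * X^2 + C a1 * X + C (C a0) : (K[X])[X])))))
      = ((n : (K[X])[X]) * C a2 * X + C d0) *
          ∑ i ∈ Finset.range (n+1), C (c i) * X^i := by
    have hTC : Theta K (MvPolynomial.C a0) = C (C a0) := by
      rw [← MvPolynomial.algebraMap_eq, AlgHom.commutes]
      simp [Polynomial.algebraMap_apply]
    have h := congrArg (Theta K) hDarboux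
    rw [hDF, hΛ, hF] at h
    rw [map_sum, map_mul, map_add, map_mul, map_mul, map_natCast, map_sum] at h
    simp only [map_add, map_mul, map_pow, map_nsmul, Theta_aeval, Theta_X1, hTC] at h
    exact h
  set b : ℕ → Polynomial K := fun k => if k ≤ n then c k else 0 with hbdef
  -- per-term expansion
  have hterm : ∀ i ∈ Finset.range (n+1),
      (C (derivative (c i)) * X^(i+1)
        + i • (C (c i) * (X^(i-1) * (C a2 * X^2 + C a1 * X + C (C a0) : (K[X])[X]))))
      = C (derivative (c i)) * X^(i+1) + C ((i:K[X]) * (a2 * c i)) * X^(i+1)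
        + C ((i:K[X]) * (a1 * c i)) * X^i + C ((i:K[X]) * (C a0 * c i)) * X^(i-1) := by
    intro i hi
    by_cases h0 : i = 0
    · subst h0; simp
    · have e1 : (X:(K[X])[X])^(i-1) * X^2 = X^(i+1) := by
        rw [← pow_add]; congr 1; omega
      have e2 : (X:(K[X])[X])^(i-1) * X^1 = X^i := by
        rw [← pow_add]; congr 1; omega
      rw [nsmul_eq_mul]
      simp only [map_mul]
      rw [show ((i:ℕ):(K[X])[X]) = C ((i:ℕ):K[X]) from (map_natCast (C : K[X] →+* (K[X])[X]) i).symm]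
      linear_combination (C ((i:ℕ):K[X]) * C (c i) * C a2) * e1 + (C ((i:ℕ):K[X]) * C (c i) * C a1) * e2
  have hmain2 :
      (∑ i ∈ Finset.range (n+1), C (derivative (c i)) * X^(i+1))
      + (∑ i ∈ Finset.range (n+1), C ((i:K[X]) * (a2 * c i)) * X^(i+1))
      + (∑ i ∈ Finset.range (n+1), C ((i:K[X]) * (a1 * c i)) * X^i)
      + (∑ i ∈ Finset.range (n+1), C ((i:K[X]) * (C a0 * c i)) * X^(i-1))
      = C ((n:K[X]) * a2) * (X * ∑ i ∈ Finset.range (n+1), C (c i) * X^i)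
        + C d0 * ∑ i ∈ Finset.range (n+1), C (c i) * X^i := by
    rw [← Finset.sum_add_distrib, ← Finset.sum_add_distrib, ← Finset.sum_add_distrib]
    rw [← Finset.sum_congr rfl hterm]
    rw [hmain]
    rw [show ((n:(K[X])[X])) = C ((n:K[X])) from (map_natCast (C : K[X] →+* (K[X])[X]) n).symm,
      map_mul]
    ring
  -- coefficient extraction helpers
  have hc1 : ∀ (f : ℕ → K[X]) (k : ℕ),
      (∑ i ∈ Finset.range (n+1), C (f i) * X^(i+1)).coeff (k+1) = if k ≤ n then f k else 0 := by
    intro f k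
    rw [finset_sum_coeff]
    simp only [coeff_C_mul, coeff_X_pow, add_left_inj, mul_ite, mul_one, mul_zero]
    rw [Finset.sum_ite_eq (Finset.range (n+1)) k f]
    simp [Nat.lt_succ_iff]
  have hc1z : ∀ (f : ℕ → K[X]),
      (∑ i ∈ Finset.range (n+1), C (f i) * X^(i+1)).coeff 0 = 0 := by
    intro f
    rw [finset_sum_coeff]
    simp
  have hc2 : ∀ (f : ℕ → K[X]) (k : ℕ),
      (∑ i ∈ Finset.range (n+1), C (f i) * X^i).coeff k = if k ≤ n then f k else 0 := by
    intro f k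
    rw [finset_sum_coeff]
    simp only [coeff_C_mul, coeff_X_pow, mul_ite, mul_one, mul_zero]
    rw [Finset.sum_ite_eq (Finset.range (n+1)) k f]
    simp [Nat.lt_succ_iff]
  have hc3 : ∀ (f : ℕ → K[X]) (k : ℕ),
      (∑ i ∈ Finset.range (n+1), C ((i:K[X]) * f i) * X^(i-1)).coeff (k+1)
        = if k+2 ≤ n then ((k+2:ℕ):K[X]) * f (k+2) else 0 := by
    intro f k
    rw [finset_sum_coeff]
    simp only [coeff_C_mul, coeff_X_pow, mul_ite, mul_one, mul_zero]
    simp only [show ∀ i:ℕ, ((k+1 = i - 1)) = (i = k+2) from fun i => propext ⟨by omega, by omega⟩]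
    rw [Finset.sum_ite_eq' (Finset.range (n+1)) (k+2) (fun i => (i:K[X]) * f i)]
    simp [Nat.lt_succ_iff]
  have hc4 : ∀ (f : ℕ → K[X]),
      (∑ i ∈ Finset.range (n+1), C ((i:K[X]) * f i) * X^(i-1)).coeff 0
        = if 0 < n then f 1 else 0 := by
    intro f
    rw [finset_sum_coeff]
    simp only [coeff_C_mul, coeff_X_pow, mul_ite, mul_one, mul_zero]
    rw [Finset.sum_congr rfl (fun i hi => (by
        by_cases h0 : i = 0
        · subst h0; simp
        · by_cases h1 : i = 1
          · subst h1; simp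
          · rw [if_neg (by omega), if_neg (by omega)]
        : (if (0:ℕ) = i - 1 then (i:K[X]) * f i else 0) = if i = 1 then (1:K[X]) * f 1 else 0))]
    rw [Finset.sum_ite_eq' (Finset.range (n+1)) 1 (fun _ => (1:K[X]) * f 1)]
    simp [Nat.lt_succ_iff]
  -- the coefficient equations
  have hEraw : ∀ k : ℕ, derivative (b k) + (k:K[X]) * (a2 * b k)
      + ((k+1:ℕ):K[X]) * (a1 * b (k+1)) + ((k+2:ℕ):K[X]) * (C a0 * b (k+2))
      = (n:K[X]) * a2 * b k + d0 * b (k+1) := by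
    intro k
    have h := congrArg (fun p => Polynomial.coeff p (k+1)) hmain2
    simp only [coeff_add] at h
    rw [hc1 (fun i => derivative (c i)) k, hc1 (fun i => (i:K[X]) * (a2 * c i)) k,
      hc2 (fun i => (i:K[X]) * (a1 * c i)) (k+1), hc3 (fun i => C a0 * c i) k,
      coeff_C_mul, coeff_C_mul, coeff_X_mul, hc2 c (k+1), hc2 c k] at h
    beta_reduce at h
    have hbk : ∀ j : ℕ, b j = if j ≤ n then c j else 0 := fun j => by rw [hbdef]
    rw [show (if k ≤ n then derivative (c k) else 0) = derivative (b k) from by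
        rw [hbk k]; split_ifs <;> simp,
      show (if k ≤ n then (k:K[X]) * (a2 * c k) else 0) = (k:K[X]) * (a2 * b k) from by
        rw [hbk k]; split_ifs <;> simp,
      show (if k+1 ≤ n then ((k+1:ℕ):K[X]) * (a1 * c (k+1)) else 0)
          = ((k+1:ℕ):K[X]) * (a1 * b (k+1)) from by
        rw [hbk (k+1)]; split_ifs <;> simp,
      show (if k+2 ≤ n then ((k+2:ℕ):K[X]) * (C a0 * c (k+2)) else 0)
          = ((k+2:ℕ):K[X]) * (C a0 * b (k+2)) from by
        rw [hbk (k+2)]; split_ifs <;> simp,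
      show (if k ≤ n then c k else 0) = b k from (hbk k).symm,
      show (if k+1 ≤ n then c (k+1) else 0) = b (k+1) from (hbk (k+1)).symm] at h
    exact h
  have hbk : ∀ j : ℕ, b j = if j ≤ n then c j else 0 := fun j => by rw [hbdef]
  have hE0 : C a0 * b 1 = d0 * b 0 := by
    have h := congrArg (fun p => Polynomial.coeff p 0) hmain2
    beta_reduce at h
    simp only [coeff_add] at h
    rw [hc1z (fun i => derivative (c i)), hc1z (fun i => (i:K[X]) * (a2 * c i)),
      hc2 (fun i => (i:K[X]) * (a1 * c i)) 0, hc4 (fun i => C a0 * c i),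
      coeff_C_mul, coeff_C_mul, mul_coeff_zero, coeff_X_zero, hc2 c 0] at h
    beta_reduce at h
    simp only [if_pos (show (0:ℕ) ≤ n by omega), if_pos (show 0 < n by omega)] at h
    simp only [Nat.cast_zero, zero_mul, zero_add, add_zero, mul_zero] at h
    rw [hbk 1, hbk 0, if_pos (show 1 ≤ n by omega), if_pos (show (0:ℕ) ≤ n by omega)]
    exact h
  have hE : ∀ k : ℕ, C ((n:K) - (k:K)) * (a2 * b k) - derivative (b k)
      = C (((k+2:ℕ)):K) * (C a0 * b (k+2)) - (d0 - C (((k+1:ℕ)):K) * a1) * b (k+1) := by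
    intro k
    have h := hEraw k
    rw [map_sub]
    rw [show (C ((n:K)) : K[X]) = ((n:ℕ):K[X]) from map_natCast (C : K →+* K[X]) n,
        show (C ((k:K)) : K[X]) = ((k:ℕ):K[X]) from map_natCast (C : K →+* K[X]) k,
        show (C (((k+1:ℕ):K)) : K[X]) = ((k+1:ℕ):K[X]) from map_natCast (C : K →+* K[X]) (k+1),
        show (C (((k+2:ℕ):K)) : K[X]) = ((k+2:ℕ):K[X]) from map_natCast (C : K →+* K[X]) (k+2)]
    linear_combination -h
  have hbn' : b n ≠ 0 := by rw [hbk n, if_pos le_rfl]; exact hcn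
  have hhigh' : ∀ k, n < k → b k = 0 := fun k hk => by rw [hbk k, if_neg (by omega)]
  obtain ⟨hex, hb1ne, hb0ne⟩ := core a1 a2 d0 ha1 ha2 a0 ha0 n hn b hbn' hhigh' hE0 hE
  refine ⟨hex, ?_⟩
  rw [hbk 1, if_pos (show 1 ≤ n by omega)] at hb1ne
  rw [hbk 0, if_pos (show (0:ℕ) ≤ n by omega)] at hb0ne
  exact mul_ne_zero hb1ne hb0ne
end

section
/- Let K be a field of characteristic zero, let a0(x), a1(x), a2(x) ∈ K[x], and suppose there exists l ∈ K* such that a2(x) = l·a1(x) − l²·a0(x). Then for the K-derivation D = y∂x + (a2(x)y² + a1(x)y + a0(x))∂y of K[x,y], one has D(y + l⁻¹) = l·(a1(x)y − l·a0(x)y + a0(x))·(y + l⁻¹); in particular the principal ideal (y + l⁻¹) of K[x,y] is D-stable, and D is not simple. -/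
/-- A `K`-derivation `D` of `R` is *simple* if `R` has no `D`-stable ideal
other than `0` and `R`. -/
def Derivation.IsSimple {K R : Type*} [CommRing K] [CommRing R] [Algebra K R]
    (D : Derivation K R R) : Prop :=
  ∀ I : Ideal R, (∀ a ∈ I, D a ∈ I) → I = ⊥ ∨ I = ⊤

/-!
Writing `y` for the second variable, the hypothesis on `a2` makes the quadratic
`a2 y² + a1 y + a0` vanish at `y = -l⁻¹`, so it is divisible by `y + l⁻¹`. Hence `D`
maps `y + l⁻¹` into its own principal ideal, and by the Leibniz rule that ideal is
`D`-stable. It is neither `0` nor the whole ring, so `D` is not simple.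
-/

namespace Derivation

variable {K R : Type*} [CommRing K] [CommRing R] [Algebra K R] (D : Derivation K R R)

theorem map_mem_span_singleton_of_dvd {p : R} (hp : p ∣ D p) :
    ∀ a ∈ Ideal.span {p}, D a ∈ Ideal.span {p} := by
  intro a ha
  obtain ⟨q, rfl⟩ := Ideal.mem_span_singleton.mp ha
  rw [Ideal.mem_span_singleton, leibniz, smul_eq_mul, smul_eq_mul]
  exact dvd_add (dvd_mul_right p (D q)) (hp.mul_left q)

theorem not_isSimple_of_dvd {p : R} (hp0 : p ≠ 0) (hpu : ¬IsUnit p) (hp : p ∣ D p) :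
    ¬D.IsSimple := fun hD =>
  (hD _ (D.map_mem_span_singleton_of_dvd hp)).elim
    (fun h => hp0 (Ideal.span_singleton_eq_bot.mp h))
    (fun h => hpu (Ideal.span_singleton_eq_top.mp h))

end Derivation

namespace MvPolynomial

variable {σ R : Type*} [CommRing R] [Nontrivial R] [DecidableEq σ]

theorem X_add_C_ne_zero (i : σ) (c : R) : (X i + C c : MvPolynomial σ R) ≠ 0 := fun h => by
  simpa using congrArg (eval (Function.update 0 i (1 - c))) h

theorem not_isUnit_X_add_C (i : σ) (c : R) : ¬IsUnit (X i + C c : MvPolynomial σ R) := fun h => by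
  simpa using h.map (eval (Function.update 0 i (-c)))

end MvPolynomial

theorem quadratic_eq_mul_linear_of_mul_eq_one {A : Type*} [CommRing A] {u v : A} (huv : u * v = 1)
    (a b y : A) :
    (u * b - u ^ 2 * a) * y ^ 2 + b * y + a = u * (b * y - u * a * y + a) * (y + v) := by
  linear_combination (-(b * y) + u * a * y - a) * huv

theorem stmt_10_general (K : Type*) [Field K] (a0 a1 a2 : Polynomial K)
    (l : K) (hl : l ≠ 0)
    (ha2 : a2 = Polynomial.C l * a1 - Polynomial.C (l ^ 2) * a0)
    (D : Derivation K (MvPolynomial (Fin 2) K) (MvPolynomial (Fin 2) K))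
    (hDy : D (MvPolynomial.X 1) =
      Polynomial.aeval (MvPolynomial.X 0) a2 * MvPolynomial.X 1 ^ 2 +
        Polynomial.aeval (MvPolynomial.X 0) a1 * MvPolynomial.X 1 +
        Polynomial.aeval (MvPolynomial.X 0) a0) :
    D (MvPolynomial.X 1 + MvPolynomial.C l⁻¹) =
      MvPolynomial.C l *
        (Polynomial.aeval (MvPolynomial.X 0) a1 * MvPolynomial.X 1 -
          MvPolynomial.C l * Polynomial.aeval (MvPolynomial.X 0) a0 * MvPolynomial.X 1 +
          Polynomial.aeval (MvPolynomial.X 0) a0) *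
        (MvPolynomial.X 1 + MvPolynomial.C l⁻¹) ∧
    (∀ a ∈ Ideal.span {MvPolynomial.X 1 + MvPolynomial.C l⁻¹},
      D a ∈ Ideal.span {MvPolynomial.X 1 + MvPolynomial.C l⁻¹}) ∧
    ¬ D.IsSimple := by
  open MvPolynomial in
  have hD : D (X 1 + C l⁻¹) = C l *
      (Polynomial.aeval (X 0) a1 * X 1 - C l * Polynomial.aeval (X 0) a0 * X 1 +
        Polynomial.aeval (X 0) a0) * (X 1 + C l⁻¹) := by
    rw [map_add, ← algebraMap_eq, D.map_algebraMap, add_zero, hDy, ha2]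
    simp only [map_sub, map_mul, Polynomial.aeval_C, algebraMap_eq, map_pow]
    exact quadratic_eq_mul_linear_of_mul_eq_one (by rw [← C_mul, mul_inv_cancel₀ hl, C_1]) _ _ _
  have hdvd : X 1 + C l⁻¹ ∣ D (X 1 + C l⁻¹) := hD ▸ dvd_mul_left _ _
  exact ⟨hD, D.map_mem_span_singleton_of_dvd hdvd,
    D.not_isSimple_of_dvd (X_add_C_ne_zero 1 l⁻¹) (not_isUnit_X_add_C 1 l⁻¹) hdvd⟩

theorem stmt_10 (K : Type*) [Field K] [CharZero K] (a0 a1 a2 : Polynomial K)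
    (l : K) (hl : l ≠ 0)
    (ha2 : a2 = Polynomial.C l * a1 - Polynomial.C (l ^ 2) * a0)
    (D : Derivation K (MvPolynomial (Fin 2) K) (MvPolynomial (Fin 2) K))
    (hDx : D (MvPolynomial.X 0) = MvPolynomial.X 1)
    (hDy : D (MvPolynomial.X 1) =
      Polynomial.aeval (MvPolynomial.X 0) a2 * MvPolynomial.X 1 ^ 2 +
        Polynomial.aeval (MvPolynomial.X 0) a1 * MvPolynomial.X 1 +
        Polynomial.aeval (MvPolynomial.X 0) a0) :
    D (MvPolynomial.X 1 + MvPolynomial.C l⁻¹) =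
      MvPolynomial.C l *
        (Polynomial.aeval (MvPolynomial.X 0) a1 * MvPolynomial.X 1 -
          MvPolynomial.C l * Polynomial.aeval (MvPolynomial.X 0) a0 * MvPolynomial.X 1 +
          Polynomial.aeval (MvPolynomial.X 0) a0) *
        (MvPolynomial.X 1 + MvPolynomial.C l⁻¹) ∧
    (∀ a ∈ Ideal.span {MvPolynomial.X 1 + MvPolynomial.C l⁻¹},
      D a ∈ Ideal.span {MvPolynomial.X 1 + MvPolynomial.C l⁻¹}) ∧
    ¬ D.IsSimple :=
  stmt_10_general K a0 a1 a2 l hl ha2 D hDy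
end

section
/- Let K be a field of characteristic zero, n ≥ 1, and for each 1 ≤ i ≤ n let k_i ≥ 1 be an integer and γ_i(x) ∈ K[x] \ {0}. Let D = ∂x + Σ_{i=1}^n γ_i(x)·y_i^{k_i}·∂_{y_i} be the K-derivation of K[x,y_1,…,y_n]. Then the image D(K[x,y_1,…,y_n]) is a Mathieu-Zhao space of K[x,y_1,…,y_n] if and only if k_i = 1 and γ_i(x) is constant (γ_i(x) ∈ K) for all 1 ≤ i ≤ n. -/
noncomputable section MZaux
open Polynomial

/-- The model derivation `∂x + γ(x) y^k ∂y` on `K[x][y]`, with outer variable `y`. -/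
def MZPhi (K : Type*) [Field K] [CharZero K] (γ : Polynomial K) (kk : ℕ) :
    Derivation K (Polynomial (Polynomial K)) (Polynomial (Polynomial K)) :=
  PolynomialModule.equivPolynomialSelf.compDer
      (Polynomial.derivative' (R := K)).mapCoeffs
  + (Polynomial.mkDerivation (Polynomial K)
      (Polynomial.C γ * Polynomial.X ^ kk : Polynomial (Polynomial K))).restrictScalars K

variable {K : Type*} [Field K] [CharZero K]

omit [CharZero K] in
lemma MZaeval_CX (p : Polynomial K) :
    Polynomial.aeval (Polynomial.C Polynomial.X : Polynomial (Polynomial K)) p = C p := by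
  have := Polynomial.aeval_algHom_apply (Polynomial.CAlgHom (R := K) (A := Polynomial K))
    Polynomial.X p
  simpa [Polynomial.CAlgHom] using this

@[simp] lemma MZPhi_X (γ : Polynomial K) (kk : ℕ) :
    MZPhi K γ kk Polynomial.X = C γ * Polynomial.X ^ kk := by
  simp [MZPhi, Polynomial.mkDerivation_apply]

@[simp] lemma MZPhi_C (γ : Polynomial K) (kk : ℕ) (p : Polynomial K) :
    MZPhi K γ kk (C p) = C (derivative p) := by
  simp [MZPhi, Polynomial.mkDerivation_apply]

lemma MZPhi_coeff (γ : Polynomial K) (kk : ℕ) (g : Polynomial (Polynomial K)) (e : ℕ) :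
    (MZPhi K γ kk g).coeff e = derivative (g.coeff e)
      + if kk ≤ e then γ * ((derivative g).coeff (e - kk)) else 0 := by
  have h1 : ((PolynomialModule.equivPolynomialSelf.compDer
      (Polynomial.derivative' (R := K)).mapCoeffs) g).coeff e = derivative (g.coeff e) := rfl
  have h2 : (((Polynomial.mkDerivation (Polynomial K)
      (Polynomial.C γ * Polynomial.X ^ kk : Polynomial (Polynomial K))).restrictScalars K)
        g).coeff e
      = if kk ≤ e then γ * ((derivative g).coeff (e - kk)) else 0 := by
    show (derivative g • (C γ * X ^ kk) : Polynomial (Polynomial K)).coeff e = _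
    rw [smul_eq_mul, ← mul_assoc, coeff_mul_X_pow', mul_comm (derivative g), coeff_C_mul]
  rw [MZPhi, Derivation.add_apply, coeff_add, h1, h2]

lemma MZkey (γ : Polynomial K) (hγ : γ ≠ 0) (kk : ℕ) (hkk : 1 ≤ kk)
    (g : Polynomial (Polynomial K)) (hg : MZPhi K γ kk g = Polynomial.X) :
    kk = 1 ∧ ∃ c : K, γ = C c := by
  have hc : ∀ e : ℕ, derivative (g.coeff e)
      + (if kk ≤ e then γ * ((derivative g).coeff (e - kk)) else 0)
      = if e = 1 then 1 else 0 := by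
    intro e
    rw [← MZPhi_coeff, hg, Polynomial.coeff_X]
    simp [eq_comm]
  have hkk1 : kk = 1 := by
    by_contra hne
    obtain ⟨m, rfl⟩ : ∃ m, kk = m + 2 := ⟨kk - 2, by omega⟩
    have claim : ∀ j : ℕ, derivative (g.coeff (1 + j * (m + 1))) ≠ 0 := by
      intro j
      induction j with
      | zero =>
          have h1 := hc 1
          rw [if_neg (by omega), if_pos rfl, add_zero] at h1
          rw [show 1 + 0 * (m + 1) = 1 by omega, h1]
          exact one_ne_zero
      | succ j ih =>
          have h1 := hc ((1 + j * (m + 1)) + (m + 1))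
          rw [if_pos (by omega), if_neg (by omega)] at h1
          rw [show (1 + j * (m + 1)) + (m + 1) - (m + 2) = j * (m + 1) from by omega,
            Polynomial.coeff_derivative] at h1
          have hcoeff : g.coeff (j * (m + 1) + 1) ≠ 0 := fun h0 => ih (by
            rw [show 1 + j * (m + 1) = j * (m + 1) + 1 from by ring, h0, map_zero])
          have hcast : ((j * (m + 1) : ℕ) : Polynomial K) + 1 ≠ 0 := by
            have h2 : ((j * (m + 1) : ℕ) : Polynomial K) + 1
                = ((j * (m + 1) + 1 : ℕ) : Polynomial K) := by push_cast; ring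
            rw [h2]
            exact Nat.cast_ne_zero.mpr (Nat.succ_ne_zero _)
          have hrhs : γ * (g.coeff (j * (m + 1) + 1)
              * (((j * (m + 1) : ℕ) : Polynomial K) + 1)) ≠ 0 :=
            mul_ne_zero hγ (mul_ne_zero hcoeff hcast)
          rw [show 1 + (j + 1) * (m + 1) = (1 + j * (m + 1)) + (m + 1) from by ring]
          intro h0
          rw [h0, zero_add] at h1
          exact hrhs h1
    refine claim g.natDegree ?_
    have hlt : g.natDegree < 1 + g.natDegree * (m + 1) := by
      have := Nat.le_mul_of_pos_right g.natDegree (show 0 < m + 1 by omega)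
      omega
    rw [Polynomial.coeff_eq_zero_of_natDegree_lt hlt, map_zero]
  subst hkk1
  refine ⟨rfl, ?_⟩
  by_contra hnc
  have hγdeg : 1 ≤ γ.natDegree := by
    rcases Nat.eq_zero_or_pos γ.natDegree with h | h
    · obtain ⟨c, hcc⟩ := Polynomial.natDegree_eq_zero.mp h
      exact absurd ⟨c, hcc.symm⟩ hnc
    · exact h
  have h1 := hc 1
  rw [if_pos le_rfl] at h1
  simp only [Nat.sub_self, Polynomial.coeff_derivative, Nat.cast_zero, zero_add, mul_one,
    if_pos rfl, if_true] at h1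
  set p := g.coeff 1 with hp
  have hpne : p ≠ 0 := by
    intro h0
    rw [h0, map_zero, mul_zero, add_zero] at h1
    exact one_ne_zero (α := Polynomial K) h1.symm
  have heq : derivative p = 1 - γ * p := by rw [← h1]; ring
  have hmul : (γ * p).natDegree = γ.natDegree + p.natDegree := Polynomial.natDegree_mul hγ hpne
  have hsub : (1 - γ * p).natDegree = (γ * p).natDegree := by
    apply Polynomial.natDegree_sub_eq_right_of_natDegree_lt
    rw [hmul, Polynomial.natDegree_one]
    omega
  have hle : (derivative p).natDegree ≤ p.natDegree - 1 := Polynomial.natDegree_derivative_le p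
  rw [heq, hsub, hmul] at hle
  omega

/-- Projection sending `x ↦ C X`, `y_{i0} ↦ X` and other `y_j ↦ 0`. -/
def MZpiMap (K : Type*) [Field K] (n : ℕ) (i0 : Fin n) :
    MvPolynomial (Fin (n+1)) K →ₐ[K] Polynomial (Polynomial K) :=
  MvPolynomial.aeval (fun v : Fin (n+1) =>
    if v = 0 then Polynomial.C Polynomial.X else if v = i0.succ then Polynomial.X else 0)

lemma MZtransfer {n : ℕ} (k : Fin n → ℕ) (hk : ∀ i, 1 ≤ k i) (γ : Fin n → Polynomial K)
    (D : Derivation K (MvPolynomial (Fin (n + 1)) K) (MvPolynomial (Fin (n + 1)) K))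
    (hDx : D (MvPolynomial.X 0) = 1)
    (hDy : ∀ i : Fin n, D (MvPolynomial.X i.succ) =
      Polynomial.aeval (MvPolynomial.X 0) (γ i) * MvPolynomial.X i.succ ^ k i)
    (i0 : Fin n) (f : MvPolynomial (Fin (n+1)) K) :
    MZpiMap K n i0 (D f) = MZPhi K (γ i0) (k i0) (MZpiMap K n i0 f) := by
  have hX : ∀ v : Fin (n+1), MZpiMap K n i0 (D (MvPolynomial.X v))
      = MZPhi K (γ i0) (k i0) (MZpiMap K n i0 (MvPolynomial.X v)) := by
    intro v
    rcases Fin.eq_zero_or_eq_succ v with hv | ⟨j, hv⟩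
    · subst hv
      rw [hDx]
      simp [MZpiMap]
    · subst hv
      rw [hDy j]
      rcases eq_or_ne j i0 with hj | hj
      · subst hj
        have h2 : MZpiMap K n j (Polynomial.aeval (MvPolynomial.X 0) (γ j)) = C (γ j) := by
          rw [MZpiMap, ← Polynomial.aeval_algHom_apply, MvPolynomial.aeval_X, if_pos rfl,
            MZaeval_CX]
        rw [map_mul, map_pow, h2]
        rw [show MZpiMap K n j (MvPolynomial.X j.succ) = Polynomial.X by
          rw [MZpiMap, MvPolynomial.aeval_X, if_neg (Fin.succ_ne_zero j), if_pos rfl]]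
        rw [MZPhi_X]
      · have h3 : MZpiMap K n i0 (MvPolynomial.X j.succ) = 0 := by
          rw [MZpiMap, MvPolynomial.aeval_X, if_neg (Fin.succ_ne_zero j),
            if_neg (fun h => hj (Fin.succ_injective _ h))]
        rw [map_mul, map_pow, h3, zero_pow (by have := hk j; omega), mul_zero, map_zero]
  induction f using MvPolynomial.induction_on with
  | C a =>
      rw [show D (MvPolynomial.C a) = 0 from MvPolynomial.derivation_C D a, map_zero]
      rw [show (MvPolynomial.C a : MvPolynomial (Fin (n+1)) K) = algebraMap K _ a from rfl,
        AlgHom.commutes, Derivation.map_algebraMap]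
  | add p q hp hq => simp only [map_add, hp, hq]
  | mul_X p v hp =>
      rw [Derivation.leibniz, smul_eq_mul, smul_eq_mul, map_add, map_mul, map_mul, map_mul,
        Derivation.leibniz, smul_eq_mul, smul_eq_mul, hp, hX]

lemma MZode_solve (lam : K) (q : Polynomial K) :
    ∃ p : Polynomial K, derivative p + lam • p = q := by
  rcases eq_or_ne lam 0 with rfl | hlam
  · simp only [zero_smul, add_zero]
    induction q using Polynomial.induction_on' with
    | add p q hp hq =>
        obtain ⟨a, ha⟩ := hp; obtain ⟨b, hb⟩ := hq
        exact ⟨a + b, by rw [derivative_add, ha, hb]⟩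
    | monomial e a =>
        refine ⟨monomial (e + 1) (a / (e + 1)), ?_⟩
        rw [derivative_monomial]
        simp only [Nat.add_sub_cancel]
        congr 1
        have h : ((e : K) + 1) ≠ 0 := Nat.cast_add_one_ne_zero e
        push_cast
        field_simp
  · suffices h : ∀ N : ℕ, ∀ q : Polynomial K, q.natDegree ≤ N →
        ∃ p : Polynomial K, derivative p + lam • p = q by
      exact h q.natDegree q le_rfl
    intro N
    induction N with
    | zero =>
        intro q hq
        refine ⟨C (lam⁻¹ * q.coeff 0), ?_⟩
        rw [derivative_C, zero_add, Polynomial.smul_C, smul_eq_mul, ← mul_assoc,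
          mul_inv_cancel₀ hlam, one_mul, ← Polynomial.eq_C_of_natDegree_le_zero hq]
    | succ N ih =>
        intro q hq
        obtain ⟨p₁, hp₁⟩ := ih (lam⁻¹ • derivative q)
          ((Polynomial.natDegree_smul_le _ _).trans
            (by have := Polynomial.natDegree_derivative_le q; omega))
        refine ⟨lam⁻¹ • q - p₁, ?_⟩
        rw [derivative_sub, derivative_smul, smul_sub, sub_add_sub_comm, hp₁]
        rw [smul_smul, mul_inv_cancel₀ hlam, one_smul]
        abel

lemma MZDsurj {n : ℕ} (c : Fin n → K)
    (D : Derivation K (MvPolynomial (Fin (n + 1)) K) (MvPolynomial (Fin (n + 1)) K))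
    (hDx : D (MvPolynomial.X 0) = 1)
    (hDy : ∀ i : Fin n, D (MvPolynomial.X i.succ) =
      MvPolynomial.C (c i) * MvPolynomial.X i.succ)
    (b : MvPolynomial (Fin (n+1)) K) : ∃ f, D f = b := by
  have hpow : ∀ (i : Fin n) (m : ℕ),
      D (MvPolynomial.X i.succ ^ m) = ((m : K) * c i) • (MvPolynomial.X i.succ ^ m) := by
    intro i m
    cases m with
    | zero => simp
    | succ m =>
        rw [Derivation.leibniz_pow, hDy i, Nat.add_sub_cancel, smul_eq_mul,
          MvPolynomial.smul_eq_C_mul, nsmul_eq_mul, map_mul]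
        simp only [map_add, map_one, map_natCast]
        push_cast
        ring
  have hprod : ∀ (d : Fin (n+1) →₀ ℕ) (s : Finset (Fin n)),
      D (∏ i ∈ s, MvPolynomial.X i.succ ^ d i.succ)
        = (∑ i ∈ s, (d i.succ : K) * c i) • ∏ i ∈ s, MvPolynomial.X i.succ ^ d i.succ := by
    intro d s
    induction s using Finset.induction_on with
    | empty => simp
    | insert a s hx ih =>
        rw [Finset.prod_insert hx, Finset.sum_insert hx, Derivation.leibniz, hpow, ih,
          smul_eq_mul, smul_eq_mul, add_smul]
        simp only [MvPolynomial.smul_eq_C_mul]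
        ring
  have hmono : ∀ d : Fin (n+1) →₀ ℕ, ∃ f, D f = MvPolynomial.monomial d 1 := by
    intro d
    obtain ⟨p, hp⟩ := MZode_solve (∑ i : Fin n, (d i.succ : K) * c i) (Polynomial.X ^ (d 0))
    rw [Polynomial.smul_eq_C_mul] at hp
    set Y : MvPolynomial (Fin (n+1)) K := ∏ i : Fin n, MvPolynomial.X i.succ ^ d i.succ with hY
    refine ⟨Polynomial.aeval (MvPolynomial.X 0) p * Y, ?_⟩
    have happ := congrArg (Polynomial.aeval (MvPolynomial.X 0 : MvPolynomial (Fin (n+1)) K)) hp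
    simp only [map_add, map_mul, map_pow, Polynomial.aeval_C, Polynomial.aeval_X] at happ
    have hsplit : (MvPolynomial.monomial d (1:K)) = MvPolynomial.X 0 ^ d 0 * Y := by
      rw [hY, ← MvPolynomial.prod_X_pow_eq_monomial,
        ← Fin.prod_univ_succ (fun v => MvPolynomial.X v ^ d v)]
      exact Finset.prod_subset (Finset.subset_univ _)
        (fun x _ hx => by rw [Finsupp.notMem_support_iff.mp hx, pow_zero])
    rw [Derivation.leibniz, hprod, Derivation.comp_aeval_eq, hDx, hsplit, ← happ]
    simp only [smul_eq_mul, MvPolynomial.smul_eq_C_mul, mul_one, MvPolynomial.algebraMap_eq]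
    ring
  suffices h : b ∈ LinearMap.range D.toLinearMap by
    obtain ⟨f, hf⟩ := h; exact ⟨f, hf⟩
  rw [← MvPolynomial.support_sum_monomial_coeff b]
  apply Submodule.sum_mem
  intro v hv
  rw [show MvPolynomial.monomial v (MvPolynomial.coeff v b)
      = (MvPolynomial.coeff v b) • MvPolynomial.monomial v 1 from by
    rw [MvPolynomial.smul_monomial, smul_eq_mul, mul_one]]
  obtain ⟨f, hf⟩ := hmono v
  exact Submodule.smul_mem _ _ ⟨f, hf⟩

end MZaux

theorem stmt_13 (K : Type*) [Field K] [CharZero K]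
    (n : ℕ) (hn : 1 ≤ n)
    (k : Fin n → ℕ) (hk : ∀ i, 1 ≤ k i)
    (γ : Fin n → Polynomial K) (hγ : ∀ i, γ i ≠ 0)
    (D : Derivation K (MvPolynomial (Fin (n + 1)) K) (MvPolynomial (Fin (n + 1)) K))
    (hDx : D (MvPolynomial.X 0) = 1)
    (hDy : ∀ i : Fin n, D (MvPolynomial.X i.succ) =
      Polynomial.aeval (MvPolynomial.X 0) (γ i) * MvPolynomial.X i.succ ^ k i) :
    (LinearMap.range D.toLinearMap).IsMathieuZhao ↔
      ∀ i : Fin n, k i = 1 ∧ ∃ c : K, γ i = Polynomial.C c := by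
  constructor
  · intro hMZ i
    -- Mathieu-Zhao implies surjective
    have hone : (1 : MvPolynomial (Fin (n+1)) K) ∈ LinearMap.range D.toLinearMap :=
      ⟨MvPolynomial.X 0, hDx⟩
    have hsurj : ∀ b : MvPolynomial (Fin (n+1)) K, ∃ f, D f = b := by
      intro b
      obtain ⟨N, hN⟩ := hMZ 1 ⟨0, fun m _ => by rw [one_pow]; exact hone⟩ b
      have := hN N le_rfl
      rw [one_pow, mul_one] at this
      obtain ⟨f, hf⟩ := this
      exact ⟨f, hf⟩
    obtain ⟨f, hf⟩ := hsurj (MvPolynomial.X i.succ)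
    have htrans := MZtransfer k hk γ D hDx hDy i f
    rw [hf] at htrans
    have hXi : MZpiMap K n i (MvPolynomial.X i.succ) = Polynomial.X := by
      rw [MZpiMap, MvPolynomial.aeval_X, if_neg (Fin.succ_ne_zero i), if_pos rfl]
    rw [hXi] at htrans
    exact MZkey (γ i) (hγ i) (k i) (hk i) _ htrans.symm
  · intro hgood
    have hc : ∀ i : Fin n, ∃ c : K, γ i = Polynomial.C c := fun i => (hgood i).2
    choose c hcc using hc
    have hDy' : ∀ i : Fin n, D (MvPolynomial.X i.succ) =
        MvPolynomial.C (c i) * MvPolynomial.X i.succ := by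
      intro i
      rw [hDy i, (hgood i).1, pow_one, hcc i, Polynomial.aeval_C, MvPolynomial.algebraMap_eq]
    intro a _ b
    refine ⟨0, fun m _ => ?_⟩
    obtain ⟨f, hf⟩ := MZDsurj c D hDx hDy' (b * a ^ m)
    exact ⟨f, hf⟩
end

section
/- Let K be a field of characteristic zero, n ≥ 1, and for each 1 ≤ i ≤ n let k_i ≥ 1 be an integer and γ_i(x) ∈ K[x] \ {0}. Let D = ∂x + Σ_{i=1}^n γ_i(x)·y_i^{k_i}·∂_{y_i} be the K-derivation of K[x,y_1,…,y_n]. If k_{i₀} > 1 for some index i₀ ∈ {1,…,n}, then y_{i₀} does not belong to the image D(K[x,y_1,…,y_n]); that is, there is no f ∈ K[x,y_1,…,y_n] with f_x + Σ_{i=1}^n γ_i(x)y_i^{k_i} f_{y_i} = y_{i₀}. -/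
open Polynomial in
/-- The coefficient-wise derivative on `R[X][Y]` (derivative in the inner variable). -/
noncomputable def innerDeriv (K : Type*) [Field K] (p : Polynomial (Polynomial K)) :
    Polynomial (Polynomial K) :=
  ⟨Finsupp.mapRange (⇑(derivative (R := K))) (map_zero _) p.toFinsupp.coeff |> AddMonoidAlgebra.ofCoeff⟩

open Polynomial in
theorem innerDeriv_coeff (K : Type*) [Field K] (p : Polynomial (Polynomial K)) (j : ℕ) :
    (innerDeriv K p).coeff j = derivative (p.coeff j) := by
  simp [innerDeriv, Polynomial.coeff, Finsupp.mapRange_apply]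

open Polynomial in
theorem innerDeriv_add (K : Type*) [Field K] (p q : Polynomial (Polynomial K)) :
    innerDeriv K (p + q) = innerDeriv K p + innerDeriv K q := by
  ext j
  simp [innerDeriv_coeff, coeff_add]

open Polynomial in
theorem innerDeriv_mul (K : Type*) [Field K] (p q : Polynomial (Polynomial K)) :
    innerDeriv K (p * q) = innerDeriv K p * q + p * innerDeriv K q := by
  ext j
  simp only [innerDeriv_coeff, coeff_add, coeff_mul, map_sum, derivative_mul,
    Finset.sum_add_distrib]

open Polynomial in
theorem innerDeriv_C (K : Type*) [Field K] (q : Polynomial K) :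
    innerDeriv K (C q) = C (derivative q) := by
  ext j
  simp only [innerDeriv_coeff, coeff_C]
  split <;> simp

open Polynomial in
theorem innerDeriv_X (K : Type*) [Field K] :
    innerDeriv K (X : Polynomial (Polynomial K)) = 0 := by
  ext j
  simp only [innerDeriv_coeff, coeff_X, coeff_zero]
  split <;> simp

theorem stmt_16 (K : Type*) [Field K] [CharZero K]
    (n : ℕ) (hn : 1 ≤ n)
    (k : Fin n → ℕ) (hk : ∀ i, 1 ≤ k i)
    (γ : Fin n → Polynomial K) (hγ : ∀ i, γ i ≠ 0)
    (D : Derivation K (MvPolynomial (Fin (n + 1)) K) (MvPolynomial (Fin (n + 1)) K))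
    (hDx : D (MvPolynomial.X 0) = 1)
    (hDy : ∀ i : Fin n, D (MvPolynomial.X i.succ) =
      Polynomial.aeval (MvPolynomial.X 0) (γ i) * MvPolynomial.X i.succ ^ k i)
    (i₀ : Fin n) (hi₀ : 1 < k i₀) :
    ¬ ∃ f : MvPolynomial (Fin (n + 1)) K, D f = MvPolynomial.X i₀.succ := by
  classical
  rintro ⟨f, hf⟩
  set c : Polynomial K := γ i₀ with hc
  set k₀ : ℕ := k i₀ with hk₀
  -- the evaluation map to two variables
  set v : Fin (n + 1) → Polynomial (Polynomial K) :=
    Fin.cases (Polynomial.C Polynomial.X)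
      (fun i => if i = i₀ then Polynomial.X else 0) with hv
  set φ : MvPolynomial (Fin (n + 1)) K →ₐ[K] Polynomial (Polynomial K) := MvPolynomial.aeval v with hφ
  -- target derivation on A
  set E : Polynomial (Polynomial K) → Polynomial (Polynomial K) := fun p =>
    innerDeriv K p + Polynomial.C c * Polynomial.X ^ k₀ * Polynomial.derivative p with hE
  have Eadd : ∀ p q, E (p + q) = E p + E q := by
    intro p q
    simp only [hE, innerDeriv_add, map_add]
    ring
  have Emul : ∀ p q, E (p * q) = E p * q + p * E q := by
    intro p q
    simp only [hE, innerDeriv_mul, Polynomial.derivative_mul]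
    ring
  have haevalC : ∀ q : Polynomial K,
      Polynomial.aeval (Polynomial.C Polynomial.X : Polynomial (Polynomial K)) q = Polynomial.C q := by
    intro q
    rw [show (Polynomial.C Polynomial.X : Polynomial (Polynomial K)) = Polynomial.CAlgHom (R := K) Polynomial.X from rfl,
      Polynomial.aeval_algHom_apply, Polynomial.aeval_X_left_apply]
    rfl
  -- values of E on the images of the variables match φ ∘ D on variables
  have hEv : ∀ w : Fin (n + 1), E (v w) = φ (D (MvPolynomial.X w)) := by
    intro w
    induction w using Fin.cases with
    | zero =>
      have h1 : v 0 = Polynomial.C Polynomial.X := rfl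
      rw [h1, hDx, map_one]
      simp [hE, innerDeriv_C]
    | succ i =>
      rw [hDy i, map_mul, map_pow]
      have hXv : φ (MvPolynomial.X i.succ) = v i.succ := MvPolynomial.aeval_X v i.succ
      have hγv : φ (Polynomial.aeval (MvPolynomial.X 0) (γ i)) =
          Polynomial.aeval (v 0) (γ i) :=
        (Polynomial.aeval_algHom_apply φ (MvPolynomial.X 0) (γ i)).symm.trans
          (by rw [MvPolynomial.aeval_X])
      rw [hXv, hγv]
      by_cases hii : i = i₀
      · subst hii
        have h2 : v i.succ = Polynomial.X := by simp [hv]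
        rw [h2]
        have h3 : v 0 = Polynomial.C Polynomial.X := rfl
        rw [h3, haevalC]
        simp [hE, innerDeriv_X, pow_succ]
        rfl
      · have h2 : v i.succ = 0 := by simp [hv, hii]
        rw [h2, zero_pow (by have := hk i; omega), mul_zero]
        simp [hE, innerDeriv_C]
        have : innerDeriv K 0 = 0 := by
          ext j; simp [innerDeriv_coeff]
        simp [this]
  -- main commutation lemma
  have key : ∀ p, φ (D p) = E (φ p) := by
    intro p
    induction p using MvPolynomial.induction_on with
    | C a =>
      have h1 : (MvPolynomial.C a : MvPolynomial (Fin (n + 1)) K) =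
          algebraMap K _ a := rfl
      rw [h1, Derivation.map_algebraMap, map_zero, AlgHom.commutes]
      have : (algebraMap K (Polynomial (Polynomial K))) a = Polynomial.C (Polynomial.C a) := rfl
      rw [this]
      simp [hE, innerDeriv_C]
    | add p q hp hq =>
      rw [map_add, map_add, map_add, hp, hq, Eadd]
    | mul_X p w ih =>
      rw [Derivation.leibniz, smul_eq_mul, smul_eq_mul, map_add, map_mul, map_mul,
        map_mul, ih, MvPolynomial.aeval_X, Emul]
      rw [hEv w]
      ring
  -- transfer the equation
  have hg : E (φ f) = Polynomial.X := by
    rw [← key, hf]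
    have : φ (MvPolynomial.X i₀.succ) = v i₀.succ := MvPolynomial.aeval_X v i₀.succ
    rw [this]
    simp [hv]
  set g  : Polynomial (Polynomial K) := φ f with hgdef
  set a : ℕ → Polynomial K := fun j => g.coeff j with ha
  have hcne : c ≠ 0 := hγ i₀
  -- coefficientwise equations
  have hco : ∀ j : ℕ, Polynomial.derivative (a j) +
      c * (if k₀ ≤ j then (Polynomial.derivative g).coeff (j - k₀) else 0) =
      (Polynomial.X : Polynomial (Polynomial K)).coeff j := by
    intro j
    have := congrArg (fun p : Polynomial (Polynomial K) => p.coeff j) hg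
    simp only [hE, Polynomial.coeff_add, innerDeriv_coeff] at this
    rw [mul_assoc, Polynomial.coeff_C_mul, mul_comm (Polynomial.X ^ k₀),
      Polynomial.coeff_mul_X_pow'] at this
    exact this
  have h1 : Polynomial.derivative (a 1) = 1 := by
    have := hco 1
    rw [if_neg (by omega)] at this
    simpa using this
  have ha1 : a 1 ≠ 0 := by
    intro h
    rw [h, map_zero] at h1
    exact one_ne_zero h1.symm
  have hstep : ∀ j, k₀ ≤ j → a (j - k₀ + 1) ≠ 0 → a j ≠ 0 := by
    intro j hj haj
    have hco' := hco j
    rw [if_pos hj, Polynomial.coeff_derivative, Polynomial.coeff_X,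
      if_neg (by omega)] at hco'
    have hd : Polynomial.derivative (a j) =
        -(c * (a (j - k₀ + 1) * ((j - k₀ : ℕ) + 1 : Polynomial K))) := by
      linear_combination hco'
    have hne : Polynomial.derivative (a j) ≠ 0 := by
      rw [hd]
      apply neg_ne_zero.mpr
      apply mul_ne_zero hcne
      apply mul_ne_zero haj
      have : ((j - k₀ : ℕ) + 1 : Polynomial K) = ((j - k₀ + 1 : ℕ) : Polynomial K) := by
        push_cast; ring
      rw [this]
      exact Nat.cast_ne_zero.mpr (Nat.succ_ne_zero _)
    intro h
    rw [h, map_zero] at hne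
    exact hne rfl
  have chain : ∀ m : ℕ, a (1 + m * (k₀ - 1)) ≠ 0 := by
    intro m
    induction m with
    | zero => simpa using ha1
    | succ m ih =>
      have hj : k₀ ≤ 1 + (m + 1) * (k₀ - 1) := by
        have : 2 ≤ k₀ := hi₀
        nlinarith [Nat.sub_add_cancel (le_of_lt hi₀)]
      have harith : 1 + (m + 1) * (k₀ - 1) - k₀ + 1 = 1 + m * (k₀ - 1) := by
        have : 2 ≤ k₀ := hi₀
        have h2 : (m + 1) * (k₀ - 1) = m * (k₀ - 1) + (k₀ - 1) := by ring
        omega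
      exact hstep _ hj (by rw [harith]; exact ih)
  -- contradiction via finitely many nonzero coefficients
  have hbig : 1 + g.natDegree * (k₀ - 1) > g.natDegree := by
    have : 2 ≤ k₀ := hi₀
    nlinarith [Nat.sub_add_cancel (le_of_lt hi₀)]
  have : a (1 + g.natDegree * (k₀ - 1)) = 0 :=
    Polynomial.coeff_eq_zero_of_natDegree_lt hbig
  exact chain _ this
end

section
/- Let K be a field of characteristic zero, let α, β be positive integers with α ≤ β, let a0(x), a1(x), a2(x) ∈ K[x], and let D = y^α·∂x + (a2(x)y^{β+1} + a1(x)y^β + a0(x))∂y be the K-derivation of K[x,y]. If D is simple, then: (1) a0(x) is a nonzero constant (a0(x) ∈ K*); (2) deg a2(x) ≥ 1 or deg a1(x) ≥ 1; (3) there is no l ∈ K* such that a2(x) = l·a1(x) + (−1)^β·l^{β+1}·a0(x). -/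
/-- If a derivation sends every generator of an ideal into the ideal, the ideal is stable. -/
lemma stable_span_aux {K R : Type*} [CommRing K] [CommRing R] [Algebra K R]
    (D : Derivation K R R) (s : Set R) (h : ∀ f ∈ s, D f ∈ Ideal.span s) :
    ∀ a ∈ Ideal.span s, D a ∈ Ideal.span s := by
  intro a ha
  induction ha using Submodule.span_induction with
  | mem x hx => exact h x hx
  | zero => simpa using (Ideal.span s).zero_mem
  | add x y hx hy hdx hdy => rw [map_add]; exact Ideal.add_mem _ hdx hdy
  | smul r x hx hdx =>
      rw [smul_eq_mul, D.leibniz, smul_eq_mul, smul_eq_mul]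
      exact Ideal.add_mem _ (Ideal.mul_mem_left _ _ hdx) (Ideal.mul_mem_right _ _ hx)

lemma simple_key {K R : Type*} [CommRing K] [CommRing R] [Algebra K R]
    (D : Derivation K R R) (hs : D.IsSimple) (f : R) (h : D f ∈ Ideal.span {f}) :
    f = 0 ∨ IsUnit f := by
  rcases hs (Ideal.span {f}) (stable_span_aux D {f}
      (by rintro g rfl; exact h)) with h1 | h1
  · exact Or.inl (Ideal.span_singleton_eq_bot.mp h1)
  · exact Or.inr (Ideal.span_singleton_eq_top.mp h1)

theorem stmt_18 (K : Type*) [Field K] [CharZero K]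
    (α β : ℕ) (hα : 1 ≤ α) (hαβ : α ≤ β)
    (a0 a1 a2 : Polynomial K)
    (D : Derivation K (MvPolynomial (Fin 2) K) (MvPolynomial (Fin 2) K))
    (hDx : D (MvPolynomial.X 0) = MvPolynomial.X 1 ^ α)
    (hDy : D (MvPolynomial.X 1) =
      Polynomial.aeval (MvPolynomial.X 0) a2 * MvPolynomial.X 1 ^ (β + 1) +
        Polynomial.aeval (MvPolynomial.X 0) a1 * MvPolynomial.X 1 ^ β +
        Polynomial.aeval (MvPolynomial.X 0) a0)
    (hsimple : D.IsSimple) :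
    a0.degree = 0 ∧ (1 ≤ a2.degree ∨ 1 ≤ a1.degree) ∧
      ¬ ∃ l : K, l ≠ 0 ∧
        a2 = Polynomial.C l * a1 + Polynomial.C ((-1) ^ β * l ^ (β + 1)) * a0 := by
  classical
  have hβ : 1 ≤ β := le_trans hα hαβ
  have hDC : ∀ k : K, D (MvPolynomial.C k) = 0 := fun k => by
    rw [← MvPolynomial.algebraMap_eq]; exact D.map_algebraMap _
  -- two evaluation homomorphisms to K[X]
  set φ : (MvPolynomial (Fin 2) K) →ₐ[K] Polynomial K := MvPolynomial.aeval ![0, Polynomial.X] with hφdef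
  set ψ : (MvPolynomial (Fin 2) K) →ₐ[K] Polynomial K := MvPolynomial.aeval ![Polynomial.X, 0] with hψdef
  have hφ0 : φ (MvPolynomial.X 0) = 0 := by simp [hφdef, MvPolynomial.aeval_X]
  have hφ1 : φ (MvPolynomial.X 1) = Polynomial.X := by simp [hφdef, MvPolynomial.aeval_X]
  have hψ0 : ψ (MvPolynomial.X 0) = Polynomial.X := by simp [hψdef, MvPolynomial.aeval_X]
  have hψ1 : ψ (MvPolynomial.X 1) = 0 := by simp [hψdef, MvPolynomial.aeval_X]
  -- Part 1
  have h0 : a0.degree = 0 := by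
    by_contra hdeg
    set A0 : (MvPolynomial (Fin 2) K) := Polynomial.aeval (MvPolynomial.X 0) a0 with hA0
    set I : Ideal (MvPolynomial (Fin 2) K) := Ideal.span {MvPolynomial.X 1, A0} with hI
    have hyI : MvPolynomial.X (1 : Fin 2) ∈ I :=
      Ideal.subset_span (by simp)
    have hA0I : A0 ∈ I := Ideal.subset_span (by simp)
    have hstab : ∀ a ∈ I, D a ∈ I := by
      apply stable_span_aux
      intro f hf
      rcases hf with rfl | rfl
      · rw [hDy]
        refine Ideal.add_mem _ (Ideal.add_mem _ ?_ ?_) hA0I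
        · exact Ideal.mul_mem_left _ _ (Ideal.pow_mem_of_mem _ hyI _ (by omega))
        · exact Ideal.mul_mem_left _ _ (Ideal.pow_mem_of_mem _ hyI _ (by omega))
      · rw [Derivation.map_aeval, hDx, smul_eq_mul]
        exact Ideal.mul_mem_left _ _ (Ideal.pow_mem_of_mem _ hyI _ (by omega))
    rcases hsimple I hstab with hbot | htop
    · rw [hbot] at hyI
      exact MvPolynomial.X_ne_zero _ ((Submodule.mem_bot _).mp hyI)
    · have h1 : (1 : (MvPolynomial (Fin 2) K)) ∈ I := htop ▸ Submodule.mem_top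
      rw [hI] at h1
      obtain ⟨u, v, huv⟩ := Ideal.mem_span_pair.mp h1
      have hψA0 : ψ A0 = a0 := by
        rw [hA0, ← Polynomial.aeval_algHom_apply, hψ0, Polynomial.aeval_X_left_apply]
      have := congrArg ψ huv
      rw [map_add, map_mul, map_mul, hψ1, hψA0, map_one, mul_zero, zero_add] at this
      have hunit : IsUnit a0 := IsUnit.of_mul_eq_one _ (mul_comm (ψ v) a0 ▸ this)
      exact hdeg (Polynomial.degree_eq_zero_of_isUnit hunit)
  refine ⟨h0, ?_, ?_⟩
  -- constants
  · -- Part 2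
    have ha0C : a0 = Polynomial.C (a0.coeff 0) := Polynomial.eq_C_of_degree_le_zero h0.le
    have hc0 : a0.coeff 0 ≠ 0 := by
      intro h; rw [h, map_zero] at ha0C; rw [ha0C] at h0; simp at h0
    set c0 := a0.coeff 0
    by_contra hcon
    push_neg at hcon
    obtain ⟨h2', h1'⟩ := hcon
    have ha2C : a2 = Polynomial.C (a2.coeff 0) :=
      Polynomial.eq_C_of_degree_le_zero (Nat.WithBot.lt_one_iff_le_zero.mp h2')
    have ha1C : a1 = Polynomial.C (a1.coeff 0) :=
      Polynomial.eq_C_of_degree_le_zero (Nat.WithBot.lt_one_iff_le_zero.mp h1')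
    set c2 := a2.coeff 0
    set c1 := a1.coeff 0
    by_cases hc12 : c2 = 0 ∧ c1 = 0
    · -- D y = C c0; use f = y^(α+1) - (α+1) • (C c0 * x)
      obtain ⟨hc2, hc1⟩ := hc12
      have hDy' : D (MvPolynomial.X 1) = MvPolynomial.C c0 := by
        rw [hDy, ha2C, ha1C, ha0C, hc2, hc1]
        simp [MvPolynomial.algebraMap_eq]
      set f : (MvPolynomial (Fin 2) K) := MvPolynomial.X 1 ^ (α + 1) -
        (α + 1) • (MvPolynomial.C c0 * MvPolynomial.X 0) with hf
      have hDf : D f = 0 := by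
        rw [hf, map_sub, Derivation.leibniz_pow, Derivation.map_smul_of_tower,
          Derivation.leibniz, hDC, hDx, hDy']
        · simp only [Nat.add_sub_cancel, smul_eq_mul, smul_zero, add_zero]
          ring_nf
      have := simple_key D hsimple f (by rw [hDf]; exact Ideal.zero_mem _)
      have hφf : φ f = Polynomial.X ^ (α + 1) := by
        rw [hf]
        simp only [map_sub, map_pow, map_nsmul, map_mul, hφ0, hφ1, mul_zero, smul_zero,
          sub_zero]
      rcases this with h | h
      · rw [h, map_zero] at hφf
        exact pow_ne_zero _ Polynomial.X_ne_zero hφf.symm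
      · have := Polynomial.degree_eq_zero_of_isUnit (h.map φ)
        rw [hφf, Polynomial.degree_X_pow] at this
        exact α.succ_ne_zero (by exact_mod_cast this)
    · -- D y = p(y) with p nonconstant; take irreducible factor
      obtain ⟨γ, rfl⟩ : ∃ γ, β = γ + 1 := ⟨β - 1, by omega⟩
      set p : Polynomial K := Polynomial.C c2 * Polynomial.X ^ ((γ + 1) + 1) +
        Polynomial.C c1 * Polynomial.X ^ (γ + 1) + Polynomial.C c0 with hp
      have hpne : p ≠ 0 := by
        intro h
        have : p.coeff 0 = c0 := by
          simp [hp, Polynomial.coeff_X_pow, Polynomial.coeff_C]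
        rw [h] at this
        exact hc0 (by simpa using this.symm)
      have hpcoeffB : p.coeff (γ + 1) = c1 := by
        simp [hp, Polynomial.coeff_X_pow, Polynomial.coeff_C]
      have hpcoeffB1 : p.coeff ((γ + 1) + 1) = c2 := by
        simp [hp, Polynomial.coeff_X_pow, Polynomial.coeff_C]
      have hpunit : ¬ IsUnit p := by
        intro h
        obtain ⟨r, -, hr⟩ := Polynomial.isUnit_iff.mp h
        apply hc12
        constructor
        · rw [← hpcoeffB1, ← hr, Polynomial.coeff_C, if_neg (by omega)]
        · rw [← hpcoeffB, ← hr, Polynomial.coeff_C, if_neg (by omega)]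
      obtain ⟨q, hqirr, hqdvd⟩ := WfDvdMonoid.exists_irreducible_factor hpunit hpne
      have hDyp : D (MvPolynomial.X 1) = Polynomial.aeval (MvPolynomial.X 1) p := by
        rw [hDy, ha2C, ha1C, ha0C, hp]
        simp [MvPolynomial.algebraMap_eq]
      set g : (MvPolynomial (Fin 2) K) := Polynomial.aeval (MvPolynomial.X 1) q with hg
      have hDg : D g ∈ Ideal.span {g} := by
        rw [hg, Derivation.map_aeval, hDyp, smul_eq_mul]
        refine Ideal.mem_span_singleton.mpr (Dvd.dvd.mul_left ?_ _)
        exact map_dvd (Polynomial.aeval (MvPolynomial.X 1)) hqdvd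
      have hφg : φ g = q := by
        rw [hg, ← Polynomial.aeval_algHom_apply, hφ1, Polynomial.aeval_X_left_apply]
      rcases simple_key D hsimple g hDg with h | h
      · rw [h, map_zero] at hφg
        exact hqirr.ne_zero hφg.symm
      · exact hqirr.not_isUnit (hφg ▸ h.map φ)
  -- Part 3
  · rintro ⟨l, hl, heq⟩
    set f : (MvPolynomial (Fin 2) K) := 1 + MvPolynomial.C l * MvPolynomial.X 1 with hf
    set A0 : (MvPolynomial (Fin 2) K) := Polynomial.aeval (MvPolynomial.X 0) a0 with hA0
    set A1 : (MvPolynomial (Fin 2) K) := Polynomial.aeval (MvPolynomial.X 0) a1 with hA1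
    have hA2 : Polynomial.aeval (MvPolynomial.X 0) a2 =
        MvPolynomial.C l * A1 + MvPolynomial.C ((-1) ^ β * l ^ (β + 1)) * A0 := by
      rw [heq]
      simp [hA0, hA1, MvPolynomial.algebraMap_eq]
    set t : (MvPolynomial (Fin 2) K) := -(MvPolynomial.C l * MvPolynomial.X 1) with ht
    have hft : f = 1 - t := by rw [hf, ht]; ring
    have hDysplit : D (MvPolynomial.X 1) =
        A1 * (MvPolynomial.X 1 ^ β * f) + A0 * (1 - t ^ (β + 1)) := by
      rw [hDy, hA2, hf, ht]
      have hC : (MvPolynomial.C ((-1) ^ β * l ^ (β + 1)) : MvPolynomial (Fin 2) K) =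
          (-1) ^ β * (MvPolynomial.C l) ^ (β + 1) := by
        rw [map_mul, map_pow, map_pow, map_neg, map_one]
      have hn : (-(MvPolynomial.C l * MvPolynomial.X 1)) ^ (β + 1) =
          (-1 : MvPolynomial (Fin 2) K) ^ (β + 1) *
            ((MvPolynomial.C l) ^ (β + 1) * MvPolynomial.X 1 ^ (β + 1)) := by
        rw [← neg_one_mul, mul_pow, mul_pow]
      rw [hC, hn, pow_succ (-1 : MvPolynomial (Fin 2) K) β]
      ring
    have hDf : D f ∈ Ideal.span {f} := by
      have : D f = MvPolynomial.C l * D (MvPolynomial.X 1) := by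
        rw [hf, map_add, Derivation.map_one_eq_zero, zero_add, Derivation.leibniz,
          hDC, smul_zero, add_zero, smul_eq_mul]
      rw [this, hDysplit]
      refine Ideal.mem_span_singleton.mpr (Dvd.dvd.mul_left (dvd_add ?_ ?_) _)
      · exact (dvd_mul_left f _).mul_left _
      · exact Dvd.dvd.mul_left (hft ▸ one_sub_dvd_one_sub_pow t (β + 1)) _
    have hφf : φ f = 1 + Polynomial.C l * Polynomial.X := by
      rw [hf]
      simp only [map_add, map_one, map_mul, hφ1]
      congr 1
      simp [hφdef, MvPolynomial.algebraMap_eq]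
    rcases simple_key D hsimple f hDf with h | h
    · rw [h, map_zero] at hφf
      have : (1 + Polynomial.C l * Polynomial.X : Polynomial K).coeff 0 = 1 := by
        simp
      rw [← hφf] at this
      simpa using this
    · obtain ⟨r, -, hr⟩ := Polynomial.isUnit_iff.mp (hφf ▸ h.map φ)
      have : (Polynomial.C r).coeff 1 =
          (1 + Polynomial.C l * Polynomial.X : Polynomial K).coeff 1 := by rw [hr]
      simp [Polynomial.coeff_C, Polynomial.coeff_one, Polynomial.coeff_X] at this
      exact hl this.symm
end
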